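/- arXiv:2412.11598 — 12 statements merged into one kernel-verified Lean document; each statement's English description precedes it below -/
import Mathlib

section
/- There exists a coloring f of the finite subsets of the natural numbers into the natural numbers such that no infinite set A ⊆ ℕ is free for f. -/
/-! Colour each finite set by its cardinality. An infinite set `A` contains some `n` together with
`n` further elements, and these form a set whose colour `n` lies in `A` but not in the set. -/

theorem Set.Infinite.exists_finset_subset_card_eq_notMem {α : Type*} {A : Set α}
    (hA : A.Infinite) (a : α) (n : ℕ) : ∃ s : Finset α, ↑s ⊆ A ∧ a ∉ s ∧ s.card = n := by
  obtain ⟨s, hs, hcard⟩ := (hA.sdiff (Set.finite_singleton a)).exists_subset_card_eq n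
  exact ⟨s, hs.trans Set.sdiff_subset, fun ha => (hs ha).2 rfl, hcard⟩

/-- There exists a coloring of the finite subsets of ℕ into ℕ
admitting no infinite free set. -/
theorem stmt2 :
    ∃ f : Finset ℕ → ℕ,
      ∀ A : Set ℕ, A.Infinite →
        ¬ (∀ s : Finset ℕ, ↑s ⊆ A → f s ∈ A → f s ∈ s) := by
  refine ⟨Finset.card, fun A hA hfree => ?_⟩
  obtain ⟨n, hn⟩ := hA.nonempty
  obtain ⟨s, hsA, hns, rfl⟩ := hA.exists_finset_subset_card_eq_notMem n n
  exact hns (hfree s hsA hn)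
end

section
/- There exists a 2-bounded coloring f of the finite subsets of the natural numbers into the natural numbers such that for every infinite set H ⊆ ℕ, f is not injective on the finite subsets of H; that is, f admits no infinite rainbow. -/
/-- A coloring of the finite subsets of ℕ is `k`-bounded if every color has
at most `k` preimages. -/
def KBounded (k : ℕ) (f : Finset ℕ → ℕ) : Prop :=
  ∀ c : ℕ, ∃ T : Finset (Finset ℕ), T.card ≤ k ∧ ∀ u : Finset ℕ, f u = c → u ∈ T

/-- The coloring: a set `s` with `|s| = min s + 2` gets the same color as
`s.erase (min s)` (the minimum is recoverable from the cardinality of the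
remainder, so this is a pairing); all other sets get their own color. -/
noncomputable def mycolor (s : Finset ℕ) : ℕ :=
  if s.card = s.min.untopD 0 + 2 then Encodable.encode (s.erase (s.min.untopD 0))
  else Encodable.encode s

lemma min_untop_eq (s : Finset ℕ) (h : s.Nonempty) : s.min.untopD 0 = s.min' h := by
  rw [← Finset.coe_min' h]; rfl

lemma mycolor_bounded : KBounded 2 mycolor := by
  intro c
  set D : Finset ℕ := ((Encodable.decode c : Option (Finset ℕ)).getD ∅) with hD
  refine ⟨{D, insert (D.card - 1) D}, ?_, ?_⟩
  · exact le_trans (Finset.card_insert_le _ _) (by simp)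
  · intro u hu
    unfold mycolor at hu
    split_ifs at hu with hc
    · -- u is a "paired" set: u.erase m = D, u = insert (D.card - 1) D
      have hne : u.Nonempty := by
        rw [← Finset.card_pos, hc]; omega
      set m : ℕ := u.min.untopD 0 with hm
      have hmem : m ∈ u := by
        rw [hm, min_untop_eq u hne]; exact Finset.min'_mem u hne
      have hdec : D = u.erase m := by
        rw [hD, ← hu, Encodable.encodek]; rfl
      have hcard : D.card = m + 1 := by
        rw [hdec, Finset.card_erase_of_mem hmem, hc]; omega
      have : insert (D.card - 1) D = u := by
        rw [hcard]
        simp only [Nat.add_sub_cancel]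
        rw [hdec, Finset.insert_erase hmem]
      rw [← this]
      simp
    · have : D = u := by rw [hD, ← hu, Encodable.encodek]; rfl
      rw [← this]; simp

/-- There exists a 2-bounded coloring of the finite subsets of ℕ
into ℕ admitting no infinite rainbow. -/
theorem stmt3 :
    ∃ f : Finset ℕ → ℕ, KBounded 2 f ∧
      ∀ H : Set ℕ, H.Infinite →
        ¬ (∀ s t : Finset ℕ, ↑s ⊆ H → ↑t ⊆ H → f s = f t → s = t) := by
  refine ⟨mycolor, mycolor_bounded, ?_⟩
  intro H hH hinj
  obtain ⟨a, ha⟩ := hH.nonempty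
  have hH' : (H \ Set.Iic a).Infinite := hH.diff (Set.finite_Iic a)
  obtain ⟨r, hrsub, hrcard⟩ := hH'.exists_subset_card_eq (a + 1)
  have hgt : ∀ x ∈ r, a < x := by
    intro x hx
    have := hrsub hx
    simpa [Set.mem_Iic, not_le] using this.2
  have hanr : a ∉ r := fun h => lt_irrefl a (hgt a h)
  set s : Finset ℕ := insert a r with hs
  have hsne : s.Nonempty := ⟨a, Finset.mem_insert_self a r⟩
  have hsmin : s.min' hsne = a := by
    apply le_antisymm
    · exact Finset.min'_le s a (Finset.mem_insert_self a r)
    · apply Finset.le_min'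
      intro y hy
      rcases Finset.mem_insert.mp hy with h | h
      · exact le_of_eq h.symm
      · exact le_of_lt (hgt y h)
  have hsu : s.min.untopD 0 = a := by rw [min_untop_eq s hsne, hsmin]
  have hscard : s.card = a + 2 := by
    rw [hs, Finset.card_insert_of_notMem hanr, hrcard]
  have hfs : mycolor s = Encodable.encode r := by
    unfold mycolor
    rw [hsu, if_pos (by omega)]
    congr 1
    rw [hs, Finset.erase_insert hanr]
  have hrne : r.Nonempty := by rw [← Finset.card_pos, hrcard]; omega
  have hfr : mycolor r = Encodable.encode r := by
    unfold mycolor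
    rw [if_neg]
    rw [min_untop_eq r hrne, hrcard]
    have : a < r.min' hrne := hgt _ (Finset.min'_mem r hrne)
    omega
  have hsH : ↑s ⊆ H := by
    rw [hs]
    intro x hx
    rcases Finset.mem_insert.mp hx with h | h
    · exact h ▸ ha
    · exact (hrsub h).1
  have hrH : ↑r ⊆ H := fun x hx => (hrsub hx).1
  have : s = r := hinj s r hsH hrH (hfs.trans hfr.symm)
  exact hanr (this ▸ Finset.mem_insert_self a r)
end

section
/- For every coloring f : [ℕ]^{!ω} → ℕ there exists a coloring g : [ℕ]^{!ω} → {0,1} such that for every infinite set H ⊆ ℕ \ {0} on which g is constant on [H]^{!ω}, the set {x − 1 : x ∈ H} is free for f. -/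
/-- A finite set `s ⊆ ℕ` is exactly ω-large if `|s| = 1 + min s`. -/
def ExLarge (s : Finset ℕ) : Prop :=
  s.Nonempty ∧ s.card = 1 + sInf (↑s : Set ℕ)

/-- `H` is free for `f : [ℕ]^{!ω} → ℕ` if for every exactly ω-large `s ⊆ H`,
if `f s ∈ H` then `f s ∈ s`. -/
def FreeL (f : Finset ℕ → ℕ) (H : Set ℕ) : Prop :=
  ∀ s : Finset ℕ, ExLarge s → ↑s ⊆ H → f s ∈ H → f s ∈ s

/-!
Define `g` by recursion on the maximum so that `g t = 1 - g (partner f t)` whenever the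
partner has a smaller maximum. If `s ⊆ H - 1` is exactly ω-large with `f s ∈ H - 1` but
`f s ∉ s`, put `S = s + 1 ⊆ H` and add a large `N ∈ H`: then `T = S ∪ {N}` and its partner,
built from `f s + 1 ∈ H` and the smallest elements of `S`, are exactly ω-large subsets of `H`
on which `g` differs.
-/

open Finset

def lowest (A : Finset ℕ) (k : ℕ) : Finset ℕ := ((A.sort (· ≤ ·)).take k).toFinset

lemma lowest_subset (A : Finset ℕ) (k : ℕ) : lowest A k ⊆ A := fun _ hx =>
  (mem_sort _).1 (List.take_subset _ _ (List.mem_toFinset.1 hx))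

lemma card_lowest (A : Finset ℕ) (k : ℕ) : (lowest A k).card = min k A.card := by
  rw [lowest, List.toFinset_card_of_nodup ((List.take_sublist _ _).nodup (sort_nodup _ _)),
    List.length_take, length_sort]

lemma lowest_eq_self {A : Finset ℕ} {k : ℕ} (h : A.card ≤ k) : lowest A k = A :=
  eq_of_subset_of_card_le (lowest_subset A k) (by rw [card_lowest]; omega)

lemma exLarge_of_isLeast {s : Finset ℕ} {m : ℕ} (h : IsLeast (↑s : Set ℕ) m)
    (hcard : s.card = m + 1) : ExLarge s :=
  ⟨⟨m, h.1⟩, by rw [h.csInf_eq, hcard, add_comm]⟩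

lemma exLarge_insert_of_forall_lt {X : Finset ℕ} {a : ℕ} (h : ∀ x ∈ X, a < x)
    (hcard : X.card = a) : ExLarge (insert a X) := by
  refine exLarge_of_isLeast ⟨mem_insert_self a X, ?_⟩ ?_
  · intro y hy
    rcases mem_insert.1 hy with rfl | hy
    exacts [le_rfl, (h y hy).le]
  · rw [card_insert_of_notMem fun ha => lt_irrefl a (h a ha), hcard]

lemma exLarge_insert_of_isLeast_lt {S : Finset ℕ} {m a : ℕ} (hS : IsLeast (↑S : Set ℕ) m)
    (hcard : S.card = m) (ha : a ∉ S) (hma : m < a) : ExLarge (insert a S) := by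
  refine exLarge_of_isLeast ⟨mem_insert_of_mem hS.1, ?_⟩ ?_
  · intro y hy
    rcases mem_insert.1 hy with rfl | hy
    exacts [hma.le, hS.2 hy]
  · rw [card_insert_of_notMem ha, hcard]

lemma exLarge_insert_lowest {S : Finset ℕ} {m a : ℕ} (hS : IsLeast (↑S : Set ℕ) m)
    (hcard : S.card = m) (ha : a ∉ S) : ExLarge (insert a (lowest S a)) := by
  rcases lt_or_gt_of_ne (show a ≠ m from fun h => ha (h ▸ hS.1)) with hlt | hgt
  · exact exLarge_insert_of_forall_lt
      (fun x hx => hlt.trans_le (hS.2 (lowest_subset S a hx))) (by rw [card_lowest]; omega)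
  · rw [lowest_eq_self (by omega)]
    exact exLarge_insert_of_isLeast_lt hS hcard ha hgt

lemma ExLarge.image_succ {s : Finset ℕ} (hs : ExLarge s) :
    IsLeast (↑(s.image (· + 1)) : Set ℕ) (sInf ↑s + 1) ∧
      (s.image (· + 1)).card = sInf ↑s + 1 := by
  refine ⟨?_, ?_⟩
  · rw [coe_image]
    exact (add_left_mono (a := 1)).map_isLeast (isLeast_csInf (by exact_mod_cast hs.1))
  · rw [card_image_of_injective _ (add_left_injective 1), hs.2, add_comm]

lemma succ_mem_of_mem_image_pred {H : Set ℕ} (hH : 0 ∉ H) {x : ℕ}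
    (hx : x ∈ (fun y => y - 1) '' H) : x + 1 ∈ H := by
  obtain ⟨y, hy, rfl⟩ := hx
  rwa [Nat.sub_add_cancel (Nat.pos_of_ne_zero fun h => hH (h ▸ hy))]

lemma lt_sup_of_mem_erase_sup {t : Finset ℕ} {x : ℕ} (hx : x ∈ t.erase (t.sup id)) :
    x < t.sup id :=
  lt_of_le_of_ne (le_sup (f := id) (mem_of_mem_erase hx)) (ne_of_mem_erase hx)

lemma notMem_of_sup_lt {S : Finset ℕ} {N : ℕ} (hN : S.sup id < N) : N ∉ S :=
  fun h => (le_sup (f := id) h).not_gt hN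

lemma sup_insert_of_sup_lt {S : Finset ℕ} {N : ℕ} (hN : S.sup id < N) :
    (insert N S).sup id = N := by
  rw [sup_insert, id, max_eq_left hN.le]

lemma erase_sup_insert {S : Finset ℕ} {N : ℕ} (hN : S.sup id < N) :
    (insert N S).erase ((insert N S).sup id) = S := by
  rw [sup_insert_of_sup_lt hN, erase_insert (notMem_of_sup_lt hN)]

section Coloring

variable (f : Finset ℕ → ℕ)

def witness (t : Finset ℕ) : ℕ := f ((t.erase (t.sup id)).image (· - 1)) + 1

def partner (t : Finset ℕ) : Finset ℕ :=
  insert (witness f t) (lowest (t.erase (t.sup id)) (witness f t))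

variable {f}

lemma partner_sup_lt {t : Finset ℕ} (h : witness f t < t.sup id) :
    (partner f t).sup id < t.sup id := by
  rw [partner, sup_insert, id, max_lt_iff, Finset.sup_lt_iff (h.trans_le' (Nat.zero_le _))]
  exact ⟨h, fun x hx => lt_sup_of_mem_erase_sup (lowest_subset _ _ hx)⟩

variable (f)

noncomputable def parityColoring (t : Finset ℕ) : Fin 2 :=
  if h : witness f t < t.sup id then 1 - parityColoring (partner f t) else 0
termination_by t.sup id
decreasing_by exact partner_sup_lt h

variable {f}

lemma parityColoring_of_witness_lt {t : Finset ℕ} (h : witness f t < t.sup id) :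
    parityColoring f t = 1 - parityColoring f (partner f t) := by
  rw [parityColoring, dif_pos h]

lemma witness_insert_image_succ {s : Finset ℕ} {N : ℕ} (hN : (s.image (· + 1)).sup id < N) :
    witness f (insert N (s.image (· + 1))) = f s + 1 := by
  rw [witness, erase_sup_insert hN, image_image]
  simp [Function.comp_def]

lemma partner_insert_image_succ {s : Finset ℕ} {N : ℕ} (hN : (s.image (· + 1)).sup id < N) :
    partner f (insert N (s.image (· + 1))) =
      insert (f s + 1) (lowest (s.image (· + 1)) (f s + 1)) := by
  rw [partner, witness_insert_image_succ hN, erase_sup_insert hN]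

end Coloring

/-- For every `f : [ℕ]^{!ω} → ℕ` there is `g : [ℕ]^{!ω} → 2` such
that for every infinite `H ⊆ ℕ \ {0}` on which `g` is constant on `[H]^{!ω}`,
the set `{x - 1 : x ∈ H}` is free for `f`. -/
theorem stmt4 (f : Finset ℕ → ℕ) :
    ∃ g : Finset ℕ → Fin 2,
      ∀ H : Set ℕ, H.Infinite → 0 ∉ H →
        (∃ c : Fin 2, ∀ s : Finset ℕ, ExLarge s → ↑s ⊆ H → g s = c) →
        FreeL f ((fun x => x - 1) '' H) := by
  refine ⟨parityColoring f, ?_⟩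
  rintro H hH hH0 ⟨c, hc⟩ s hs hsH hfs
  by_contra hfs_s
  set S := s.image (· + 1)
  obtain ⟨hS, hScard⟩ := hs.image_succ
  have hSH : ↑S ⊆ H := by
    rw [coe_image]
    exact Set.image_subset_iff.2 fun x hx => succ_mem_of_mem_image_pred hH0 (hsH hx)
  have hfsS : f s + 1 ∉ S := by simpa [S] using hfs_s
  obtain ⟨N, hNH, hN⟩ := hH.exists_gt (max (S.sup id) (f s + 1))
  obtain ⟨hNS, hNw⟩ := max_lt_iff.1 hN
  have hT : ExLarge (insert N S) := exLarge_insert_of_isLeast_lt hS hScard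
    (notMem_of_sup_lt hNS) ((le_sup (f := id) hS.1).trans_lt hNS)
  have hP : ExLarge (partner f (insert N S)) := by
    rw [partner_insert_image_succ hNS]
    exact exLarge_insert_lowest hS hScard hfsS
  have hTH : ↑(insert N S) ⊆ H := by
    rw [coe_insert]; exact Set.insert_subset hNH hSH
  have hPH : ↑(partner f (insert N S)) ⊆ H := by
    rw [partner_insert_image_succ hNS, coe_insert]
    exact Set.insert_subset (succ_mem_of_mem_image_pred hH0 hfs)
      ((coe_subset.2 (lowest_subset _ _)).trans hSH)
  have hflip := parityColoring_of_witness_lt (f := f) (t := insert N S) <| by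
    rwa [witness_insert_image_succ hNS, sup_insert_of_sup_lt hNS]
  rw [hc _ hT hTH, hc _ hP hPH] at hflip
  revert hflip
  fin_cases c <;> decide
end

section
/- (Large Free Set Theorem) For every coloring f : [ℕ]^{!ω} → ℕ there exists an infinite set H ⊆ ℕ that is free for f. -/
namespace FS

lemma exists_chain {α : Type} (Inv : α → Prop) (R : α → α → Prop)
    (h : ∀ a, Inv a → ∃ b, Inv b ∧ R a b) (a0 : α) (h0 : Inv a0) :
    ∃ g : ℕ → α, g 0 = a0 ∧ (∀ n, Inv (g n)) ∧ ∀ n, R (g n) (g (n+1)) := by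
  classical
  let F : {a // Inv a} → {a // Inv a} := fun p =>
    ⟨Classical.choose (h p.1 p.2), (Classical.choose_spec (h p.1 p.2)).1⟩
  refine ⟨fun n => (F^[n] ⟨a0, h0⟩).1, rfl, fun n => (F^[n] ⟨a0, h0⟩).2, fun n => ?_⟩
  have : F^[n+1] ⟨a0, h0⟩ = F (F^[n] ⟨a0, h0⟩) := Function.iterate_succ_apply' F n _
  show R (F^[n] ⟨a0, h0⟩).1 (F^[n+1] ⟨a0, h0⟩).1
  rw [this]
  exact (Classical.choose_spec (h (F^[n] ⟨a0, h0⟩).1 (F^[n] ⟨a0, h0⟩).2)).2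

lemma bool_pigeonhole (b : ℕ → Bool) : ∃ v : Bool, {k | b k = v}.Infinite := by
  by_contra hc
  push_neg at hc
  have : (Set.univ : Set ℕ) ⊆ {k | b k = true} ∪ {k | b k = false} := by
    intro k _; cases hb : b k <;> simp [hb]
  exact Set.infinite_univ (Set.Finite.subset ((hc true).union (hc false)) this)

/-- Infinite Ramsey theorem for `n`-subsets of `ℕ` with 2 colors. -/
lemma ramsey : ∀ (n : ℕ) (c : Finset ℕ → Bool) (X : Set ℕ), X.Infinite →
    ∃ Y, Y ⊆ X ∧ Y.Infinite ∧ ∃ v, ∀ t : Finset ℕ, ↑t ⊆ Y → t.card = n → c t = v := by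
  intro n
  induction n with
  | zero =>
    intro c X hX
    refine ⟨X, subset_rfl, hX, c ∅, fun t _ ht => ?_⟩
    rw [Finset.card_eq_zero] at ht; rw [ht]
  | succ n ih =>
    intro c X hX
    -- chain of sets
    set Inv : Set ℕ → Prop := fun Y => Y.Infinite ∧ Y ⊆ X with hInv
    set R : Set ℕ → Set ℕ → Prop := fun Y Y' => Y' ⊆ Y ∧ (∀ z ∈ Y', sInf Y < z) ∧
      ∃ b, ∀ t : Finset ℕ, ↑t ⊆ Y' → t.card = n → c (insert (sInf Y) t) = b with hR
    have step : ∀ Y, Inv Y → ∃ Y', Inv Y' ∧ R Y Y' := by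
      intro Y ⟨hYI, hYX⟩
      have h0 : (Y ∩ Set.Ioi (sInf Y)).Infinite := by
        have : Y ∩ Set.Ioi (sInf Y) = Y \ Set.Iic (sInf Y) := by
          ext z; simp [Set.mem_Ioi, Set.mem_Iic, not_le, and_comm]
        rw [this]; exact hYI.diff (Set.finite_Iic _)
      obtain ⟨Y', hY'sub, hY'I, b, hb⟩ := ih (fun t => c (insert (sInf Y) t)) _ h0
      exact ⟨Y', ⟨hY'I, (hY'sub.trans Set.inter_subset_left).trans hYX⟩,
        (hY'sub.trans Set.inter_subset_left), fun z hz => (hY'sub hz).2, b, hb⟩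
    obtain ⟨g, hg0, hgInv, hgR⟩ := exists_chain Inv R step X ⟨hX, subset_rfl⟩
    set a : ℕ → ℕ := fun k => sInf (g k) with ha
    have hmemg : ∀ k, a k ∈ g k := fun k => Nat.sInf_mem ((hgInv k).1.nonempty)
    have hdec : ∀ k j, k ≤ j → g j ⊆ g k := by
      intro k j hkj
      induction j with
      | zero => rw [Nat.le_zero.mp hkj]
      | succ j ihj =>
        rcases Nat.eq_or_lt_of_le hkj with h | h
        · rw [h]
        · exact (hgR j).1.trans (ihj (Nat.lt_succ_iff.mp h))
    have hmono : StrictMono a := by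
      apply strictMono_nat_of_lt_succ
      intro k
      exact (hgR k).2.1 _ (hmemg (k+1))
    have hlater : ∀ k j, k < j → a j ∈ g (k+1) := fun k j hkj => hdec (k+1) j hkj (hmemg j)
    -- extract colors
    have hbex : ∀ k, ∃ b, ∀ t : Finset ℕ, ↑t ⊆ g (k+1) → t.card = n → c (insert (a k) t) = b :=
      fun k => (hgR k).2.2
    choose b hbspec using hbex
    obtain ⟨v, hvI⟩ := bool_pigeonhole b
    refine ⟨a '' {k | b k = v}, ?_, ?_, v, ?_⟩
    · rintro x ⟨k, _, rfl⟩
      exact (hgInv k).2 (hmemg k)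
    · exact Set.Infinite.image (hmono.injective.injOn) hvI
    · intro t ht hcard
      have htne : t.Nonempty := Finset.card_pos.mp (by omega)
      set m := t.min' htne with hm
      have hmt : m ∈ t := t.min'_mem htne
      obtain ⟨k, hkv, hak⟩ := ht hmt
      have ht' : ∀ x ∈ t.erase m, x ∈ g (k+1) := by
        intro x hx
        have hxt := Finset.mem_of_mem_erase hx
        obtain ⟨j, hjv, haj⟩ := ht hxt
        have : m < x := lt_of_le_of_ne (t.min'_le x hxt) (Ne.symm (Finset.ne_of_mem_erase hx))
        rw [← hak, ← haj] at this
        exact haj ▸ hlater k j (hmono.lt_iff_lt.mp this)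
      have hcard' : (t.erase m).card = n := by
        rw [Finset.card_erase_of_mem hmt, hcard]; omega
      have := hbspec k (t.erase m) (fun x hx => ht' x hx) hcard'
      rw [hak, Finset.insert_erase hmt] at this
      rw [this, hkv]

def rnk (t : Finset ℕ) (x : ℕ) : ℕ := (t.filter (· < x)).card
def evens (t : Finset ℕ) : Finset ℕ := t.filter (fun x => rnk t x % 2 = 0)
def odds (t : Finset ℕ) : Finset ℕ := t.filter (fun x => rnk t x % 2 = 1)

lemma interleave (s : Finset ℕ) (hs : s.Nonempty) (φ : ℕ → ℕ)
    (H1 : ∀ y ∈ s.erase (sInf (↑s : Set ℕ)), φ y < y)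
    (H2 : ∀ y ∈ s.erase (sInf (↑s : Set ℕ)), ∀ z ∈ s, z < y → z < φ y) :
    evens (s ∪ (s.erase (sInf (↑s : Set ℕ))).image φ) = s ∧
    odds (s ∪ (s.erase (sInf (↑s : Set ℕ))).image φ) = (s.erase (sInf (↑s : Set ℕ))).image φ ∧
    (s ∪ (s.erase (sInf (↑s : Set ℕ))).image φ).card = 2 * s.card - 1 ∧
    sInf (↑(s ∪ (s.erase (sInf (↑s : Set ℕ))).image φ) : Set ℕ) = sInf (↑s : Set ℕ) := by
  classical
  set m := sInf (↑s : Set ℕ) with hm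
  have hms : m ∈ s := Nat.sInf_mem hs.to_set
  have hmle : ∀ z ∈ s, m ≤ z := fun z hz => Nat.sInf_le hz
  set s' := s.erase m with hs'
  set w := s'.image φ with hw
  have hs'sub : ∀ y ∈ s', y ∈ s := fun y hy => Finset.mem_of_mem_erase hy
  have hmlt : ∀ y ∈ s', m < y := fun y hy =>
    lt_of_le_of_ne (hmle y (hs'sub y hy)) (Ne.symm (Finset.ne_of_mem_erase hy))
  have hφnotin : ∀ y ∈ s', φ y ∉ s := by
    intro y hy hmem
    exact absurd (H2 y hy (φ y) hmem (H1 y hy)) (lt_irrefl _)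
  have hinj : Set.InjOn φ ↑s' := by
    intro y hy y' hy' hφ
    by_contra hne
    rcases Ne.lt_or_gt hne with h | h
    · have := H2 y' hy' y (hs'sub y hy) h
      have h2 := H1 y hy
      omega
    · have := H2 y hy y' (hs'sub y' hy') h
      have h2 := H1 y' hy'
      omega
  have hdisj : Disjoint s w := by
    rw [Finset.disjoint_right]
    intro x hx hxs
    obtain ⟨y, hy, rfl⟩ := Finset.mem_image.mp hx
    exact hφnotin y hy hxs
  have hwcard : w.card = s.card - 1 := by
    rw [hw, Finset.card_image_of_injOn hinj, hs', Finset.card_erase_of_mem hms]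
  have hcardt : (s ∪ w).card = 2 * s.card - 1 := by
    rw [Finset.card_union_of_disjoint hdisj, hwcard]
    have : 1 ≤ s.card := Finset.card_pos.mpr hs
    omega
  have hrnk_union : ∀ x, rnk (s ∪ w) x = rnk s x + rnk w x := by
    intro x
    rw [rnk, Finset.filter_union, Finset.card_union_of_disjoint
      (Finset.disjoint_filter_filter hdisj)]
    rfl
  -- counting lemmas
  have hfilter_le : ∀ x ∈ s, (s.filter (· ≤ x)).card = rnk s x + 1 := by
    intro x hx
    have : s.filter (· ≤ x) = insert x (s.filter (· < x)) := by
      ext z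
      simp only [Finset.mem_filter, Finset.mem_insert]
      constructor
      · rintro ⟨hz, hzx⟩
        rcases eq_or_lt_of_le hzx with h | h
        · exact Or.inl h
        · exact Or.inr ⟨hz, h⟩
      · rintro (rfl | ⟨hz, hzx⟩)
        · exact ⟨hx, le_rfl⟩
        · exact ⟨hz, le_of_lt hzx⟩
    rw [this, Finset.card_insert_of_notMem (by simp), rnk]
  have hwrnkA : ∀ x ∈ s, rnk w x = rnk s x := by
    intro x hx
    have himg : w.filter (· < x) = (s'.filter (fun y => φ y < x)).image φ := by
      rw [hw, Finset.filter_image]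
    have hset : s'.filter (fun y => φ y < x) = s'.filter (· ≤ x) := by
      apply Finset.filter_congr
      intro y hy
      constructor
      · intro hφx
        by_contra hxy
        push_neg at hxy
        have := H2 y hy x hx hxy
        omega
      · intro hyx
        have := H1 y hy
        omega
    have hrest : (s'.filter (· ≤ x)) = (s.filter (· ≤ x)).erase m := by
      rw [hs', Finset.filter_erase]
    have hcard2 : (s'.filter (· ≤ x)).card = rnk s x := by
      rw [hrest, Finset.card_erase_of_mem (Finset.mem_filter.mpr ⟨hms, by simpa using hmle x hx⟩),
        hfilter_le x hx]
      omega
    rw [rnk, himg, Finset.card_image_of_injOn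
      (hinj.mono (Finset.coe_subset.mpr (Finset.filter_subset _ _))), hset, hcard2]
  have hrnkB1 : ∀ y ∈ s', rnk s (φ y) = rnk s y := by
    intro y hy
    rw [rnk, rnk]
    congr 1
    apply Finset.filter_congr
    intro z hz
    constructor
    · intro h; exact lt_trans h (H1 y hy)
    · intro h; exact H2 y hy z hz h
  have hrnks_pos : ∀ y ∈ s', 1 ≤ rnk s y := by
    intro y hy
    rw [rnk]
    have : m ∈ s.filter (· < y) := Finset.mem_filter.mpr ⟨hms, by simpa using hmlt y hy⟩
    exact Finset.card_pos.mpr ⟨m, this⟩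
  have hrnkB2 : ∀ y ∈ s', rnk w (φ y) = rnk s y - 1 := by
    intro y hy
    have himg : w.filter (· < φ y) = (s'.filter (fun y' => φ y' < φ y)).image φ := by
      rw [hw, Finset.filter_image]
    have hset : s'.filter (fun y' => φ y' < φ y) = s'.filter (· < y) := by
      apply Finset.filter_congr
      intro y' hy'
      constructor
      · intro h
        by_contra hge
        push_neg at hge
        rcases eq_or_lt_of_le hge with rfl | hlt
        · omega
        · have := H2 y' hy' y (hs'sub y hy) hlt
          have h1 := H1 y hy
          omega
      · intro h
        have h1 := H1 y' hy'
        have h2 := H2 y hy y' (hs'sub y' hy') h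
        omega
    have hrest : s'.filter (· < y) = (s.filter (· < y)).erase m := by
      rw [hs', Finset.filter_erase]
    rw [rnk, himg, Finset.card_image_of_injOn
      (hinj.mono (Finset.coe_subset.mpr (Finset.filter_subset _ _))), hset, hrest,
      Finset.card_erase_of_mem (Finset.mem_filter.mpr ⟨hms, by simpa using hmlt y hy⟩)]
    rfl
  have hrnkw : ∀ y ∈ s', rnk (s ∪ w) (φ y) % 2 = 1 := by
    intro y hy
    rw [hrnk_union, hrnkB1 y hy, hrnkB2 y hy]
    have := hrnks_pos y hy
    omega
  have hrnks : ∀ x ∈ s, rnk (s ∪ w) x % 2 = 0 := by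
    intro x hx
    rw [hrnk_union, hwrnkA x hx]
    omega
  refine ⟨?_, ?_, hcardt, ?_⟩
  · ext x
    simp only [evens, Finset.mem_filter, Finset.mem_union]
    constructor
    · rintro ⟨hx | hx, hrk⟩
      · exact hx
      · obtain ⟨y, hy, rfl⟩ := Finset.mem_image.mp hx
        rw [hrnkw y hy] at hrk
        omega
    · intro hx
      exact ⟨Or.inl hx, hrnks x hx⟩
  · ext x
    simp only [odds, Finset.mem_filter, Finset.mem_union]
    constructor
    · rintro ⟨hx | hx, hrk⟩
      · rw [hrnks x hx] at hrk; omega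
      · exact hx
    · intro hx
      obtain ⟨y, hy, rfl⟩ := Finset.mem_image.mp hx
      exact ⟨Or.inr hx, hrnkw y hy⟩
  · apply le_antisymm
    · exact Nat.sInf_le (by simp [hms])
    · apply le_csInf
      · exact ⟨m, by simp [hms]⟩
      · intro z hz
        simp only [Finset.coe_union, Set.mem_union, Finset.mem_coe] at hz
        rcases hz with hz | hz
        · exact hmle z hz
        · obtain ⟨y, hy, rfl⟩ := Finset.mem_image.mp hz
          exact le_of_lt (H2 y hy m hms (hmlt y hy))
lemma multiRamsey (P : Finset ℕ) (D : ℕ → Finset ℕ → Bool) (M : ℕ → ℕ) :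
    ∀ (Y : Set ℕ), Y.Infinite → ∃ Y', Y' ⊆ Y ∧ Y'.Infinite ∧
      ∀ p ∈ P, ∃ b, ∀ A : Finset ℕ, ↑A ⊆ Y' → A.card = M p → D p A = b := by
  classical
  induction P using Finset.induction_on with
  | empty => intro Y hY; exact ⟨Y, subset_rfl, hY, by simp⟩
  | @insert p P hp ih =>
    intro Y hY
    obtain ⟨Y1, hY1sub, hY1I, hY1⟩ := ih Y hY
    obtain ⟨Y2, hY2sub, hY2I, b, hb⟩ := ramsey (M p) (D p) Y1 hY1I
    refine ⟨Y2, hY2sub.trans hY1sub, hY2I, fun q hq => ?_⟩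
    rcases Finset.mem_insert.mp hq with rfl | hq
    · exact ⟨b, fun A hA hcard => hb A hA hcard⟩
    · obtain ⟨b', hb'⟩ := hY1 q hq
      exact ⟨b', fun A hA hcard => hb' A (fun x hx => hY2sub (hA hx)) hcard⟩

/-- second-smallest element -/
noncomputable def m1 (t : Finset ℕ) : ℕ := sInf (↑(t.erase (sInf (↑t : Set ℕ))) : Set ℕ)

/-- Homogeneity for "barriers" whose size is determined by the two smallest elements. -/
lemma passLemma (N : ℕ → ℕ → ℕ) (c : Finset ℕ → Bool) (X : Set ℕ) (hX : X.Infinite) :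
    ∃ Y, Y ⊆ X ∧ Y.Infinite ∧ ∃ v, ∀ t : Finset ℕ, ↑t ⊆ Y → 2 ≤ t.card →
      t.card = N (sInf (↑t : Set ℕ)) (m1 t) + 2 → c t = v := by
  classical
  set Inv : Finset ℕ × Set ℕ → Prop := fun q =>
    q.2.Infinite ∧ q.2 ⊆ X ∧ (∀ p ∈ q.1, ∀ z ∈ q.2, p < z) with hInvDef
  set R : Finset ℕ × Set ℕ → Finset ℕ × Set ℕ → Prop := fun q q' =>
    q'.1 = insert (sInf q.2) q.1 ∧ q'.2 ⊆ q.2 ∧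
    (∀ p ∈ q'.1, ∃ b, ∀ A : Finset ℕ, ↑A ⊆ q'.2 → A.card = N p (sInf q.2) →
      c (insert p (insert (sInf q.2) A)) = b) with hRDef
  have step : ∀ q, Inv q → ∃ q', Inv q' ∧ R q q' := by
    rintro ⟨P, Y⟩ ⟨hYI, hYX, hPY⟩
    set a := sInf Y with hadef
    have haY : a ∈ Y := Nat.sInf_mem hYI.nonempty
    have h0 : (Y ∩ Set.Ioi a).Infinite := by
      have : Y ∩ Set.Ioi a = Y \ Set.Iic a := by
        ext z; simp [Set.mem_Ioi, Set.mem_Iic, not_le, and_comm]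
      rw [this]; exact hYI.diff (Set.finite_Iic _)
    obtain ⟨Y', hY'sub, hY'I, hY'⟩ := multiRamsey (insert a P)
      (fun p A => c (insert p (insert a A))) (fun p => N p a) _ h0
    refine ⟨(insert a P, Y'), ⟨hY'I, (hY'sub.trans Set.inter_subset_left).trans hYX, ?_⟩,
      rfl, hY'sub.trans Set.inter_subset_left, hY'⟩
    intro p hp z hz
    rcases Finset.mem_insert.mp hp with rfl | hp
    · exact (hY'sub hz).2
    · exact hPY p hp z (hY'sub hz).1
  obtain ⟨g, hg0, hgInv, hgR⟩ := exists_chain Inv R step (∅, X) ⟨hX, subset_rfl, by simp⟩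
  set a : ℕ → ℕ := fun k => sInf (g k).2 with ha
  have hmemg : ∀ k, a k ∈ (g k).2 := fun k => Nat.sInf_mem (hgInv k).1.nonempty
  have hdec : ∀ k j, k ≤ j → (g j).2 ⊆ (g k).2 := by
    intro k j hkj
    induction j with
    | zero => rw [Nat.le_zero.mp hkj]
    | succ j ihj =>
      rcases Nat.eq_or_lt_of_le hkj with h | h
      · rw [h]
      · exact (hgR j).2.1.trans (ihj (Nat.lt_succ_iff.mp h))
  have hP : ∀ k, (g k).1 = (Finset.range k).image a := by
    intro k
    induction k with
    | zero => rw [hg0]; simp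
    | succ k ihk =>
      rw [(hgR k).1, ihk, Finset.range_add_one, Finset.image_insert]
  have hmono : StrictMono a := by
    apply strictMono_nat_of_lt_succ
    intro k
    have := (hgInv (k+1)).2.2 (a k) (by rw [(hgR k).1]; exact Finset.mem_insert_self _ _)
    exact this _ (hmemg (k+1))
  have hlater : ∀ k j, k < j → a j ∈ (g (k+1)).2 := fun k j hkj => hdec (k+1) j hkj (hmemg j)
  have hXmem : ∀ k, a k ∈ X := fun k => (hgInv k).2.1 (hmemg k)
  -- colors for pairs of stems
  have hbex : ∀ i k, i ≤ k → ∃ b, ∀ A : Finset ℕ, ↑A ⊆ (g (k+1)).2 →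
      A.card = N (a i) (a k) → c (insert (a i) (insert (a k) A)) = b := by
    intro i k hik
    have := (hgR k).2.2 (a i) (by
      rw [(hgR k).1, hP k]
      rcases Nat.eq_or_lt_of_le hik with h | h
      · rw [h]; exact Finset.mem_insert_self _ _
      · exact Finset.mem_insert_of_mem (Finset.mem_image_of_mem a (Finset.mem_range.mpr h)))
    exact this
  set B12 : ℕ → ℕ → Bool := fun i k => if h : i ≤ k then Classical.choose (hbex i k h) else false
    with hB12
  have hB12spec : ∀ i k (h : i ≤ k), ∀ A : Finset ℕ, ↑A ⊆ (g (k+1)).2 →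
      A.card = N (a i) (a k) → c (insert (a i) (insert (a k) A)) = B12 i k := by
    intro i k h
    have := Classical.choose_spec (hbex i k h)
    simpa [hB12, dif_pos h] using this
  -- Ramsey on pairs of indices
  set c' : Finset ℕ → Bool := fun u =>
    if h : u.Nonempty then B12 (u.min' h) (u.max' h) else false with hc'
  obtain ⟨I, _, hII, v, hv⟩ := ramsey 2 c' Set.univ Set.infinite_univ
  refine ⟨a '' I, ?_, Set.Infinite.image (hmono.injective.injOn) hII, v, ?_⟩
  · rintro x ⟨k, _, rfl⟩; exact hXmem k
  intro t ht hcard2 hcard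
  have htne : t.Nonempty := Finset.card_pos.mp (by omega)
  set x0 := sInf (↑t : Set ℕ) with hx0
  have hx0t : x0 ∈ t := by
    have := Nat.sInf_mem (Set.Nonempty.mono (by exact fun x hx => hx) htne.to_set)
    exact this
  obtain ⟨i, hiI, hai⟩ := ht hx0t
  set t1 := t.erase x0 with ht1
  have ht1ne : t1.Nonempty := by
    rw [← Finset.card_pos, Finset.card_erase_of_mem hx0t]; omega
  set x1 := sInf (↑t1 : Set ℕ) with hx1
  have hx1t1 : x1 ∈ t1 := Nat.sInf_mem ht1ne.to_set
  have hx1t : x1 ∈ t := Finset.mem_of_mem_erase hx1t1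
  have hx01 : x0 < x1 := lt_of_le_of_ne (Nat.sInf_le hx1t)
    (Ne.symm (Finset.ne_of_mem_erase hx1t1))
  obtain ⟨j, hjI, haj⟩ := ht hx1t
  have hij : i < j := by
    apply hmono.lt_iff_lt.mp; rw [hai, haj]; exact hx01
  set A := t1.erase x1 with hA
  have hAsub : ↑A ⊆ (g (j+1)).2 := by
    intro x hx
    have hx' : x ∈ A := hx
    have hxt1 : x ∈ t1 := Finset.mem_of_mem_erase hx'
    have hxt : x ∈ t := Finset.mem_of_mem_erase hxt1
    obtain ⟨l, hlI, hal⟩ := ht hxt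
    have hx1x : x1 < x := lt_of_le_of_ne (Nat.sInf_le hxt1)
      (Ne.symm (Finset.ne_of_mem_erase hx'))
    rw [← hal, ← haj] at hx1x
    exact hal ▸ hlater j l (hmono.lt_iff_lt.mp hx1x)
  have hAcard : A.card = N x0 x1 := by
    rw [hA, Finset.card_erase_of_mem hx1t1, ht1, Finset.card_erase_of_mem hx0t]
    have hm1 : m1 t = x1 := rfl
    rw [hm1] at hcard
    omega
  have heq : insert x0 (insert x1 A) = t := by
    rw [hA, Finset.insert_erase hx1t1, ht1, Finset.insert_erase hx0t]
  have hct : c t = B12 i j := by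
    rw [← heq, ← hai, ← haj]
    exact hB12spec i j (le_of_lt hij) A hAsub (by rw [hAcard, hai, haj])
  have hijne : i ≠ j := Nat.ne_of_lt hij
  have hpairne : ({i, j} : Finset ℕ).Nonempty := ⟨i, Finset.mem_insert_self _ _⟩
  have hmin : ({i, j} : Finset ℕ).min' hpairne = i := by
    apply le_antisymm
    · exact Finset.min'_le _ i (Finset.mem_insert_self _ _)
    · apply Finset.le_min'
      intro y hy
      rcases Finset.mem_insert.mp hy with rfl | hy
      · exact le_rfl
      · rw [Finset.mem_singleton.mp hy]; exact le_of_lt hij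
  have hmax : ({i, j} : Finset ℕ).max' hpairne = j := by
    apply le_antisymm
    · apply Finset.max'_le
      intro y hy
      rcases Finset.mem_insert.mp hy with rfl | hy
      · exact le_of_lt hij
      · rw [Finset.mem_singleton.mp hy]
    · exact Finset.le_max' _ j (Finset.mem_insert_of_mem (Finset.mem_singleton_self _))
  have hcpair : c' {i, j} = v := by
    apply hv
    · intro x hx
      rcases Finset.mem_insert.mp hx with rfl | hx
      · exact hiI
      · rw [Finset.mem_singleton.mp hx]; exact hjI
    · rw [Finset.card_insert_of_notMem (by simp [hijne]), Finset.card_singleton]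
  rw [hct]
  rw [hc'] at hcpair
  simp only [dif_pos hpairne, hmin, hmax] at hcpair
  exact hcpair
noncomputable def c1 (f : Finset ℕ → ℕ) : Finset ℕ → Bool :=
  fun t => decide (f (evens t) ∈ odds t)
noncomputable def c2 (f : Finset ℕ → ℕ) : Finset ℕ → Bool :=
  fun t => decide (f (evens (t.erase (sInf (↑t : Set ℕ)))) = sInf (↑t : Set ℕ))


end FS


namespace FS

lemma thin (f : Finset ℕ → ℕ) (H : Set ℕ) (hHI : H.Infinite)
    (hmain : ∀ s : Finset ℕ, ExLarge s → ↑s ⊆ H → ∀ h ∈ H, h ∉ s →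
      (∃ x ∈ s, h < x) → f s ≠ h) :
    ∃ H' : Set ℕ, H'.Infinite ∧ FreeL f H' := by
  classical
  set Inv : Finset ℕ × Set ℕ → Prop := fun q =>
    q.2 ⊆ H ∧ q.2.Infinite ∧ (∀ x ∈ q.1, ∀ w ∈ q.2, x < w) ∧ ↑q.1 ⊆ H ∧
    (∀ s : Finset ℕ, s.Nonempty → s ⊆ q.1 → f s ∉ q.2) with hInvDef
  set R : Finset ℕ × Set ℕ → Finset ℕ × Set ℕ → Prop := fun q q' =>
    q'.1 = insert (sInf q.2) q.1 ∧ q'.2 ⊆ q.2 with hRDef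
  have step : ∀ q, Inv q → ∃ q', Inv q' ∧ R q q' := by
    rintro ⟨F, Z⟩ ⟨hZH, hZI, hFZ, hFH, hI5⟩
    set a := sInf Z with ha
    have haZ : a ∈ Z := Nat.sInf_mem hZI.nonempty
    set F' := insert a F with hF'
    set G := (F'.powerset.image f : Finset ℕ) with hG
    set Z' := (Z ∩ Set.Ioi a) \ ↑G with hZ'
    have hZ'I : Z'.Infinite := by
      have h1 : (Z ∩ Set.Ioi a).Infinite := by
        have : Z ∩ Set.Ioi a = Z \ Set.Iic a := by
          ext z; simp [Set.mem_Ioi, Set.mem_Iic, not_le, and_comm]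
        rw [this]; exact hZI.diff (Set.finite_Iic _)
      exact h1.diff (G.finite_toSet)
    have hZ'Z : Z' ⊆ Z := fun z hz => hz.1.1
    refine ⟨(F', Z'), ⟨hZ'Z.trans hZH, hZ'I, ?_, ?_, ?_⟩, rfl, hZ'Z⟩
    · intro x hx w hw
      rcases Finset.mem_insert.mp hx with rfl | hx
      · exact hw.1.2
      · exact hFZ x hx w (hZ'Z hw)
    · intro x hx
      rcases Finset.mem_insert.mp hx with rfl | hx
      · exact hZH haZ
      · exact hFH hx
    · intro s _ hs hfs
      exact hfs.2 (Finset.mem_coe.mpr (Finset.mem_image_of_mem f (Finset.mem_powerset.mpr hs)))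
  obtain ⟨g, hg0, hgInv, hgR⟩ := exists_chain Inv R step (∅, H)
    ⟨subset_rfl, hHI, by simp, by simp, by
      intro s hs hsub
      rw [Finset.subset_empty] at hsub
      exact absurd (hsub ▸ hs) (by simp)⟩
  set z : ℕ → ℕ := fun j => sInf (g j).2 with hz
  have hmemg : ∀ j, z j ∈ (g j).2 := fun j => Nat.sInf_mem (hgInv j).2.1.nonempty
  have hF : ∀ j, (g j).1 = (Finset.range j).image z := by
    intro j
    induction j with
    | zero => rw [hg0]; simp
    | succ j ihj => rw [(hgR j).1, ihj, Finset.range_add_one, Finset.image_insert]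
  have hmono : StrictMono z := by
    apply strictMono_nat_of_lt_succ
    intro j
    have hj : z j ∈ (g (j+1)).1 := by rw [(hgR j).1]; exact Finset.mem_insert_self _ _
    exact (hgInv (j+1)).2.2.1 (z j) hj (z (j+1)) (hmemg (j+1))
  have hzH : ∀ j, z j ∈ H := fun j => (hgInv j).1 (hmemg j)
  refine ⟨Set.range z, Set.infinite_range_of_injective hmono.injective, ?_⟩
  intro s hsL hsub hfs
  by_contra hns
  obtain ⟨j, hfj⟩ := hfs
  have hsne : s.Nonempty := hsL.1
  set M := s.max' hsne with hM
  have hMs : M ∈ s := s.max'_mem hsne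
  obtain ⟨i, hMi⟩ := hsub (Finset.mem_coe.mpr hMs)
  have hsubH : ↑s ⊆ H := fun x hx => by
    obtain ⟨l, hl⟩ := hsub hx
    exact hl ▸ hzH l
  rcases lt_trichotomy (f s) M with hlt | heq | hgt
  · exact hmain s hsL hsubH (f s) (hfj ▸ hzH j) hns ⟨M, hMs, hlt⟩ rfl
  · exact hns (heq ▸ hMs)
  · have hij : i < j := by
      apply hmono.lt_iff_lt.mp
      rw [hMi, hfj]
      exact hgt
    have hsF : s ⊆ (g j).1 := by
      intro x hx
      obtain ⟨l, hl⟩ := hsub (Finset.mem_coe.mpr hx)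
      have hli : l ≤ i := by
        apply hmono.le_iff_le.mp
        rw [hl, hMi]
        exact s.le_max' x hx
      rw [hF j, ← hl]
      exact Finset.mem_image_of_mem z (Finset.mem_range.mpr (lt_of_le_of_lt hli hij))
    have := (hgInv j).2.2.2.2 s hsne hsF
    rw [← hfj] at this
    exact this (hfj ▸ hmemg j)
lemma core (f : Finset ℕ → ℕ) : ∃ H : Set ℕ, H.Infinite ∧
    ∀ s : Finset ℕ, ExLarge s → ↑s ⊆ H → ∀ h ∈ H, h ∉ s → (∃ x ∈ s, h < x) → f s ≠ h := by
  classical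
  have hIoi : (Set.Ioi 0 : Set ℕ).Infinite := Set.Ioi_infinite 0
  obtain ⟨Y1, hY1sub, hY1I, v1, hv1'⟩ := passLemma (fun m _ => 2 * m - 1) (c1 f) _ hIoi
  obtain ⟨Y2, hY2sub, hY2I, v2, hv2'⟩ := passLemma (fun _ n => 2 * n) (c2 f) Y1 hY1I
  have hY2Y1 : Y2 ⊆ Y1 := hY2sub
  have hY2pos : Y2 ⊆ Set.Ioi 0 := hY2Y1.trans hY1sub
  have hv1 : ∀ t : Finset ℕ, ↑t ⊆ Y2 → t.card = 2 * sInf (↑t : Set ℕ) + 1 → c1 f t = v1 := by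
    intro t ht hc
    have htne : t.Nonempty := Finset.card_pos.mp (by omega)
    have hpos : 1 ≤ sInf (↑t : Set ℕ) := by
      have := hY2pos (ht (Finset.mem_coe.mpr (Nat.sInf_mem htne.to_set)))
      exact this
    exact hv1' t (fun x hx => hY2Y1 (ht hx)) (by omega) (by omega)
  have hv2 : ∀ t : Finset ℕ, ↑t ⊆ Y2 → t.card = 2 * m1 t + 2 → c2 f t = v2 := by
    intro t ht hc
    exact hv2' t ht (by omega) (by omega)
  -- enumeration of Y2
  set p : ℕ → Prop := fun n => n ∈ Y2 with hp
  have hpI : (setOf p).Infinite := hY2I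
  set y : ℕ → ℕ := fun k => Nat.nth p k with hy
  have hymono : StrictMono y := Nat.nth_strictMono hpI
  have hymem : ∀ k, y k ∈ Y2 := fun k => Nat.nth_mem_of_infinite hpI k
  have hcnty : ∀ k, Nat.count p (y k) = k := fun k => Nat.count_nth_of_infinite hpI k
  set H : Set ℕ := Set.range (fun k => y (3 * k)) with hH
  have hHsub : H ⊆ Y2 := by rintro x ⟨k, rfl⟩; exact hymem _
  have hHI : H.Infinite :=
    Set.infinite_range_of_injective (fun a b hab => by
      have := hymono.injective hab; omega)
  -- the predecessor-filler facts
  have predfill : ∀ d, 1 ≤ d → d ≤ 2 → ∀ w ∈ H, ∀ mm ∈ H, mm < w →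
      mm < y (Nat.count p w - d) ∧ y (Nat.count p w - d) < w ∧
      y (Nat.count p w - d) ∈ Y2 ∧ y (Nat.count p w - d) ∉ H := by
    rintro d hd1 hd2 w ⟨k, rfl⟩ mm ⟨k0, rfl⟩ hlt
    simp only at *
    have hk0k : 3 * k0 < 3 * k := hymono.lt_iff_lt.mp hlt
    have hk1 : 1 ≤ k := by omega
    rw [hcnty]
    refine ⟨?_, ?_, hymem _, ?_⟩
    · exact hymono (by omega)
    · exact hymono (by omega)
    · rintro ⟨l, hl⟩
      simp only at hl
      have := hymono.injective hl
      omega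
  have hmlt_erase : ∀ (s : Finset ℕ) (w : ℕ), w ∈ s.erase (sInf (↑s : Set ℕ)) →
      sInf (↑s : Set ℕ) < w := by
    intro s w hw
    exact lt_of_le_of_ne (Nat.sInf_le (Finset.mem_coe.mpr (Finset.mem_of_mem_erase hw)))
      (Ne.symm (Finset.ne_of_mem_erase hw))
  -- claim: v2 = false
  have hv2false : v2 = false := by
    set B : Finset ℕ := (Finset.range (2 * y 2 + 1)).image (fun i => y (i + 2)) with hB
    have hBcard : B.card = 2 * y 2 + 1 := by
      rw [hB, Finset.card_image_of_injective _
        (fun a b hab => by have := hymono.injective hab; omega), Finset.card_range]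
    have hBsub : ↑B ⊆ Y2 := by
      intro x hx
      obtain ⟨i, _, rfl⟩ := Finset.mem_image.mp hx
      exact hymem _
    have hB2 : y 2 ∈ B := by
      rw [hB]
      exact Finset.mem_image.mpr ⟨0, Finset.mem_range.mpr (by omega), rfl⟩
    have hBgt : ∀ x ∈ B, y 1 < x := by
      intro x hx
      obtain ⟨i, _, rfl⟩ := Finset.mem_image.mp hx
      exact hymono (by omega)
    have hBinf : sInf (↑B : Set ℕ) = y 2 := by
      apply le_antisymm (Nat.sInf_le (Finset.mem_coe.mpr hB2))
      apply le_csInf ⟨y 2, Finset.mem_coe.mpr hB2⟩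
      intro x hx
      obtain ⟨i, _, rfl⟩ := Finset.mem_image.mp (Finset.mem_coe.mp hx)
      exact hymono.monotone (by omega)
    have hkey : ∀ j, (∀ x ∈ B, y j < x) → (decide (f (evens B) = y j) : Bool) = v2 := by
      intro j hj
      have hnotin : y j ∉ B := fun hmem => lt_irrefl _ (hj _ hmem)
      have hinf : sInf (↑(insert (y j) B) : Set ℕ) = y j := by
        apply le_antisymm (Nat.sInf_le (by simp))
        apply le_csInf ⟨y j, by simp⟩
        intro x hx
        rcases Finset.mem_insert.mp (Finset.mem_coe.mp hx) with rfl | hx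
        · exact le_rfl
        · exact le_of_lt (hj x hx)
      have herase : (insert (y j) B).erase (sInf (↑(insert (y j) B) : Set ℕ)) = B := by
        rw [hinf, Finset.erase_insert hnotin]
      have hm1 : m1 (insert (y j) B) = y 2 := by
        rw [m1, herase, hBinf]
      have hcard : (insert (y j) B).card = 2 * m1 (insert (y j) B) + 2 := by
        rw [hm1, Finset.card_insert_of_notMem hnotin, hBcard]
      have hsub : ↑(insert (y j) B) ⊆ Y2 := by
        intro x hx
        rcases Finset.mem_insert.mp (Finset.mem_coe.mp hx) with rfl | hx
        · exact hymem _
        · exact hBsub (Finset.mem_coe.mpr hx)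
      have := hv2 _ hsub hcard
      rw [c2] at this
      rw [← this, herase, hinf]
    have h0 := hkey 0 (fun x hx => lt_trans (hymono (by omega)) (hBgt x hx))
    have h1 := hkey 1 hBgt
    cases hval : v2
    · rfl
    · exfalso
      rw [hval] at h0 h1
      rw [decide_eq_true_iff] at h0 h1
      have : y 0 = y 1 := h0.symm.trans h1
      have := hymono.injective this
      omega
  -- claim: v1 = false
  have hv1false : v1 = false := by
    set m0 := y 0 with hm0def
    set s0 : Finset ℕ := (Finset.range (m0 + 1)).image (fun i => y (3 * i)) with hs0
    have hs0card : s0.card = m0 + 1 := by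
      rw [hs0, Finset.card_image_of_injective _
        (fun a b hab => by have := hymono.injective hab; omega), Finset.card_range]
    have hs0H : ↑s0 ⊆ H := by
      intro x hx
      obtain ⟨i, _, rfl⟩ := Finset.mem_image.mp (Finset.mem_coe.mp hx)
      exact ⟨i, rfl⟩
    have hs0m : m0 ∈ s0 := by
      rw [hs0]
      refine Finset.mem_image.mpr ⟨0, Finset.mem_range.mpr (by omega), by simp [hm0def]⟩
    have hs0ne : s0.Nonempty := ⟨m0, hs0m⟩
    have hs0inf : sInf (↑s0 : Set ℕ) = m0 := by
      apply le_antisymm (Nat.sInf_le (Finset.mem_coe.mpr hs0m))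
      apply le_csInf ⟨m0, Finset.mem_coe.mpr hs0m⟩
      intro x hx
      obtain ⟨i, _, rfl⟩ := Finset.mem_image.mp (Finset.mem_coe.mp hx)
      exact hymono.monotone (by omega)
    set z := f s0 with hzdef
    set φ : ℕ → ℕ := fun w =>
      if y (Nat.count p w - 1) = z then y (Nat.count p w - 2) else y (Nat.count p w - 1)
      with hφdef
    have hm0H : m0 ∈ H := hs0H (Finset.mem_coe.mpr hs0m)
    have hwH : ∀ w ∈ s0.erase (sInf (↑s0 : Set ℕ)), w ∈ H ∧ m0 < w := by
      intro w hw
      refine ⟨hs0H (Finset.mem_coe.mpr (Finset.mem_of_mem_erase hw)), ?_⟩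
      rw [← hs0inf]
      exact hmlt_erase s0 w hw
    have hφprop : ∀ w ∈ s0.erase (sInf (↑s0 : Set ℕ)), ∀ mm ∈ H, mm < w →
        mm < φ w ∧ φ w < w ∧ φ w ∈ Y2 ∧ φ w ≠ z := by
      intro w hw mm hmm hmmw
      obtain ⟨hwh, hm0w⟩ := hwH w hw
      have hp1 := predfill 1 (by omega) (by omega) w hwh mm hmm hmmw
      have hp2 := predfill 2 (by omega) (by omega) w hwh mm hmm hmmw
      have hcge : 2 ≤ Nat.count p w := by
        obtain ⟨k, hk⟩ := hwh
        have hk1 : 1 ≤ k := by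
          by_contra hk0
          push_neg at hk0
          interval_cases k
          · simp only at hk
            rw [← hk] at hm0w
            exact absurd (hymono.lt_iff_lt.mp hm0w) (by omega)
        simp only at hk
        rw [← hk, hcnty]
        omega
      by_cases hif : y (Nat.count p w - 1) = z
      · rw [hφdef]
        simp only [if_pos hif]
        refine ⟨hp2.1, hp2.2.1, hp2.2.2.1, ?_⟩
        intro hcontra
        rw [← hif] at hcontra
        have := hymono.injective hcontra
        omega
      · rw [hφdef]
        simp only [if_neg hif]
        exact ⟨hp1.1, hp1.2.1, hp1.2.2.1, hif⟩
    have hH1 : ∀ w ∈ s0.erase (sInf (↑s0 : Set ℕ)), φ w < w := by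
      intro w hw
      exact (hφprop w hw m0 hm0H (hwH w hw).2).2.1
    have hH2 : ∀ w ∈ s0.erase (sInf (↑s0 : Set ℕ)), ∀ zz ∈ s0, zz < w → zz < φ w := by
      intro w hw zz hzz hzzw
      exact (hφprop w hw zz (hs0H (Finset.mem_coe.mpr hzz)) hzzw).1
    obtain ⟨hev, hod, hcrd, hinf⟩ := interleave s0 hs0ne φ hH1 hH2
    set t := s0 ∪ (s0.erase (sInf (↑s0 : Set ℕ))).image φ with htdef
    have htsub : ↑t ⊆ Y2 := by
      intro x hx
      rcases Finset.mem_union.mp (Finset.mem_coe.mp hx) with hx | hx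
      · exact hHsub (hs0H (Finset.mem_coe.mpr hx))
      · obtain ⟨w, hw, rfl⟩ := Finset.mem_image.mp hx
        exact (hφprop w hw m0 hm0H (hwH w hw).2).2.2.1
    have htcard : t.card = 2 * sInf (↑t : Set ℕ) + 1 := by
      rw [hcrd, hinf, hs0inf, hs0card]
      omega
    have := hv1 t htsub htcard
    rw [c1] at this
    rw [hev, hod] at this
    have hznotin : z ∉ (s0.erase (sInf (↑s0 : Set ℕ))).image φ := by
      intro hmem
      obtain ⟨w, hw, hweq⟩ := Finset.mem_image.mp hmem
      exact (hφprop w hw m0 hm0H (hwH w hw).2).2.2.2 hweq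
    rw [← this, ← hzdef, decide_eq_false hznotin]
  -- claim: values below the minimum are avoided
  have hbelow : ∀ s : Finset ℕ, ExLarge s → ↑s ⊆ H → ∀ h ∈ H, h < sInf (↑s : Set ℕ) →
      f s ≠ h := by
    intro s hsL hsH h hhH hhlt
    have hsne := hsL.1
    have hcard : s.card = sInf (↑s : Set ℕ) + 1 := by have := hsL.2; omega
    have hms : sInf (↑s : Set ℕ) ∈ s := Nat.sInf_mem hsne.to_set
    have hmH : sInf (↑s : Set ℕ) ∈ H := hsH (Finset.mem_coe.mpr hms)
    set φ0 : ℕ → ℕ := fun w => y (Nat.count p w - 1) with hφ0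
    have hH1 : ∀ w ∈ s.erase (sInf (↑s : Set ℕ)), φ0 w < w := by
      intro w hw
      exact (predfill 1 (by omega) (by omega) w (hsH (Finset.mem_coe.mpr
        (Finset.mem_of_mem_erase hw))) _ hmH (hmlt_erase s w hw)).2.1
    have hH2 : ∀ w ∈ s.erase (sInf (↑s : Set ℕ)), ∀ zz ∈ s, zz < w → zz < φ0 w := by
      intro w hw zz hzz hzzw
      exact (predfill 1 (by omega) (by omega) w (hsH (Finset.mem_coe.mpr
        (Finset.mem_of_mem_erase hw))) zz (hsH (Finset.mem_coe.mpr hzz)) hzzw).1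
    obtain ⟨hev, hod, hcrd, hinf⟩ := interleave s hsne φ0 hH1 hH2
    set t := s ∪ (s.erase (sInf (↑s : Set ℕ))).image φ0 with htdef
    have htsub : ↑t ⊆ Y2 := by
      intro x hx
      rcases Finset.mem_union.mp (Finset.mem_coe.mp hx) with hx | hx
      · exact hHsub (hsH (Finset.mem_coe.mpr hx))
      · obtain ⟨w, hw, rfl⟩ := Finset.mem_image.mp hx
        exact (predfill 1 (by omega) (by omega) w (hsH (Finset.mem_coe.mpr
          (Finset.mem_of_mem_erase hw))) _ hmH (hmlt_erase s w hw)).2.2.1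
    have htcard : t.card = 2 * sInf (↑s : Set ℕ) + 1 := by
      rw [hcrd, hcard]; omega
    have hallt : ∀ x ∈ t, h < x := by
      intro x hx
      have : sInf (↑t : Set ℕ) ≤ x := Nat.sInf_le (Finset.mem_coe.mpr hx)
      rw [hinf] at this
      omega
    have hnotin : h ∉ t := fun hmem => lt_irrefl _ (hallt h hmem)
    set t2 := insert h t with ht2def
    have ht2inf : sInf (↑t2 : Set ℕ) = h := by
      apply le_antisymm (Nat.sInf_le (by simp [ht2def]))
      apply le_csInf ⟨h, by simp [ht2def]⟩
      intro x hx
      rcases Finset.mem_insert.mp (Finset.mem_coe.mp hx) with rfl | hx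
      · exact le_rfl
      · exact le_of_lt (hallt x hx)
    have ht2erase : t2.erase (sInf (↑t2 : Set ℕ)) = t := by
      rw [ht2inf, ht2def, Finset.erase_insert hnotin]
    have ht2m1 : m1 t2 = sInf (↑s : Set ℕ) := by
      rw [m1, ht2erase, hinf]
    have ht2card : t2.card = 2 * m1 t2 + 2 := by
      rw [ht2m1, ht2def, Finset.card_insert_of_notMem hnotin, htcard]
    have ht2sub : ↑t2 ⊆ Y2 := by
      intro x hx
      rcases Finset.mem_insert.mp (Finset.mem_coe.mp hx) with rfl | hx
      · exact hHsub hhH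
      · exact htsub (Finset.mem_coe.mpr hx)
    have := hv2 t2 ht2sub ht2card
    rw [c2, ht2erase, ht2inf, hev, hv2false, decide_eq_false_iff_not] at this
    exact this
  -- claim: values in interior gaps are avoided
  have hgap : ∀ s : Finset ℕ, ExLarge s → ↑s ⊆ H → ∀ h ∈ H, h ∉ s →
      sInf (↑s : Set ℕ) < h → (∃ x ∈ s, h < x) → f s ≠ h := by
    intro s hsL hsH h hhH hhns hhgt hhlt
    have hsne := hsL.1
    have hcard : s.card = sInf (↑s : Set ℕ) + 1 := by have := hsL.2; omega
    have hms : sInf (↑s : Set ℕ) ∈ s := Nat.sInf_mem hsne.to_set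
    have hmH : sInf (↑s : Set ℕ) ∈ H := hsH (Finset.mem_coe.mpr hms)
    set C : ℕ → Prop := fun w => h < w ∧ ∀ zz ∈ s, zz < w → zz < h with hC
    set φ1 : ℕ → ℕ := fun w => if C w then h else y (Nat.count p w - 1) with hφ1
    have hφprop : ∀ w ∈ s.erase (sInf (↑s : Set ℕ)),
        φ1 w < w ∧ (∀ zz ∈ s, zz < w → zz < φ1 w) ∧ φ1 w ∈ Y2 := by
      intro w hw
      have hwH : w ∈ H := hsH (Finset.mem_coe.mpr (Finset.mem_of_mem_erase hw))
      by_cases hcw : C w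
      · rw [hφ1]
        simp only [if_pos hcw]
        exact ⟨hcw.1, fun zz hzz hzzw => hcw.2 zz hzz hzzw, hHsub hhH⟩
      · rw [hφ1]
        simp only [if_neg hcw]
        refine ⟨(predfill 1 (by omega) (by omega) w hwH _ hmH (hmlt_erase s w hw)).2.1,
          fun zz hzz hzzw => (predfill 1 (by omega) (by omega) w hwH zz
            (hsH (Finset.mem_coe.mpr hzz)) hzzw).1,
          (predfill 1 (by omega) (by omega) w hwH _ hmH (hmlt_erase s w hw)).2.2.1⟩
    have hH1 : ∀ w ∈ s.erase (sInf (↑s : Set ℕ)), φ1 w < w := fun w hw => (hφprop w hw).1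
    have hH2 : ∀ w ∈ s.erase (sInf (↑s : Set ℕ)), ∀ zz ∈ s, zz < w → zz < φ1 w :=
      fun w hw => (hφprop w hw).2.1
    obtain ⟨hev, hod, hcrd, hinf⟩ := interleave s hsne φ1 hH1 hH2
    set t := s ∪ (s.erase (sInf (↑s : Set ℕ))).image φ1 with htdef
    have htsub : ↑t ⊆ Y2 := by
      intro x hx
      rcases Finset.mem_union.mp (Finset.mem_coe.mp hx) with hx | hx
      · exact hHsub (hsH (Finset.mem_coe.mpr hx))
      · obtain ⟨w, hw, rfl⟩ := Finset.mem_image.mp hx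
        exact (hφprop w hw).2.2
    have htcard : t.card = 2 * sInf (↑t : Set ℕ) + 1 := by
      rw [hcrd, hinf, hcard]; omega
    -- h is among the odds
    obtain ⟨x0, hx0s, hx0gt⟩ := hhlt
    have hfilne : (s.filter (fun zz => h < zz)).Nonempty :=
      ⟨x0, Finset.mem_filter.mpr ⟨hx0s, hx0gt⟩⟩
    set wstar := (s.filter (fun zz => h < zz)).min' hfilne with hwstar
    have hwstarmem := (s.filter (fun zz => h < zz)).min'_mem hfilne
    have hwstars : wstar ∈ s := (Finset.mem_filter.mp hwstarmem).1
    have hwstargt : h < wstar := (Finset.mem_filter.mp hwstarmem).2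
    have hwstarerase : wstar ∈ s.erase (sInf (↑s : Set ℕ)) := by
      apply Finset.mem_erase.mpr
      exact ⟨by omega, hwstars⟩
    have hCwstar : C wstar := by
      refine ⟨hwstargt, ?_⟩
      intro zz hzz hzzlt
      by_contra hge
      push_neg at hge
      have : h < zz := lt_of_le_of_ne hge (fun heq => hhns (heq ▸ hzz))
      have : wstar ≤ zz := Finset.min'_le _ zz (Finset.mem_filter.mpr ⟨hzz, this⟩)
      omega
    have hhodds : h ∈ (s.erase (sInf (↑s : Set ℕ))).image φ1 := by
      apply Finset.mem_image.mpr
      refine ⟨wstar, hwstarerase, ?_⟩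
      rw [hφ1]
      simp only [if_pos hCwstar]
    have := hv1 t htsub htcard
    rw [c1, hev, hod, hv1false, decide_eq_false_iff_not] at this
    intro hcontra
    exact this (hcontra ▸ hhodds)
  refine ⟨H, hHI, ?_⟩
  intro s hsL hsH h hhH hhns hhlt
  rcases lt_trichotomy h (sInf (↑s : Set ℕ)) with hlt | heq | hgt
  · exact hbelow s hsL hsH h hhH hlt
  · exact absurd (heq ▸ Nat.sInf_mem hsL.1.to_set) hhns
  · exact hgap s hsL hsH h hhH hhns hgt hhlt

end FS

/-- Large Free Set Theorem: every coloring of the exactly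
ω-large sets in ℕ colors admits an infinite free set. -/
theorem stmt5 (f : Finset ℕ → ℕ) :
    ∃ H : Set ℕ, H.Infinite ∧ FreeL f H := by
  obtain ⟨H, hHI, hmain⟩ := FS.core f
  exact FS.thin f H hHI hmain
end

section
/- (Large Thin Set Theorem) For every coloring f : [ℕ]^{!ω} → ℕ there exists an infinite set H ⊆ ℕ that is thin for f, i.e., f([H]^{!ω}) ≠ ℕ. -/
open Set

/-- Generic fusion lemma: given a step operation producing, from any infinite set,
an infinite subset avoiding the minimum and satisfying `Q`, we get a strictly
increasing sequence `A` with witness sets. -/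
lemma chain_lemma (Q : ℕ → Set ℕ → Bool → Prop) (X₀ : Set ℕ) (hX₀ : X₀.Infinite)
    (hstep : ∀ X : Set ℕ, X.Infinite →
      ∃ X' : Set ℕ, X' ⊆ X \ {sInf X} ∧ X'.Infinite ∧ ∃ b : Bool, Q (sInf X) X' b) :
    ∃ (A : ℕ → ℕ) (b : ℕ → Bool) (Y : ℕ → Set ℕ),
      StrictMono A ∧ (∀ i, A i ∈ X₀) ∧ (∀ i, Q (A i) (Y i) (b i)) ∧
      (∀ i j, i < j → A j ∈ Y i) := by
  classical
  have step : ∀ X : {X : Set ℕ // X.Infinite},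
      ∃ X' : {X : Set ℕ // X.Infinite},
        X'.1 ⊆ X.1 \ {sInf X.1} ∧ ∃ b : Bool, Q (sInf X.1) X'.1 b := by
    rintro ⟨X, hX⟩
    obtain ⟨X', h1, h2, h3⟩ := hstep X hX
    exact ⟨⟨X', h2⟩, h1, h3⟩
  choose nxt hsub hb using step
  choose bf hQ using hb
  set seq : ℕ → {X : Set ℕ // X.Infinite} := fun i => nxt^[i] ⟨X₀, hX₀⟩ with hseq
  have hsucc : ∀ i, seq (i + 1) = nxt (seq i) := by
    intro i; simp [hseq, Function.iterate_succ_apply']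
  set A : ℕ → ℕ := fun i => sInf (seq i).1 with hA
  have hmem : ∀ i, A i ∈ (seq i).1 := fun i => Nat.sInf_mem (seq i).2.nonempty
  have hstep' : ∀ i, (seq (i + 1)).1 ⊆ (seq i).1 \ {A i} := by
    intro i; rw [hsucc i]; exact hsub (seq i)
  have hmono : ∀ i j, i ≤ j → (seq j).1 ⊆ (seq i).1 := by
    intro i j hij
    induction j with
    | zero => simp_all
    | succ k ihk =>
      rcases Nat.lt_or_ge i (k + 1) with h | h
      · exact ((hstep' k).trans (Set.diff_subset)).trans (ihk (Nat.lt_succ_iff.mp h))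
      · have : i = k + 1 := le_antisymm hij h
        subst this; exact subset_rfl
  have hAmono : StrictMono A := by
    apply strictMono_nat_of_lt_succ
    intro i
    have h1 := hstep' i (hmem (i + 1))
    have hle : A i ≤ A (i + 1) := Nat.sInf_le h1.1
    have hne : A (i + 1) ≠ A i := h1.2
    omega
  refine ⟨A, fun i => bf (seq i), fun i => (nxt (seq i)).1, hAmono, ?_, ?_, ?_⟩
  · intro i; exact hmono 0 i (Nat.zero_le i) (hmem i)
  · intro i; exact hQ (seq i)
  · intro i j hij
    have : (seq j).1 ⊆ (seq (i + 1)).1 := hmono (i + 1) j hij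
    rw [hsucc i] at this
    exact this (hmem j)

/-- Infinite Ramsey theorem for `n`-element subsets, two colors. -/
lemma ramsey_inf : ∀ n : ℕ, ∀ X : Set ℕ, X.Infinite → ∀ g : Finset ℕ → Bool,
    ∃ Y : Set ℕ, Y ⊆ X ∧ Y.Infinite ∧ ∃ b : Bool,
      ∀ s : Finset ℕ, ↑s ⊆ Y → s.card = n → g s = b := by
  intro n
  induction n with
  | zero =>
    intro X hX g
    refine ⟨X, subset_rfl, hX, g ∅, ?_⟩
    intro s _ hc
    rw [Finset.card_eq_zero] at hc
    subst hc; rfl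
  | succ n ih =>
    intro X hX g
    set Q : ℕ → Set ℕ → Bool → Prop := fun m X' b =>
      ∀ t : Finset ℕ, ↑t ⊆ X' → t.card = n → g (insert m t) = b with hQdef
    have hstep : ∀ Z : Set ℕ, Z.Infinite →
        ∃ X' : Set ℕ, X' ⊆ Z \ {sInf Z} ∧ X'.Infinite ∧ ∃ b : Bool, Q (sInf Z) X' b := by
      intro Z hZ
      have hZ' : (Z \ {sInf Z}).Infinite := hZ.diff (Set.finite_singleton _)
      obtain ⟨Y, hYsub, hYinf, b, hb⟩ := ih (Z \ {sInf Z}) hZ'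
        (fun t => g (insert (sInf Z) t))
      exact ⟨Y, hYsub, hYinf, b, hb⟩
    obtain ⟨A, b, Y, hAmono, hAX, hQi, hYmem⟩ := chain_lemma Q X hX hstep
    have hpig : {i | b i = true}.Infinite ∨ {i | b i = false}.Infinite := by
      by_contra h
      push_neg at h
      obtain ⟨h1, h2⟩ := h
      have huniv : ({i | b i = true} ∪ {i | b i = false}) = Set.univ := by
        ext i; cases hbi : b i <;> simp [hbi]
      exact Set.infinite_univ (huniv ▸ h1.union h2)
    obtain ⟨b₀, I, hIinf, hIb⟩ : ∃ b₀ : Bool, ∃ I : Set ℕ, I.Infinite ∧ ∀ i ∈ I, b i = b₀ := by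
      rcases hpig with h | h
      · exact ⟨true, _, h, fun i hi => hi⟩
      · exact ⟨false, _, h, fun i hi => hi⟩
    refine ⟨A '' I, ?_, hIinf.image (hAmono.injective.injOn), b₀, ?_⟩
    · rintro x ⟨i, _, rfl⟩; exact hAX i
    · intro s hs hcard
      have hne : s.Nonempty := Finset.card_pos.mp (by omega)
      set m := s.min' hne with hm
      have hms : m ∈ s := s.min'_mem hne
      obtain ⟨i, hiI, hAi⟩ := hs hms
      have ht : ∀ x ∈ s.erase m, x ∈ Y i := by
        intro x hx
        have hxs : x ∈ s := Finset.mem_of_mem_erase hx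
        have hxne : x ≠ m := Finset.ne_of_mem_erase hx
        obtain ⟨j, hjI, hAj⟩ := hs hxs
        have hxm : m ≤ x := s.min'_le x hxs
        have hij : i < j := by
          apply hAmono.lt_iff_lt.mp
          rw [hAi, hAj]; omega
        rw [← hAj]
        exact hYmem i j hij
      have hcard' : (s.erase m).card = n := by
        rw [Finset.card_erase_of_mem hms]; omega
      have := hQi i (s.erase m) (fun x hx => ht x hx) hcard'
      rw [hAi, Finset.insert_erase hms] at this
      rw [this]
      exact congrArg b (rfl) ▸ (hIb i hiI) ▸ rfl

/-- Large Thin Set Theorem: every coloring of the exactly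
ω-large sets in ℕ colors admits an infinite thin set. -/
theorem stmt7 (f : Finset ℕ → ℕ) :
    ∃ H : Set ℕ, H.Infinite ∧
      {c : ℕ | ∃ s : Finset ℕ, ExLarge s ∧ ↑s ⊆ H ∧ f s = c} ≠ Set.univ := by
  classical
  set Q : ℕ → Set ℕ → Bool → Prop := fun m X' b =>
    ∀ t : Finset ℕ, ↑t ⊆ X' → t.card = m → (decide (f (insert m t) = 0) = b) with hQdef
  have hstep : ∀ Z : Set ℕ, Z.Infinite →
      ∃ X' : Set ℕ, X' ⊆ Z \ {sInf Z} ∧ X'.Infinite ∧ ∃ b : Bool, Q (sInf Z) X' b := by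
    intro Z hZ
    have hZ' : (Z \ {sInf Z}).Infinite := hZ.diff (Set.finite_singleton _)
    obtain ⟨Y, hYsub, hYinf, b, hb⟩ := ramsey_inf (sInf Z) (Z \ {sInf Z}) hZ'
      (fun t => decide (f (insert (sInf Z) t) = 0))
    exact ⟨Y, hYsub, hYinf, b, hb⟩
  obtain ⟨A, b, Y, hAmono, hAX, hQi, hYmem⟩ := chain_lemma Q Set.univ Set.infinite_univ hstep
  have hpig : {i | b i = true}.Infinite ∨ {i | b i = false}.Infinite := by
    by_contra h
    push_neg at h
    obtain ⟨h1, h2⟩ := h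
    have huniv : ({i | b i = true} ∪ {i | b i = false}) = Set.univ := by
      ext i; cases hbi : b i <;> simp [hbi]
    exact Set.infinite_univ (huniv ▸ h1.union h2)
  obtain ⟨b₀, I, hIinf, hIb⟩ : ∃ b₀ : Bool, ∃ I : Set ℕ, I.Infinite ∧ ∀ i ∈ I, b i = b₀ := by
    rcases hpig with h | h
    · exact ⟨true, _, h, fun i hi => hi⟩
    · exact ⟨false, _, h, fun i hi => hi⟩
  refine ⟨A '' I, hIinf.image (hAmono.injective.injOn), ?_⟩
  have key : ∀ s : Finset ℕ, ExLarge s → ↑s ⊆ A '' I → decide (f s = 0) = b₀ := by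
    intro s hsl hs
    obtain ⟨hne, hcard⟩ := hsl
    have hmem : sInf (↑s : Set ℕ) ∈ (↑s : Set ℕ) := Nat.sInf_mem (hne.to_set)
    set m := sInf (↑s : Set ℕ) with hm
    have hms : m ∈ s := hmem
    obtain ⟨i, hiI, hAi⟩ := hs hms
    have ht : ∀ x ∈ s.erase m, x ∈ Y i := by
      intro x hx
      have hxs : x ∈ s := Finset.mem_of_mem_erase hx
      have hxne : x ≠ m := Finset.ne_of_mem_erase hx
      obtain ⟨j, hjI, hAj⟩ := hs hxs
      have hxm : m ≤ x := Nat.sInf_le hxs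
      have hij : i < j := by
        apply hAmono.lt_iff_lt.mp
        rw [hAi, hAj]; omega
      rw [← hAj]
      exact hYmem i j hij
    have hcard' : (s.erase m).card = m := by
      rw [Finset.card_erase_of_mem hms]; omega
    have hAi' : (s.erase m).card = A i := by rw [hcard', hAi]
    have := hQi i (s.erase m) (fun x hx => ht x hx) hAi'
    rw [hAi, Finset.insert_erase hms] at this
    rw [this]
    exact hIb i hiI
  intro hcontra
  cases hb₀ : b₀ with
  | true =>
    have h1 : (1 : ℕ) ∈ {c : ℕ | ∃ s : Finset ℕ, ExLarge s ∧ ↑s ⊆ A '' I ∧ f s = c} := by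
      rw [hcontra]; trivial
    obtain ⟨s, hsl, hss, hfs⟩ := h1
    have := key s hsl hss
    rw [hb₀] at this
    have : f s = 0 := of_decide_eq_true this
    omega
  | false =>
    have h0 : (0 : ℕ) ∈ {c : ℕ | ∃ s : Finset ℕ, ExLarge s ∧ ↑s ⊆ A '' I ∧ f s = c} := by
      rw [hcontra]; trivial
    obtain ⟨s, hsl, hss, hfs⟩ := h0
    have := key s hsl hss
    rw [hb₀] at this
    exact absurd hfs (of_decide_eq_false this)
end

section
/- For every coloring f : [ℕ]^{!ω} → ℕ there exists an infinite set X ⊆ ℕ such that the set of colors ℕ \ f([X]^{!ω}) omitted on X is infinite. -/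
open Classical in
/-- infinite pigeonhole on ℕ -/
lemma fiber_infinite {c : ℕ → ℕ} {N : ℕ} (h : ∀ n, c n ≤ N) :
    ∃ v, {n | c n = v}.Infinite := by
  by_contra h'
  push_neg at h'
  have hsub : (Set.univ : Set ℕ) ⊆ ⋃ v ∈ Set.Iic N, {n | c n = v} := by
    intro n _
    simp only [Set.mem_iUnion, Set.mem_Iic, Set.mem_setOf_eq]
    exact ⟨c n, h n, rfl⟩
  exact Set.infinite_univ (((Set.finite_Iic N).biUnion fun v _ => h' v).subset hsub)

/-- Infinite Ramsey theorem, with colors `≤ N`. -/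
theorem myRamsey : ∀ (a : ℕ) (g : Finset ℕ → ℕ) (N : ℕ), (∀ t, g t ≤ N) →
    ∀ (Y : Set ℕ), Y.Infinite → ∃ H, H ⊆ Y ∧ H.Infinite ∧ ∃ v,
      ∀ t : Finset ℕ, ↑t ⊆ H → t.card = a → g t = v := by
  intro a
  induction a with
  | zero =>
    intro g N hg Y hY
    exact ⟨Y, subset_rfl, hY, g ∅, fun t _ hc => by rw [Finset.card_eq_zero.1 hc]⟩
  | succ a IH =>
    intro g N hg Y hY
    have key : ∀ Z : Set ℕ, Z.Infinite → ∃ (y : ℕ) (H : Set ℕ) (v : ℕ),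
        y ∈ Z ∧ H ⊆ Z ∧ H.Infinite ∧ (∀ z ∈ H, y < z) ∧ v ≤ N ∧
        ∀ t : Finset ℕ, ↑t ⊆ H → t.card = a → g (insert y t) = v := by
      intro Z hZ
      have hy : sInf Z ∈ Z := Nat.sInf_mem hZ.nonempty
      have hZ' : {z | z ∈ Z ∧ sInf Z < z}.Infinite := by
        refine (hZ.diff (Set.finite_Iic (sInf Z))).mono ?_
        intro z hz
        exact ⟨hz.1, lt_of_not_ge hz.2⟩
      obtain ⟨H, hHsub, hHinf, v, hv⟩ :=
        IH (fun t => g (insert (sInf Z) t)) N (fun t => hg _) _ hZ'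
      have hvN : v ≤ N := by
        obtain ⟨t, ht, htc⟩ := hHinf.exists_subset_card_eq a
        rw [← hv t ht htc]; exact hg _
      exact ⟨sInf Z, H, v, hy, fun z hz => (hHsub hz).1, hHinf,
        fun z hz => (hHsub hz).2, hvN, hv⟩
    choose yF HF vF h1 h2 h3 h4 h5 h6 using key
    let σ : ℕ → {Z : Set ℕ // Z.Infinite} := fun n =>
      n.rec ⟨Y, hY⟩ (fun _ Z => ⟨HF Z.1 Z.2, h3 Z.1 Z.2⟩)
    have hσ : ∀ n, (σ (n+1)).1 = HF (σ n).1 (σ n).2 := fun n => rfl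
    set y : ℕ → ℕ := fun n => yF (σ n).1 (σ n).2 with hydef
    set c : ℕ → ℕ := fun n => vF (σ n).1 (σ n).2 with hcdef
    have hymem : ∀ n, y n ∈ (σ n).1 := fun n => h1 _ _
    have hsub : ∀ n, (σ (n+1)).1 ⊆ (σ n).1 := fun n => h2 _ _
    have hgt : ∀ n, ∀ z ∈ (σ (n+1)).1, y n < z := fun n => h4 _ _
    have hchain : ∀ n m, n ≤ m → (σ m).1 ⊆ (σ n).1 := by
      intro n m hnm
      induction m with
      | zero =>
        have : n = 0 := Nat.le_zero.1 hnm
        subst this; exact subset_rfl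
      | succ m IHm =>
        rcases Nat.lt_or_ge n (m+1) with h | h
        · exact (hsub m).trans (IHm (by omega))
        · have : n = m + 1 := by omega
          subst this; exact subset_rfl
    have hmono : StrictMono y := by
      apply strictMono_nat_of_lt_succ
      intro n
      exact hgt n _ (hymem (n+1))
    obtain ⟨v, hI⟩ := fiber_infinite (c := c) (N := N) (fun n => h5 _ _)
    refine ⟨y '' {n | c n = v}, ?_, hI.image hmono.injective.injOn, v, ?_⟩
    · rintro z ⟨n, _, rfl⟩
      exact hchain 0 n (Nat.zero_le n) (hymem n)
    · intro t ht htc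
      have htne : t.Nonempty := by
        rw [← Finset.card_pos, htc]; omega
      have hμt : sInf ↑t ∈ t := by
        have := Nat.sInf_mem (s := (↑t : Set ℕ)) (Finset.coe_nonempty.2 htne)
        exact_mod_cast this
      obtain ⟨n, hnI, hyn⟩ := ht hμt
      have ht' : ∀ u ∈ t.erase (sInf ↑t), u ∈ (σ (n+1)).1 := by
        intro u hu
        have hut : u ∈ t := Finset.mem_of_mem_erase hu
        obtain ⟨m, _, hym⟩ := ht hut
        have hlt : sInf ↑t < u := by
          have hle : sInf ↑t ≤ u := Nat.sInf_le (by exact_mod_cast hut)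
          have : u ≠ sInf ↑t := Finset.ne_of_mem_erase hu
          omega
        have : n < m := by
          by_contra hc
          push_neg at hc
          have := hmono.monotone hc
          rw [hym, hyn] at this
          omega
        exact hchain (n+1) m this (hym ▸ hymem m)
      have hcard : (t.erase (sInf ↑t)).card = a := by
        rw [Finset.card_erase_of_mem hμt, htc]; omega
      have hgy : g (insert (y n) (t.erase (sInf ↑t))) = c n :=
        h6 (σ n).1 (σ n).2 (t.erase (sInf ↑t)) (fun u hu => ht' u hu) hcard
      rw [hyn, Finset.insert_erase hμt] at hgy
      rw [hgy]
      exact hnI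

/-- truncation bound used at stage `m` -/
def Nb (m : ℕ) : ℕ := 2 ^ m + 2 * m + 2

lemma Nb_mono : Monotone Nb := by
  apply monotone_nat_of_le_succ
  intro n
  have : 2 ^ n ≤ 2 ^ (n+1) := Nat.pow_le_pow_right (by norm_num) (by omega)
  simp only [Nb]; omega

open Classical in
/-- simultaneous homogenization for finitely many patterns -/
lemma multiR (f : Finset ℕ → ℕ) (N : ℕ) (S : Finset (Finset ℕ)) :
    ∀ (Y : Set ℕ), Y.Infinite → ∃ H, H ⊆ Y ∧ H.Infinite ∧
      ∀ F ∈ S, ∃ v, ∀ t : Finset ℕ, ↑t ⊆ H → t.card = 1 + sInf ↑F - F.card →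
        min (f (F ∪ t)) N = v := by
  induction S using Finset.induction_on with
  | empty => intro Y hY; exact ⟨Y, subset_rfl, hY, by simp⟩
  | @insert F₀ S hF₀ IH =>
    intro Y hY
    obtain ⟨H₁, h1, h2, v₀, hv₀⟩ :=
      myRamsey (1 + sInf ↑F₀ - F₀.card) (fun t => min (f (F₀ ∪ t)) N) N
        (fun t => min_le_right _ _) Y hY
    obtain ⟨H, hH1, hHinf, hIH⟩ := IH H₁ h2
    refine ⟨H, hH1.trans h1, hHinf, ?_⟩
    intro F hFmem
    rcases Finset.mem_insert.1 hFmem with rfl | hFS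
    · exact ⟨v₀, fun t ht hc => hv₀ t (ht.trans hH1) hc⟩
    · exact hIH F hFS

open Classical in
lemma exists_construction (f : Finset ℕ → ℕ) :
    ∃ (x : ℕ → ℕ) (v : ℕ → Finset ℕ → ℕ), StrictMono x ∧
      ∀ (m : ℕ) (s : Finset ℕ), ExLarge s → ↑s ⊆ Set.range x →
        sInf (↑s : Set ℕ) ∈ (Finset.range m).image x →
        min (f s) (Nb m) = v m (s ∩ (Finset.range m).image x) := by
  have key : ∀ q : {q : Finset ℕ × Set ℕ // q.2.Infinite ∧ ∀ p ∈ q.1, ∀ y ∈ q.2, p < y},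
      ∃ (x0 : ℕ) (q' : {q : Finset ℕ × Set ℕ // q.2.Infinite ∧ ∀ p ∈ q.1, ∀ y ∈ q.2, p < y}),
      q'.1.1 = insert x0 q.1.1 ∧ x0 ∈ q.1.2 ∧ q'.1.2 ⊆ q.1.2 ∧ (∀ y ∈ q'.1.2, x0 < y) ∧
      ∀ F ∈ q.1.1.powerset, ∃ u, ∀ t : Finset ℕ, ↑t ⊆ insert x0 q'.1.2 →
        t.card = 1 + sInf (↑F : Set ℕ) - F.card → min (f (F ∪ t)) (Nb q.1.1.card) = u := by
    rintro ⟨⟨P, Y⟩, hYinf, hPY⟩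
    obtain ⟨H, hHY, hHinf, hH⟩ := multiR f (Nb P.card) P.powerset Y hYinf
    have hx0H : sInf H ∈ H := Nat.sInf_mem hHinf.nonempty
    set x0 := sInf H with hx0
    have hY'inf : {y | y ∈ H ∧ x0 < y}.Infinite :=
      (hHinf.diff (Set.finite_Iic x0)).mono (fun y hy => ⟨hy.1, lt_of_not_ge hy.2⟩)
    have hsubH : (insert x0 {y | y ∈ H ∧ x0 < y} : Set ℕ) ⊆ H := by
      rintro z (rfl | hz)
      · exact hx0H
      · exact hz.1
    refine ⟨x0, ⟨(insert x0 P, {y | y ∈ H ∧ x0 < y}), hY'inf, ?_⟩, rfl, hHY hx0H,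
      fun y hy => hHY hy.1, fun y hy => hy.2, ?_⟩
    · intro p hp y hy
      rcases Finset.mem_insert.1 hp with rfl | hp
      · exact hy.2
      · exact hPY p hp y (hHY hy.1)
    · intro F hF
      obtain ⟨u, hu⟩ := hH F hF
      exact ⟨u, fun t ht hc => hu t (ht.trans hsubH) hc⟩
  choose x0F nextF hP hmem hsub hlt hhom using key
  let q0 : {q : Finset ℕ × Set ℕ // q.2.Infinite ∧ ∀ p ∈ q.1, ∀ y ∈ q.2, p < y} :=
    ⟨(∅, Set.univ), Set.infinite_univ, by simp⟩
  let σ : ℕ → {q : Finset ℕ × Set ℕ // q.2.Infinite ∧ ∀ p ∈ q.1, ∀ y ∈ q.2, p < y} :=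
    fun n => n.rec q0 (fun _ q => nextF q)
  set x : ℕ → ℕ := fun n => x0F (σ n) with hxdef
  have hxmem : ∀ m, x m ∈ (σ m).1.2 := fun m => hmem (σ m)
  have hYchain : ∀ m, (σ (m+1)).1.2 ⊆ (σ m).1.2 := fun m => hsub (σ m)
  have hYle : ∀ n m, n ≤ m → (σ m).1.2 ⊆ (σ n).1.2 := by
    intro n m hnm
    induction m with
    | zero =>
      have : n = 0 := Nat.le_zero.1 hnm
      subst this; exact subset_rfl
    | succ m IHm =>
      rcases Nat.lt_or_ge n (m+1) with h | h
      · exact (hYchain m).trans (IHm (by omega))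
      · have : n = m + 1 := by omega
        subst this; exact subset_rfl
  have hxlt : ∀ m, ∀ y ∈ (σ (m+1)).1.2, x m < y := fun m => hlt (σ m)
  have hxmono : StrictMono x := strictMono_nat_of_lt_succ fun n => hxlt n _ (hxmem (n+1))
  have hPm : ∀ m, (σ m).1.1 = (Finset.range m).image x := by
    intro m
    induction m with
    | zero => simp [σ, q0]
    | succ m IHm =>
      have h1 : (σ (m+1)).1.1 = insert (x m) (σ m).1.1 := hP (σ m)
      rw [h1, IHm, Finset.range_add_one, Finset.image_insert]
  have hcard : ∀ m, (σ m).1.1.card = m := by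
    intro m
    rw [hPm m, Finset.card_image_of_injective _ hxmono.injective, Finset.card_range]
  have hD : ∀ m j, m ≤ j → x j ∈ insert (x m) ((σ (m+1)).1.2) := by
    intro m j h
    rcases eq_or_lt_of_le h with rfl | h
    · exact Set.mem_insert _ _
    · exact Set.mem_insert_of_mem _ (hYle (m+1) j h (hxmem j))
  have hv0 : ∀ (m : ℕ) (F : Finset ℕ), ∃ u, F ∈ (σ m).1.1.powerset →
      ∀ t : Finset ℕ, ↑t ⊆ insert (x m) ((σ (m+1)).1.2) →
      t.card = 1 + sInf (↑F : Set ℕ) - F.card → min (f (F ∪ t)) (Nb m) = u := by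
    intro m F
    by_cases h : F ∈ (σ m).1.1.powerset
    · obtain ⟨u, hu⟩ := hhom (σ m) F h
      refine ⟨u, fun _ t ht hc => ?_⟩
      have h2 := hu t ht hc
      rw [hcard m] at h2
      exact h2
    · exact ⟨0, fun h' => absurd h' h⟩
  choose v hv using hv0
  refine ⟨x, v, hxmono, ?_⟩
  intro m s hsL hsX hμ
  obtain ⟨hsne, hscard⟩ := hsL
  set μ := sInf (↑s : Set ℕ) with hμdef
  have hμs : μ ∈ s := by
    have := Nat.sInf_mem (s := (↑s : Set ℕ)) (Finset.coe_nonempty.2 hsne)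
    exact_mod_cast this
  set P : Finset ℕ := (Finset.range m).image x with hPdef
  set F := s ∩ P with hFdef
  set t := s \ P with htdef
  have hFP : F ∈ (σ m).1.1.powerset := by
    rw [hPm m]; exact Finset.mem_powerset.2 Finset.inter_subset_right
  have hFs : F ⊆ s := Finset.inter_subset_left
  have hμF : μ ∈ F := Finset.mem_inter.2 ⟨hμs, hμ⟩
  have hsInfF : sInf (↑F : Set ℕ) = μ := by
    apply le_antisymm (Nat.sInf_le (by exact_mod_cast hμF))
    have h1 : sInf (↑F : Set ℕ) ∈ F := by
      have := Nat.sInf_mem (s := (↑F : Set ℕ)) ⟨μ, by exact_mod_cast hμF⟩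
      exact_mod_cast this
    exact Nat.sInf_le (by exact_mod_cast hFs h1)
  have hcardt : t.card = 1 + sInf (↑F : Set ℕ) - F.card := by
    have h2 : t.card + F.card = s.card := Finset.card_sdiff_add_card_inter s P
    have h3 : F.card ≤ s.card := Finset.card_le_card hFs
    rw [hsInfF]
    omega
  have hFt : F ∪ t = s := by
    ext u
    simp only [hFdef, htdef, Finset.mem_union, Finset.mem_inter, Finset.mem_sdiff]
    tauto
  have htD : (↑t : Set ℕ) ⊆ insert (x m) ((σ (m+1)).1.2) := by
    intro u hu
    have hu' : u ∈ t := by exact_mod_cast hu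
    have hus : u ∈ s := (Finset.mem_sdiff.1 hu').1
    have hup : u ∉ P := (Finset.mem_sdiff.1 hu').2
    obtain ⟨j, rfl⟩ := hsX (by exact_mod_cast hus)
    have hjm : m ≤ j := by
      by_contra h
      push_neg at h
      exact hup (Finset.mem_image.2 ⟨j, Finset.mem_range.2 h, rfl⟩)
    exact hD m j hjm
  have hfin := hv m F hFP t htD hcardt
  rw [hFt] at hfin
  exact hfin

/-- for every coloring `f : [ℕ]^{!ω} → ℕ` there is an infinite
`X ⊆ ℕ` omitting infinitely many colors on `[X]^{!ω}`. -/
theorem stmt8 (f : Finset ℕ → ℕ) :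
    ∃ X : Set ℕ, X.Infinite ∧
      {c : ℕ | ∀ s : Finset ℕ, ExLarge s → ↑s ⊆ X → f s ≠ c}.Infinite := by
  classical
  obtain ⟨x, v, hx, hmain⟩ := exists_construction f
  set w : ℕ → ℕ := fun i => v (i+1) {x i} with hwdef
  -- L2 : sets with minimum x i
  have hL2 : ∀ (s : Finset ℕ) (i : ℕ), ExLarge s → ↑s ⊆ Set.range x →
      sInf (↑s : Set ℕ) = x i → min (f s) (Nb (i+1)) = w i := by
    intro s i hsL hsX hμ
    have hμs : sInf (↑s : Set ℕ) ∈ s := by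
      have := Nat.sInf_mem (s := (↑s : Set ℕ)) (Finset.coe_nonempty.2 hsL.1)
      exact_mod_cast this
    have hmem : sInf (↑s : Set ℕ) ∈ (Finset.range (i+1)).image x := by
      rw [hμ]
      exact Finset.mem_image.2 ⟨i, Finset.mem_range.2 (Nat.lt_succ_self i), rfl⟩
    have hmn := hmain (i+1) s hsL hsX hmem
    have hinter : s ∩ (Finset.range (i+1)).image x = {x i} := by
      ext u
      simp only [Finset.mem_inter, Finset.mem_image, Finset.mem_range, Finset.mem_singleton]
      constructor
      · rintro ⟨hus, j, hj, rfl⟩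
        have h1 : x i ≤ x j := by
          rw [← hμ]
          exact Nat.sInf_le (by exact_mod_cast hus)
        have h2 : i ≤ j := by
          by_contra h
          push_neg at h
          exact absurd h1 (not_le.2 (hx h))
        have : j = i := by omega
        rw [this]
      · rintro rfl
        exact ⟨hμ ▸ hμs, i, Nat.lt_succ_self i, rfl⟩
    rw [hinter] at hmn
    exact hmn
  -- the counting core
  have finalC : ∀ (I : Set ℕ), I.Infinite → ∀ (Wm : ℕ → Finset ℕ),
      (∀ m, (Wm m).card ≤ m + 1) →
      (∀ m i (s : Finset ℕ), i ∈ I → m ≤ i → ExLarge s → ↑s ⊆ x '' I →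
        sInf (↑s : Set ℕ) = x i → f s < Nb m → f s ∈ Wm m) →
      ∃ X : Set ℕ, X.Infinite ∧
        {c : ℕ | ∀ s : Finset ℕ, ExLarge s → ↑s ⊆ X → f s ≠ c}.Infinite := by
    intro I hI Wm hWcard hbig
    refine ⟨x '' I, hI.image hx.injective.injOn, ?_⟩
    by_contra hfin
    rw [Set.not_infinite] at hfin
    set m := hfin.toFinset.card with hmdef
    have hcover : Finset.range (Nb m) ⊆
        (hfin.toFinset ∪ ((Finset.range m).image x).powerset.image (v m)) ∪ Wm m := by
      intro c hc
      have hcN : c < Nb m := Finset.mem_range.1 hc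
      simp only [Finset.mem_union]
      by_cases hΩ : ∀ s : Finset ℕ, ExLarge s → ↑s ⊆ x '' I → f s ≠ c
      · exact Or.inl (Or.inl ((Set.Finite.mem_toFinset hfin).2 hΩ))
      · push_neg at hΩ
        obtain ⟨s, hsL, hsX, hfs⟩ := hΩ
        have hμs : sInf (↑s : Set ℕ) ∈ (↑s : Set ℕ) :=
          Nat.sInf_mem (Finset.coe_nonempty.2 hsL.1)
        obtain ⟨i, hiI, hxi⟩ := hsX hμs
        have hsrange : (↑s : Set ℕ) ⊆ Set.range x :=
          hsX.trans (Set.image_subset_range x I)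
        rcases Nat.lt_or_ge i m with him | him
        · -- small minimum: value in Vs m
          have hmemP : sInf (↑s : Set ℕ) ∈ (Finset.range m).image x :=
            Finset.mem_image.2 ⟨i, Finset.mem_range.2 him, hxi⟩
          have h1 := hmain m s hsL hsrange hmemP
          rw [min_eq_left (by omega : f s ≤ Nb m)] at h1
          refine Or.inl (Or.inr (Finset.mem_image.2
            ⟨s ∩ (Finset.range m).image x,
              Finset.mem_powerset.2 Finset.inter_subset_right, ?_⟩))
          rw [← h1, hfs]
        · -- large minimum
          have h1 := hL2 s i hsL hsrange hxi.symm
          have hle : Nb m ≤ Nb (i+1) := Nb_mono (by omega)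
          rw [min_eq_left (by omega : f s ≤ Nb (i+1))] at h1
          have := hbig m i s hiI him hsL hsX hxi.symm (by omega)
          rw [hfs] at this
          exact Or.inr this
    have hVs : (((Finset.range m).image x).powerset.image (v m)).card ≤ 2 ^ m := by
      calc (((Finset.range m).image x).powerset.image (v m)).card
          ≤ ((Finset.range m).image x).powerset.card := Finset.card_image_le
        _ = 2 ^ ((Finset.range m).image x).card := Finset.card_powerset _
        _ ≤ 2 ^ m := Nat.pow_le_pow_right (by norm_num)
            (le_trans Finset.card_image_le (by simp))
    have hbound : Nb m ≤ hfin.toFinset.card + 2 ^ m + (m + 1) := by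
      calc Nb m = (Finset.range (Nb m)).card := (Finset.card_range _).symm
        _ ≤ ((hfin.toFinset ∪ ((Finset.range m).image x).powerset.image (v m)) ∪ Wm m).card :=
            Finset.card_le_card hcover
        _ ≤ (hfin.toFinset ∪ ((Finset.range m).image x).powerset.image (v m)).card
            + (Wm m).card := Finset.card_union_le _ _
        _ ≤ hfin.toFinset.card + (((Finset.range m).image x).powerset.image (v m)).card
            + (Wm m).card := by
              have := Finset.card_union_le hfin.toFinset
                (((Finset.range m).image x).powerset.image (v m))
              omega
        _ ≤ hfin.toFinset.card + 2 ^ m + (m + 1) := by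
              have := hWcard m
              omega
    have : Nb m = 2 ^ m + 2 * m + 2 := rfl
    omega
  -- dichotomy on the sequence w
  by_cases hB : ∃ ω, {i | w i = ω}.Infinite
  · obtain ⟨ω, hI⟩ := hB
    refine finalC {i | w i = ω} hI (fun _ => {ω}) (by simp) ?_
    intro m i s hiI him hsL hsX hμ hfN
    have h1 := hL2 s i hsL (hsX.trans (Set.image_subset_range _ _)) hμ
    have hle : Nb m ≤ Nb (i+1) := Nb_mono (by omega)
    rw [min_eq_left (by omega : f s ≤ Nb (i+1))] at h1
    have : w i = ω := hiI
    rw [h1, this]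
    exact Finset.mem_singleton_self _
  · push_neg at hB
    have hfinb : ∀ b, {i | w i < b}.Finite := by
      intro b
      have hsub : {i | w i < b} ⊆ ⋃ u ∈ Set.Iio b, {i | w i = u} := by
        intro i hi
        simp only [Set.mem_iUnion, Set.mem_Iio, Set.mem_setOf_eq]
        exact ⟨w i, hi, rfl⟩
      exact (((Set.finite_Iio b).biUnion fun u _ => hB u).subset hsub)
    have hstep : ∀ n b : ℕ, ∃ i, n ≤ i ∧ b ≤ w i := by
      intro n b
      have hinf : {i | b ≤ w i}.Infinite := by
        by_contra h
        rw [Set.not_infinite] at h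
        have huniv : (Set.univ : Set ℕ) ⊆ {i | w i < b} ∪ {i | b ≤ w i} := by
          intro i _
          rcases Nat.lt_or_ge (w i) b with h' | h'
          · exact Or.inl h'
          · exact Or.inr h'
        exact Set.infinite_univ (((hfinb b).union h).subset huniv)
      obtain ⟨i, hi, hni⟩ := hinf.exists_gt n
      exact ⟨i, le_of_lt hni, hi⟩
    let ii : ℕ → ℕ := fun j =>
      j.rec (hstep 0 (Nb 0)).choose (fun j prev => (hstep (prev+1) (Nb (j+1))).choose)
    have hiiw : ∀ j, Nb j ≤ w (ii j) := by
      intro j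
      cases j with
      | zero => exact (hstep 0 (Nb 0)).choose_spec.2
      | succ j => exact (hstep (ii j + 1) (Nb (j+1))).choose_spec.2
    have hiimono : StrictMono ii := by
      apply strictMono_nat_of_lt_succ
      intro j
      have h1 : ii j + 1 ≤ ii (j+1) := (hstep (ii j + 1) (Nb (j+1))).choose_spec.1
      omega
    refine finalC (Set.range ii) (Set.infinite_range_of_injective hiimono.injective)
      (fun m => (Finset.range m).image (fun j => w (ii j))) ?_ ?_
    · intro m
      exact le_trans Finset.card_image_le (by simp)
    · intro m i s hiI him hsL hsX hμ hfN
      obtain ⟨j, rfl⟩ := hiI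
      have h1 := hL2 s (ii j) hsL (hsX.trans (Set.image_subset_range _ _)) hμ
      have hle : Nb m ≤ Nb (ii j + 1) := Nb_mono (by omega)
      rw [min_eq_left (by omega : f s ≤ Nb (ii j + 1))] at h1
      have hjm : j < m := by
        by_contra h
        push_neg at h
        have h2 : Nb m ≤ Nb j := Nb_mono h
        have h3 := hiiw j
        omega
      rw [h1]
      exact Finset.mem_image.2 ⟨j, Finset.mem_range.2 hjm, rfl⟩
end

section
/- For every k ≥ 1 and every k-bounded coloring f : [ℕ]^{!ω} → ℕ, there exists a coloring g : [ℕ]^{!ω} → {0, 1, …, k−1} such that every infinite set H ⊆ ℕ on which g is constant on [H]^{!ω} is a rainbow for f. -/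
/-- `f : [ℕ]^{!ω} → ℕ` is `k`-bounded: every color has at most `k`
exactly ω-large preimages. -/
def KBoundedL (k : ℕ) (f : Finset ℕ → ℕ) : Prop :=
  ∀ c : ℕ, ∃ T : Finset (Finset ℕ), T.card ≤ k ∧
    ∀ u : Finset ℕ, ExLarge u → f u = c → u ∈ T

/-- `H` is a rainbow for `f : [ℕ]^{!ω} → ℕ`: `f` is injective on `[H]^{!ω}`. -/
def RainbowL (f : Finset ℕ → ℕ) (H : Set ℕ) : Prop :=
  ∀ s t : Finset ℕ, ExLarge s → ExLarge t → ↑s ⊆ H → ↑t ⊆ H → f s = f t → s = t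

/-!
Each color class of `f` on `[ℕ]^{!ω}` lies in a finite set of at most `k` sets, which can be
numbered injectively by `Fin k`; let `g s` be the number of `s` within its own class. Two distinct
sets with the same `f`-color then get distinct `g`-colors, so no `g`-homogeneous set carries them
both.
-/

theorem Finset.exists_fin_injOn {α : Type*} {k : ℕ} [NeZero k] (T : Finset α) (h : T.card ≤ k) :
    ∃ e : α → Fin k, Set.InjOn e T :=
  Set.exists_injOn_iff_injective.2
    ⟨Fin.castLE h ∘ T.equivFin, (Fin.castLE_injective h).comp T.equivFin.injective⟩

/-- for every `k ≥ 1` and `k`-bounded `f : [ℕ]^{!ω} → ℕ` there is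
a coloring `g : [ℕ]^{!ω} → k` such that every infinite set homogeneous for `g`
is a rainbow for `f`. -/
theorem stmt9 (k : ℕ) (hk : 1 ≤ k) (f : Finset ℕ → ℕ) (hf : KBoundedL k f) :
    ∃ g : Finset ℕ → Fin k,
      ∀ H : Set ℕ, H.Infinite →
        (∃ c : Fin k, ∀ s : Finset ℕ, ExLarge s → ↑s ⊆ H → g s = c) →
        RainbowL f H := by
  have : NeZero k := ⟨by omega⟩
  choose T hT_card hT_mem using hf
  choose e he using fun c => (T c).exists_fin_injOn (hT_card c)
  refine ⟨fun s => e (f s) s, ?_⟩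
  rintro H - ⟨c, hc⟩ s t hs ht hsH htH hst
  have hgst : e (f s) s = e (f t) t := (hc s hs hsH).trans (hc t ht htH).symm
  rw [← hst] at hgst
  exact he (f s) (hT_mem _ s hs rfl) (hT_mem _ t ht hst.symm) hgst
end

section
/- For every coloring f : [ℕ]^{!ω} → ℕ there exists a 2-bounded coloring g of the exactly (ω+1)-large subsets of ℕ into ℕ such that for every infinite set H ⊆ ℕ that is a rainbow for g and all x < y in H, the set H \ [0, y] is thin for f for the color ⟨x, y⟩, where ⟨·,·⟩ is a fixed pairing bijection ℕ × ℕ → ℕ. -/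
/-- A finite set `s ⊆ ℕ` is exactly (ω+1)-large if `s \ {min s}` is exactly
ω-large. -/
def ExLarge1 (s : Finset ℕ) : Prop :=
  s.Nonempty ∧ ExLarge (s.erase (sInf (↑s : Set ℕ)))

/-- `g` is 2-bounded on the exactly (ω+1)-large sets. -/
def TwoBounded1 (g : Finset ℕ → ℕ) : Prop :=
  ∀ c : ℕ, ∃ T : Finset (Finset ℕ), T.card ≤ 2 ∧
    ∀ u : Finset ℕ, ExLarge1 u → g u = c → u ∈ T

/-- `H` is a rainbow for `g`: `g` is injective on the exactly (ω+1)-large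
subsets of `H`. -/
def Rainbow1 (g : Finset ℕ → ℕ) (H : Set ℕ) : Prop :=
  ∀ s t : Finset ℕ, ExLarge1 s → ExLarge1 t → ↑s ⊆ H → ↑t ⊆ H → g s = g t → s = t

lemma twoBounded1_encode_comp {β : Type*} [Encodable β] (k : Finset ℕ → β)
    (T : β → Finset (Finset ℕ)) (hT : ∀ b, (T b).card ≤ 2)
    (hk : ∀ u, ExLarge1 u → u ∈ T (k u)) : TwoBounded1 (Encodable.encode ∘ k) := by
  intro c
  refine ⟨(Encodable.decode (α := β) c).elim ∅ T, ?_, ?_⟩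
  · cases Encodable.decode (α := β) c <;> simp [hT]
  · rintro u hu rfl
    simpa [Encodable.encodek] using hk u hu

lemma sInf_coe_insert_of_forall_lt {a : ℕ} {s : Finset ℕ} (h : ∀ b ∈ s, a < b) :
    sInf (↑(insert a s) : Set ℕ) = a :=
  IsLeast.csInf_eq ⟨by simp, by simpa [lowerBounds] using fun b hb => (h b hb).le⟩

lemma insert_sInf_erase_sInf {u : Finset ℕ} (hu : u.Nonempty) :
    insert (sInf (↑u : Set ℕ)) (u.erase (sInf (↑u : Set ℕ))) = u :=
  Finset.insert_erase (by exact_mod_cast Nat.sInf_mem (Finset.coe_nonempty.mpr hu))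

lemma exLarge1_insert {a : ℕ} {s : Finset ℕ} (h : ∀ b ∈ s, a < b) (hs : ExLarge s) :
    ExLarge1 (insert a s) := by
  refine ⟨Finset.insert_nonempty _ _, ?_⟩
  rwa [sInf_coe_insert_of_forall_lt h, Finset.erase_insert fun ha => lt_irrefl a (h a ha)]

noncomputable def pairColoring (f : Finset ℕ → ℕ) (u : Finset ℕ) : Finset ℕ ⊕ Finset ℕ :=
  let a := sInf (↑u : Set ℕ)
  let s := u.erase a
  if a = (f s).unpair.1 ∨ a = (f s).unpair.2 then .inl s else .inr u

lemma pairColoring_insert {f : Finset ℕ → ℕ} {a : ℕ} {s : Finset ℕ} (h : ∀ b ∈ s, a < b)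
    (ha : a = (f s).unpair.1 ∨ a = (f s).unpair.2) : pairColoring f (insert a s) = .inl s := by
  simp only [pairColoring, sInf_coe_insert_of_forall_lt h,
    Finset.erase_insert fun ha' => lt_irrefl a (h a ha'), if_pos ha]

lemma twoBounded1_pairColoring (f : Finset ℕ → ℕ) :
    TwoBounded1 (Encodable.encode ∘ pairColoring f) := by
  refine twoBounded1_encode_comp _
    (Sum.elim (fun s => {insert (f s).unpair.1 s, insert (f s).unpair.2 s}) singleton)
    (fun b => ?_) (fun u hu => ?_)
  · rcases b with s | u
    · exact (Finset.card_insert_le _ _).trans (by simp)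
    · simp
  · simp only [pairColoring]
    split_ifs with hmin
    · rcases hmin with hmin | hmin <;>
        simp [← hmin, insert_sInf_erase_sInf hu.1]
    · simp

/-- for every `f : [ℕ]^{!ω} → ℕ` there is a 2-bounded coloring
`g` of the exactly (ω+1)-large sets such that for every infinite `g`-rainbow
`H` and all `x < y` in `H`, the set `H \ [0, y]` is `f`-thin for the color
`⟨x, y⟩` (with `Nat.pair` as the fixed pairing bijection). -/
theorem stmt13 (f : Finset ℕ → ℕ) :
    ∃ g : Finset ℕ → ℕ, TwoBounded1 g ∧
      ∀ H : Set ℕ, H.Infinite → Rainbow1 g H →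
        ∀ x y : ℕ, x ∈ H → y ∈ H → x < y →
          ∀ s : Finset ℕ, ExLarge s → ↑s ⊆ H \ Set.Iic y → f s ≠ Nat.pair x y := by
  refine ⟨Encodable.encode ∘ pairColoring f, twoBounded1_pairColoring f, ?_⟩
  intro H _ hH x y hx hy hxy s hs hsH hfs
  have hy_lt : ∀ b ∈ s, y < b := fun b hb => not_le.mp (hsH hb).2
  have hx_lt : ∀ b ∈ s, x < b := fun b hb => hxy.trans (hy_lt b hb)
  have hsub : ∀ a ∈ H, (↑(insert a s) : Set ℕ) ⊆ H := fun a ha => by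
    rw [Finset.coe_insert]
    exact Set.insert_subset ha fun b hb => (hsH hb).1
  have hsame : insert x s = insert y s :=
    hH _ _ (exLarge1_insert hx_lt hs) (exLarge1_insert hy_lt hs) (hsub x hx) (hsub y hy) <| by
      rw [Function.comp_apply, Function.comp_apply,
        pairColoring_insert (f := f) hx_lt (by simp [hfs]),
        pairColoring_insert (f := f) hy_lt (by simp [hfs])]
  exact hxy.ne ((Finset.insert_inj fun hxs => lt_irrefl x (hx_lt x hxs)).mp hsame)
end

section
/- (Progressive Free Set Theorem) For every function h : ℕ → ℕ and every h-constrained progressive coloring f : [ℕ]^{≤h(·)} → [ℕ]^{<ω}, there exists an infinite set G ⊆ ℕ that is free for f, i.e., for every s ∈ [G]^{≤h(·)}, f(s) ∩ G ⊆ s. -/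
/-!
Fix a nonprincipal ultrafilter `𝒰` on `ℕ` and let `Lₖ t` be the `k`-fold `𝒰`-limit of `f`:
`L₀ t = f t` and `b ∈ Lₖ₊₁ t ↔ ∀ᶠ x in 𝒰, b ∈ Lₖ (t ∪ {x})`. A limit of sets of size `≤ n` has
size `≤ n`, so `Lₖ t` is finite while `|t| + k ≤ h (min t)`. Build `G` one point at a time,
keeping each finite stage `C` free for all the `Lₖ`, not only for `f = L₀`. A new point `x` has
to avoid the finitely many finite sets `Lₖ t` with `t ⊆ C`, and must not put a `b ∈ C \ t` into
`Lₖ (t ∪ {x})`; as `b ∉ Lₖ₊₁ t`, both hold for `𝒰`-almost every `x`. Progressiveness settles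
`t = {x}`, whose colors all lie above `x`, hence outside `C`.
-/

open Filter

/-- `s ∈ [ℕ]^{≤h(·)}`: `s` is nonempty and `|s| ≤ h (min s)`. -/
def InDom (h : ℕ → ℕ) (s : Finset ℕ) : Prop :=
  s.Nonempty ∧ s.card ≤ h (sInf (↑s : Set ℕ))

theorem Set.encard_setOf_eventually_mem_le {ι α : Type*} {l : Filter ι} [l.NeBot]
    {S : ι → Set α} {n : ℕ} (hS : ∀ᶠ i in l, (S i).encard ≤ n) :
    {a | ∀ᶠ i in l, a ∈ S i}.encard ≤ n := by
  by_contra! hlt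
  obtain ⟨F, hFS, hFcard⟩ := Set.exists_subset_encard_eq (Order.add_one_le_of_lt hlt)
  have hF : F.Finite := Set.finite_of_encard_eq_coe (k := n + 1) (by simpa using hFcard)
  obtain ⟨i, hi, hFi⟩ := (hS.and ((eventually_all_finite hF).2 hFS)).exists
  have := (Set.encard_le_encard hFi).trans hi
  rw [hFcard] at this
  norm_cast at this
  omega

theorem Filter.eventually_forall_subset_forall_le {α β : Type*} {l : Filter α} {C : Finset β}
    {N : Finset β → ℕ} {p : Finset β → ℕ → α → Prop}
    (hp : ∀ t ⊆ C, ∀ k ≤ N t, ∀ᶠ x in l, p t k x) :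
    ∀ᶠ x in l, ∀ t ⊆ C, ∀ k ≤ N t, p t k x := by
  have := (eventually_all_finset C.powerset).2 fun t ht =>
    (eventually_all_finite (Set.finite_Iic (N t))).2 fun k hk => hp t (Finset.mem_powerset.1 ht) k hk
  filter_upwards [this] with x hx t ht k hk using hx t (Finset.mem_powerset.2 ht) k hk

theorem exists_infinite_of_exists_insert {α : Type*} [DecidableEq α] {P : Finset α → Prop} (h₀ : P ∅)
    (hstep : ∀ C, P C → ∃ x ∉ C, P (insert x C)) :
    ∃ G : Set α, G.Infinite ∧ ∀ F : Finset α, ↑F ⊆ G → ∃ C, P C ∧ F ⊆ C := by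
  choose next hnext hP using fun C : {C // P C} => hstep C C.2
  let grow : {C // P C} → {C // P C} := fun C => ⟨insert (next C) C, hP C⟩
  let seq : ℕ → Finset α := fun n => (grow^[n] ⟨∅, h₀⟩).1
  have seq_succ (n : ℕ) : seq (n + 1) = insert (next (grow^[n] ⟨∅, h₀⟩)) (seq n) :=
    congrArg Subtype.val (Function.iterate_succ_apply' grow n _)
  have seq_mono : Monotone seq :=
    monotone_nat_of_le_succ fun n => (seq_succ n).symm ▸ Finset.subset_insert _ _
  have card_seq (n : ℕ) : (seq n).card = n := by
    induction n with
    | zero => rfl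
    | succ n ih => rw [seq_succ, Finset.card_insert_of_notMem (hnext _), ih]
  refine ⟨⋃ n, ↑(seq n), fun hfin => ?_, fun F hF => ?_⟩
  · have := Set.ncard_le_ncard (Set.subset_iUnion (fun n => (↑(seq n) : Set α))
      ((⋃ n, (↑(seq n) : Set α)).ncard + 1)) hfin
    rw [Set.ncard_coe_finset, card_seq] at this
    omega
  · obtain ⟨n, hn⟩ := (Monotone.directed_le fun _ _ hmn => Finset.coe_subset.2 (seq_mono hmn)
      ).exists_mem_subset_of_finset_subset_biUnion hF
    exact ⟨seq n, (grow^[n] ⟨∅, h₀⟩).2, Finset.coe_subset.1 hn⟩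

lemma Nat.sInf_insert_of_forall_lt {t : Finset ℕ} (ht : t.Nonempty) {x : ℕ}
    (hx : ∀ y ∈ t, y < x) : sInf (↑(insert x t) : Set ℕ) = sInf (↑t : Set ℕ) := by
  rw [Finset.coe_insert, csInf_insert (OrderBot.bddBelow _) (Finset.coe_nonempty.2 ht)]
  exact inf_eq_right.2 (hx _ (Nat.sInf_mem (Finset.coe_nonempty.2 ht))).le

lemma Nat.eventually_hyperfilter_forall_lt (t : Finset ℕ) :
    ∀ᶠ x in hyperfilter ℕ, ∀ y ∈ t, y < x :=
  (eventually_all_finset t).2 fun y _ =>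
    (eventually_gt_atTop y).filter_mono (hyperfilter_le_cofinite.trans Nat.cofinite_eq_atTop.le)

namespace ProgressiveFreeSet

variable {h : ℕ → ℕ} {f : Finset ℕ → Finset ℕ}

/-- `t` extended by any `k` points above `max t` stays in `[ℕ]^{≤h(·)}`. -/
def HasRoom (h : ℕ → ℕ) (t : Finset ℕ) (k : ℕ) : Prop :=
  t.Nonempty ∧ t.card + k ≤ h (sInf (↑t : Set ℕ))

lemma hasRoom_zero {t : Finset ℕ} : HasRoom h t 0 ↔ InDom h t := Iff.rfl

lemma HasRoom.le {t : Finset ℕ} {k : ℕ} (ht : HasRoom h t k) : k ≤ h (sInf (↑t : Set ℕ)) := by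
  have := ht.2
  omega

lemma hasRoom_insert_iff {t : Finset ℕ} (ht : t.Nonempty) {x k : ℕ} (hx : ∀ y ∈ t, y < x) :
    HasRoom h (insert x t) k ↔ HasRoom h t (k + 1) := by
  have hxt : x ∉ t := fun hxt => (hx x hxt).false
  simp only [HasRoom, Nat.sInf_insert_of_forall_lt ht hx, Finset.card_insert_of_notMem hxt,
    Finset.insert_nonempty, ht, true_and]
  omega

/-- `b ∈ iterLimit f k t` iff for `𝒰`-most `x₁`, …, for `𝒰`-most `xₖ`, `b ∈ f (t ∪ {x₁, …, xₖ})`,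
where `𝒰 = hyperfilter ℕ`. -/
noncomputable def iterLimit (f : Finset ℕ → Finset ℕ) : ℕ → Finset ℕ → Set ℕ
  | 0, t => f t
  | k + 1, t => {b | ∀ᶠ x in hyperfilter ℕ, b ∈ iterLimit f k (insert x t)}

lemma eventually_hasRoom_insert {t : Finset ℕ} {k : ℕ} (ht : HasRoom h t (k + 1)) :
    ∀ᶠ x in hyperfilter ℕ, HasRoom h (insert x t) k ∧
      sInf (↑(insert x t) : Set ℕ) = sInf (↑t : Set ℕ) :=
  (Nat.eventually_hyperfilter_forall_lt t).mono fun _ hx =>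
    ⟨(hasRoom_insert_iff ht.1 hx).2 ht, Nat.sInf_insert_of_forall_lt ht.1 hx⟩

lemma encard_iterLimit_le
    (hconstr : ∀ s : Finset ℕ, InDom h s → (f s).card ≤ h (sInf (↑s : Set ℕ))) :
    ∀ {k : ℕ} {t : Finset ℕ}, HasRoom h t k → (iterLimit f k t).encard ≤ h (sInf (↑t : Set ℕ))
  | 0, t, ht => by
    rw [iterLimit, Set.encard_coe_eq_coe_finsetCard]
    exact_mod_cast hconstr t (hasRoom_zero.1 ht)
  | _ + 1, _, ht => Set.encard_setOf_eventually_mem_le <|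
    (eventually_hasRoom_insert ht).mono fun _ ⟨hx, hinf⟩ => hinf ▸ encard_iterLimit_le hconstr hx

lemma le_of_mem_iterLimit (hprog : ∀ s : Finset ℕ, InDom h s → ∀ y ∈ f s, sInf (↑s : Set ℕ) ≤ y) :
    ∀ {k : ℕ} {t : Finset ℕ}, HasRoom h t k → ∀ b ∈ iterLimit f k t, sInf (↑t : Set ℕ) ≤ b
  | 0, t, ht, b, hb => hprog t (hasRoom_zero.1 ht) b hb
  | _ + 1, _, ht, b, hb => by
    obtain ⟨x, ⟨hx, hinf⟩, hbx⟩ := ((eventually_hasRoom_insert ht).and hb).exists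
    exact hinf ▸ le_of_mem_iterLimit hprog hx b hbx

def LimitFree (h : ℕ → ℕ) (f : Finset ℕ → Finset ℕ) (C : Finset ℕ) : Prop :=
  ∀ t ⊆ C, ∀ k, HasRoom h t k → ∀ b ∈ C, b ∈ iterLimit f k t → b ∈ t

lemma limitFree_empty (h : ℕ → ℕ) (f : Finset ℕ → Finset ℕ) : LimitFree h f ∅ :=
  fun _ ht _ hk => absurd (Finset.subset_empty.1 ht ▸ hk.1) Finset.not_nonempty_empty

lemma eventually_notMem_iterLimit
    (hconstr : ∀ s : Finset ℕ, InDom h s → (f s).card ≤ h (sInf (↑s : Set ℕ))) (C : Finset ℕ) :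
    ∀ᶠ x in hyperfilter ℕ, ∀ t ⊆ C, ∀ k, HasRoom h t k → x ∉ iterLimit f k t := by
  have := eventually_forall_subset_forall_le (C := C) (N := fun t => h (sInf (↑t : Set ℕ)))
    (p := fun t k x => HasRoom h t k → x ∉ iterLimit f k t) fun t _ k _ =>
      eventually_imp_distrib_left.2 fun hk =>
        ((Set.finite_of_encard_le_coe (encard_iterLimit_le hconstr hk)).eventually_cofinite_notMem
          ).filter_mono hyperfilter_le_cofinite
  filter_upwards [this] with x hx t ht k hk using hx t ht k hk.le hk

lemma LimitFree.eventually_notMem_iterLimit_insert {C : Finset ℕ} (hC : LimitFree h f C) :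
    ∀ᶠ x in hyperfilter ℕ, ∀ t ⊆ C, ∀ k, HasRoom h t (k + 1) →
      ∀ b ∈ C, b ∉ t → b ∉ iterLimit f k (insert x t) := by
  have := eventually_forall_subset_forall_le (C := C) (N := fun t => h (sInf (↑t : Set ℕ)))
    (p := fun t k x => HasRoom h t (k + 1) → ∀ b ∈ C, b ∉ t → b ∉ iterLimit f k (insert x t))
    fun t htC k _ => eventually_imp_distrib_left.2 fun hk => (eventually_all_finset C).2
      fun b hbC => eventually_imp_distrib_left.2 fun hbt =>
        Ultrafilter.eventually_not.2 fun hb => hbt (hC t htC (k + 1) hk b hbC hb)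
  filter_upwards [this] with x hx t ht k hk using hx t ht k ((Nat.le_succ k).trans hk.le) hk

lemma limitFree_insert (hprog : ∀ s : Finset ℕ, InDom h s → ∀ y ∈ f s, sInf (↑s : Set ℕ) ≤ y)
    {C : Finset ℕ} {x : ℕ} (hC : LimitFree h f C) (hxC : ∀ y ∈ C, y < x)
    (hx : ∀ t ⊆ C, ∀ k, HasRoom h t k → x ∉ iterLimit f k t)
    (hxb : ∀ t ⊆ C, ∀ k, HasRoom h t (k + 1) → ∀ b ∈ C, b ∉ t → b ∉ iterLimit f k (insert x t)) :
    LimitFree h f (insert x C) := by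
  intro t htC k hk b hbC hb
  rcases Finset.mem_insert.1 hbC with rfl | hbC
  · by_contra hbt
    exact hx t ((Finset.subset_insert_iff_of_notMem hbt).1 htC) k hk hb
  by_cases hxt : x ∉ t
  · exact hC t ((Finset.subset_insert_iff_of_notMem hxt).1 htC) k hk b hbC hb
  rw [not_not] at hxt
  by_contra hbt
  have ht'C : t.erase x ⊆ C := Finset.subset_insert_iff.1 htC
  have htx : insert x (t.erase x) = t := Finset.insert_erase hxt
  rcases (t.erase x).eq_empty_or_nonempty with ht'0 | ht'
  · rw [ht'0] at htx
    subst htx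
    have := le_of_mem_iterLimit hprog hk b hb
    simp only [insert_empty_eq, Finset.coe_singleton, csInf_singleton] at this
    exact (hxC b hbC).not_ge this
  · have hlt : ∀ y ∈ t.erase x, y < x := fun y hy => hxC y (ht'C hy)
    rw [← htx] at hk hb
    exact hxb _ ht'C k ((hasRoom_insert_iff ht' hlt).1 hk) b hbC
      (fun hbt' => hbt (Finset.mem_of_mem_erase hbt')) hb

lemma LimitFree.exists_insert
    (hprog : ∀ s : Finset ℕ, InDom h s → ∀ y ∈ f s, sInf (↑s : Set ℕ) ≤ y)
    (hconstr : ∀ s : Finset ℕ, InDom h s → (f s).card ≤ h (sInf (↑s : Set ℕ)))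
    {C : Finset ℕ} (hC : LimitFree h f C) : ∃ x ∉ C, LimitFree h f (insert x C) := by
  obtain ⟨x, hxC, hx, hxb⟩ := ((Nat.eventually_hyperfilter_forall_lt C).and
    ((eventually_notMem_iterLimit hconstr C).and hC.eventually_notMem_iterLimit_insert)).exists
  exact ⟨x, fun hx' => (hxC x hx').false, limitFree_insert hprog hC hxC hx hxb⟩

end ProgressiveFreeSet

open ProgressiveFreeSet in
/-- Progressive Free Set Theorem: for every `h : ℕ → ℕ` and
every `h`-constrained progressive `f : [ℕ]^{≤h(·)} → [ℕ]^{<ω}` there is an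
infinite `f`-free set `G ⊆ ℕ`. -/
theorem stmt16 (h : ℕ → ℕ) (f : Finset ℕ → Finset ℕ)
    (hprog : ∀ s : Finset ℕ, InDom h s → ∀ y ∈ f s, sInf (↑s : Set ℕ) ≤ y)
    (hconstr : ∀ s : Finset ℕ, InDom h s → (f s).card ≤ h (sInf (↑s : Set ℕ))) :
    ∃ G : Set ℕ, G.Infinite ∧
      ∀ s : Finset ℕ, InDom h s → ↑s ⊆ G → ∀ y ∈ f s, y ∈ G → y ∈ s := by
  obtain ⟨G, hGinf, hG⟩ := exists_infinite_of_exists_insert (limitFree_empty h f)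
    fun _ hC => hC.exists_insert hprog hconstr
  refine ⟨G, hGinf, fun s hs hsG y hy hyG => ?_⟩
  obtain ⟨C, hC, hsC⟩ := hG (insert y s) (by simpa [Set.insert_subset_iff] using ⟨hyG, hsG⟩)
  exact hC s ((Finset.subset_insert y s).trans hsC) 0 (hasRoom_zero.2 hs) y
    (hsC (Finset.mem_insert_self y s)) hy
end

section
/- Let B be a barrier and k ≥ 1. For every k-bounded coloring f : B → ℕ there exists a progressive coloring g : B → [ℕ]^{<ω} with |g(s)| ≤ k for every s ∈ B, such that every infinite set H ⊆ base(B) that is free for g is a rainbow for f. -/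
/-- The base of a family of finite sets: the union of its members. -/
def BarrierBase (B : Set (Finset ℕ)) : Set ℕ :=
  ⋃ s ∈ B, (↑s : Set ℕ)

/-- `s` is an initial segment of `X` under the increasing enumeration. -/
def IsInitSeg (s : Finset ℕ) (X : Set ℕ) : Prop :=
  ↑s ⊆ X ∧ ∀ x ∈ X, x ∉ s → ∀ y ∈ s, y < x

/-- `B` is a barrier: its base is infinite, every infinite subset of the base
has a member of `B` as an initial segment, and no member of `B` is a proper
subset of another. -/
def IsBarrier (B : Set (Finset ℕ)) : Prop :=
  (BarrierBase B).Infinite ∧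
  (∀ X : Set ℕ, X ⊆ BarrierBase B → X.Infinite → ∃ s ∈ B, IsInitSeg s X) ∧
  (∀ s ∈ B, ∀ t ∈ B, ¬ s ⊂ t)

/-!
Fix, for every colour `c`, a set `T c` of at most `k` members of `B` containing all those of
colour `c`. Let `g s` consist of the elements `max (t \ s)`, `t ∈ T (f s)`, that are `≥ min s`.
If `s ≠ t` in `B` have the same colour, both `t \ s` and `s \ t` are nonempty because `B` is an
antichain, and with `a = max (t \ s)`, `b = max (s \ t)` we cannot have both `a < min s` and
`b < min t`, since `min s ≤ b` and `min t ≤ a`. So, up to symmetry, `a ∈ g s ∩ t \ s`, and no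
set `H ⊇ s ∪ t` is free for `g`.
-/

open Finset

lemma Finset.sup_id_mem {α : Type*} [LinearOrder α] [OrderBot α] {s : Finset α}
    (hs : s.Nonempty) : s.sup id ∈ s := by
  simpa using Finset.sup_mem_of_nonempty (f := id) hs

noncomputable def separatingColoring (T : ℕ → Finset (Finset ℕ)) (f : Finset ℕ → ℕ)
    (s : Finset ℕ) : Finset ℕ :=
  ((T (f s)).image fun t => (t \ s).sup id).filter (sInf (↑s : Set ℕ) ≤ ·)

section separatingColoring

variable (T : ℕ → Finset (Finset ℕ)) (f : Finset ℕ → ℕ)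

lemma card_separatingColoring_le (s : Finset ℕ) :
    (separatingColoring T f s).card ≤ (T (f s)).card :=
  (card_filter_le _ _).trans card_image_le

lemma sInf_le_of_mem_separatingColoring {s : Finset ℕ} {y : ℕ}
    (hy : y ∈ separatingColoring T f s) : sInf (↑s : Set ℕ) ≤ y :=
  (mem_filter.mp hy).2

lemma sup_sdiff_mem_separatingColoring {s t : Finset ℕ} (ht : t ∈ T (f s))
    (hle : sInf (↑s : Set ℕ) ≤ (t \ s).sup id) :
    (t \ s).sup id ∈ separatingColoring T f s :=
  mem_filter.mpr ⟨mem_image_of_mem _ ht, hle⟩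

theorem eq_of_separatingColoring_free {B : Set (Finset ℕ)}
    (hB : ∀ s ∈ B, ∀ t ∈ B, ¬ s ⊂ t) (hT : ∀ s ∈ B, s ∈ T (f s)) {H : Set ℕ}
    (hfree : ∀ s ∈ B, ↑s ⊆ H → ∀ y ∈ separatingColoring T f s, y ∈ H → y ∈ s)
    {s t : Finset ℕ} (hs : s ∈ B) (ht : t ∈ B) (hsH : ↑s ⊆ H) (htH : ↑t ⊆ H)
    (hfst : f s = f t) : s = t := by
  by_contra hne
  have hts_ne : (t \ s).Nonempty :=
    sdiff_nonempty.mpr fun h => hB t ht s hs (h.lt_of_ne (Ne.symm hne))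
  have hst_ne : (s \ t).Nonempty :=
    sdiff_nonempty.mpr fun h => hB s hs t ht (h.lt_of_ne hne)
  wlog hle : sInf (↑s : Set ℕ) ≤ (t \ s).sup id generalizing s t
  · have hb := mem_sdiff.mp (sup_id_mem hst_ne)
    have ha := mem_sdiff.mp (sup_id_mem hts_ne)
    have hs_le : sInf (↑s : Set ℕ) ≤ (s \ t).sup id := Nat.sInf_le hb.1
    have ht_le : sInf (↑t : Set ℕ) ≤ (t \ s).sup id := Nat.sInf_le ha.1
    exact this ht hs htH hsH hfst.symm (Ne.symm hne) hst_ne hts_ne (by omega)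
  have ha := mem_sdiff.mp (sup_id_mem hts_ne)
  have hmem := sup_sdiff_mem_separatingColoring T f (hfst ▸ hT t ht) hle
  exact ha.2 (hfree s hs hsH _ hmem (htH ha.1))

end separatingColoring

theorem stmt17_general (B : Set (Finset ℕ)) (hB : IsBarrier B) (k : ℕ)
    (f : Finset ℕ → ℕ)
    (hf : ∀ c : ℕ, ∃ T : Finset (Finset ℕ), T.card ≤ k ∧
      ∀ s ∈ B, f s = c → s ∈ T) :
    ∃ g : Finset ℕ → Finset ℕ,
      (∀ s ∈ B, (g s).card ≤ k) ∧
      (∀ s ∈ B, ∀ y ∈ g s, sInf (↑s : Set ℕ) ≤ y) ∧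
      ∀ H : Set ℕ, H ⊆ BarrierBase B → H.Infinite →
        (∀ s ∈ B, ↑s ⊆ H → ∀ y ∈ g s, y ∈ H → y ∈ s) →
        ∀ s ∈ B, ∀ t ∈ B, ↑s ⊆ H → ↑t ⊆ H → f s = f t → s = t := by
  choose T hTcard hT using hf
  refine ⟨separatingColoring T f, fun s _ => ?_, fun s _ _ => ?_, ?_⟩
  · exact (card_separatingColoring_le T f s).trans (hTcard _)
  · exact sInf_le_of_mem_separatingColoring T f
  · intro H _ _ hfree s hs t ht hsH htH hst
    exact eq_of_separatingColoring_free T f hB.2.2 (fun s hs => hT _ s hs rfl) hfree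
      hs ht hsH htH hst

/-- for a barrier `B`, `k ≥ 1` and a `k`-bounded `f : B → ℕ`,
there is a progressive `g : B → [ℕ]^{<ω}` with `|g s| ≤ k` on `B` such that
every infinite `g`-free `H ⊆ base B` is an `f`-rainbow. -/
theorem stmt17 (B : Set (Finset ℕ)) (hB : IsBarrier B) (k : ℕ) (hk : 1 ≤ k)
    (f : Finset ℕ → ℕ)
    (hf : ∀ c : ℕ, ∃ T : Finset (Finset ℕ), T.card ≤ k ∧
      ∀ s ∈ B, f s = c → s ∈ T) :
    ∃ g : Finset ℕ → Finset ℕ,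
      (∀ s ∈ B, (g s).card ≤ k) ∧
      (∀ s ∈ B, ∀ y ∈ g s, sInf (↑s : Set ℕ) ≤ y) ∧
      ∀ H : Set ℕ, H ⊆ BarrierBase B → H.Infinite →
        (∀ s ∈ B, ↑s ⊆ H → ∀ y ∈ g s, y ∈ H → y ∈ s) →
        ∀ s ∈ B, ∀ t ∈ B, ↑s ⊆ H → ↑t ⊆ H → f s = f t → s = t :=
  stmt17_general B hB k f hf
end

section
/- Let B be a barrier with base(B) = ℕ that is ω-bounded, i.e., there exists h : ℕ → ℕ such that every s ∈ B satisfies |s| ≤ h(min s). Then for every k ≥ 1 and every k-bounded coloring f : B → ℕ, there exists an infinite set H ⊆ ℕ that is a rainbow for f. -/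
open Finset

open Finset in
lemma sInf_coe_finset (s : Finset ℕ) (hs : s.Nonempty) : sInf (↑s : Set ℕ) = s.min' hs := by
  apply le_antisymm
  · exact Nat.sInf_le (by exact_mod_cast s.min'_mem hs)
  · have h1 : sInf (↑s : Set ℕ) ∈ (↑s : Set ℕ) := Nat.sInf_mem ⟨s.min' hs, by exact_mod_cast s.min'_mem hs⟩
    exact s.min'_le _ (by exact_mod_cast h1)

open Finset in
lemma min'_union (a u : Finset ℕ) (ha : a.Nonempty) (hlt : ∀ y ∈ u, ∀ p ∈ a, p < y) :
    (a ∪ u).min' (ha.mono subset_union_left) = a.min' ha := by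
  apply le_antisymm
  · exact min'_le _ _ (mem_union_left _ (a.min'_mem ha))
  · have h1 : (a ∪ u).min' (ha.mono subset_union_left) ∈ a ∪ u := min'_mem _ _
    rcases mem_union.1 h1 with h | h
    · exact a.min'_le _ h
    · exact le_of_lt (hlt _ h _ (a.min'_mem ha))

/-- generic dependent-choice recursion -/
lemma seqRec {α : Type*} (P : α → Prop) (Q : α → α → Prop) (a₀ : α) (h₀ : P a₀)
    (hstep : ∀ a, P a → ∃ b, P b ∧ Q a b) :
    ∃ g : ℕ → α, g 0 = a₀ ∧ ∀ n, P (g n) ∧ Q (g n) (g (n + 1)) := by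
  classical
  let G : ℕ → {a : α // P a} := fun n =>
    Nat.rec ⟨a₀, h₀⟩ (fun _ p => ⟨(hstep p.1 p.2).choose, (hstep p.1 p.2).choose_spec.1⟩) n
  refine ⟨fun n => (G n).1, rfl, fun n => ⟨(G n).2, ?_⟩⟩
  exact (hstep (G n).1 (G n).2).choose_spec.2

lemma pigeonFiber {β : Type*} (g : ℕ → β) (D : Set β) (hD : D.Finite) (hg : ∀ n, g n ∈ D) :
    ∃ b, {n | g n = b}.Infinite := by
  by_contra hc
  push_neg at hc
  have h1 : (Set.univ : Set ℕ) ⊆ ⋃ b ∈ D, {n | g n = b} := by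
    intro n _
    exact Set.mem_biUnion (hg n) rfl
  exact Set.infinite_univ ((hD.biUnion (fun b _ => hc b)).subset h1)

/-- select the elements of `u` whose rank (number of smaller elements of `u`) lies in `E` -/
def sel (E u : Finset ℕ) : Finset ℕ := u.filter fun y => (u.filter (· < y)).card ∈ E

lemma image_card_of_mono {r : ℕ} {z : ℕ → ℕ} (hz : ∀ i j, i < j → j < r → z i < z j)
    {E : Finset ℕ} (hE : E ⊆ range r) : (E.image z).card = E.card := by
  apply card_image_of_injOn
  intro i hi j hj hij
  rcases lt_trichotomy i j with h | h | h
  · exact absurd hij (ne_of_lt (hz i j h (mem_range.1 (hE hj))))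
  · exact h
  · exact absurd hij.symm (ne_of_lt (hz j i h (mem_range.1 (hE hi))))

lemma sel_eq (r : ℕ) (z : ℕ → ℕ) (hz : ∀ i j, i < j → j < r → z i < z j)
    (E v : Finset ℕ) (hE : E ⊆ range r)
    (hv : ∀ y ∈ v, ∀ i, i < r → z i < y) :
    sel E ((range r).image z ∪ v) = E.image z := by
  have hrank : ∀ i, i < r → (((range r).image z ∪ v).filter (· < z i)).card = i := by
    intro i hi
    have h1 : ((range r).image z ∪ v).filter (· < z i) = (range i).image z := by
      ext y
      simp only [mem_filter, mem_union, mem_image, mem_range]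
      constructor
      · rintro ⟨h2 | h2, h3⟩
        · obtain ⟨j, hj, rfl⟩ := h2
          refine ⟨j, ?_, rfl⟩
          by_contra h4
          push_neg at h4
          rcases eq_or_lt_of_le h4 with h5 | h5
          · exact absurd h3 (by simp [h5])
          · exact absurd h3 (not_lt.2 (le_of_lt (hz i j h5 hj)))
        · exact absurd h3 (not_lt.2 (le_of_lt (hv y h2 i hi)))
      · rintro ⟨j, hj, rfl⟩
        exact ⟨Or.inl ⟨j, lt_trans hj hi, rfl⟩, hz j i hj hi⟩
    rw [h1, image_card_of_mono hz (range_subset_range.2 (le_of_lt hi)), card_range]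
  ext y
  simp only [sel, mem_filter, mem_union, mem_image]
  constructor
  · rintro ⟨h2 | h2, h3⟩
    · obtain ⟨j, hj, rfl⟩ := h2
      rw [hrank j (mem_range.1 hj)] at h3
      exact ⟨j, h3, rfl⟩
    · exfalso
      have h4 : (range r).image z ⊆ ((range r).image z ∪ v).filter (· < y) := by
        intro w hw
        obtain ⟨j, hj, rfl⟩ := mem_image.1 hw
        exact mem_filter.2 ⟨mem_union_left _ hw, hv y h2 j (mem_range.1 hj)⟩
      have h5 : r ≤ (((range r).image z ∪ v).filter (· < y)).card := by
        calc r = ((range r).image z).card := by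
                rw [image_card_of_mono hz subset_rfl, card_range]
          _ ≤ _ := card_le_card h4
      have h6 := mem_range.1 (hE h3)
      omega
  · rintro ⟨j, hj, rfl⟩
    have hjr := mem_range.1 (hE hj)
    refine ⟨Or.inl ⟨j, mem_range.2 hjr, rfl⟩, ?_⟩
    rw [hrank j hjr]
    exact hj

lemma imageEnum (u : Finset ℕ) (r : ℕ) (hc : u.card = r) :
    ∃ z : ℕ → ℕ, (∀ i j, i < j → j < r → z i < z j) ∧ (∀ i, i < r → z i ∈ u) ∧
      (range r).image z = u := by
  classical
  let e := u.orderIsoOfFin hc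
  refine ⟨fun i => if hi : i < r then (e ⟨i, hi⟩ : ℕ) else 0, ?_, ?_, ?_⟩
  · intro i j hij hj
    dsimp only
    rw [dif_pos (lt_trans hij hj), dif_pos hj]
    exact_mod_cast e.strictMono (show (⟨i, lt_trans hij hj⟩ : Fin r) < ⟨j, hj⟩ from hij)
  · intro i hi
    dsimp only
    rw [dif_pos hi]
    exact (e ⟨i, hi⟩).2
  · apply Finset.Subset.antisymm
    · intro y hy
      obtain ⟨j, hj, rfl⟩ := mem_image.1 hy
      simp only [dif_pos (mem_range.1 hj)]
      exact (e ⟨j, mem_range.1 hj⟩).2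
    · intro y hy
      refine mem_image.2 ⟨(e.symm ⟨y, hy⟩ : Fin r), mem_range.2 (e.symm ⟨y, hy⟩).2, ?_⟩
      rw [dif_pos (e.symm ⟨y, hy⟩).2]
      have := e.apply_symm_apply ⟨y, hy⟩
      simp only [Fin.eta] at this ⊢
      rw [this]

theorem ramseyBool (r : ℕ) : ∀ (c : Finset ℕ → Bool) (S : Set ℕ), S.Infinite →
    ∃ T : Set ℕ, T ⊆ S ∧ T.Infinite ∧ ∃ v : Bool,
      ∀ u : Finset ℕ, ↑u ⊆ T → u.card = r → c u = v := by
  induction r with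
  | zero =>
    intro c S hS
    refine ⟨S, subset_rfl, hS, c ∅, fun u hu hcard => ?_⟩
    rw [Finset.card_eq_zero] at hcard; subst hcard; rfl
  | succ r ih =>
    intro c S hS
    have hstep : ∀ W : Set ℕ, W.Infinite → ∃ W' : Set ℕ, W'.Infinite ∧
        (W' ⊆ W ∧ (∀ y ∈ W', sInf W < y) ∧ ∃ v : Bool,
          ∀ u : Finset ℕ, ↑u ⊆ W' → u.card = r → c (insert (sInf W) u) = v) := by
      intro W hW
      obtain ⟨T, hTsub, hTinf, v, hv⟩ := ih (fun u => c (insert (sInf W) u))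
        (W \ {y | y ≤ sInf W}) (hW.diff (Set.finite_le_nat _))
      refine ⟨T, hTinf, fun y hy => (hTsub hy).1, fun y hy => ?_, v, hv⟩
      have := (hTsub hy).2
      simpa using this
    obtain ⟨g, hg0, hg⟩ := seqRec Set.Infinite
      (fun W W' => W' ⊆ W ∧ (∀ y ∈ W', sInf W < y) ∧ ∃ v : Bool,
        ∀ u : Finset ℕ, ↑u ⊆ W' → u.card = r → c (insert (sInf W) u) = v) S hS hstep
    choose v hv using fun n => (hg n).2.2.2
    have hInf : ∀ n, (g n).Infinite := fun n => (hg n).1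
    have hsub : ∀ n, g (n + 1) ⊆ g n := fun n => (hg n).2.1
    have hbey : ∀ n, ∀ y ∈ g (n + 1), sInf (g n) < y := fun n => (hg n).2.2.1
    have hchain : ∀ n m, n ≤ m → g m ⊆ g n := by
      intro n m h
      induction m, h using Nat.le_induction with
      | base => exact subset_rfl
      | succ m hm ihm => exact fun y hy => ihm (hsub m hy)
    have amem : ∀ n, sInf (g n) ∈ g n := fun n => Nat.sInf_mem (hInf n).nonempty
    have amono : StrictMono (fun n => sInf (g n)) := by
      apply strictMono_nat_of_lt_succ
      intro n
      exact hbey n _ (amem (n + 1))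
    obtain ⟨b, hb⟩ := pigeonFiber v (Set.univ : Set Bool) (Set.finite_univ) (fun _ => trivial)
    refine ⟨(fun n => sInf (g n)) '' {n | v n = b}, ?_, hb.image (amono.injective.injOn), b, ?_⟩
    · rintro y ⟨m, _, rfl⟩
      rw [← hg0]
      exact hchain 0 m (Nat.zero_le m) (amem m)
    · intro u hu hcard
      have hne : u.Nonempty := card_pos.1 (by omega)
      obtain ⟨m, hmJ, hm⟩ := hu (u.min'_mem hne)
      have h1 : ↑(u.erase (u.min' hne)) ⊆ g (m + 1) := by
        intro y hy
        have hy' := Finset.mem_coe.1 hy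
        have hyu := Finset.mem_of_mem_erase hy'
        have hyne := Finset.ne_of_mem_erase hy'
        obtain ⟨n, hnJ, hn⟩ := hu hyu
        have h2 : u.min' hne < y := lt_of_le_of_ne (u.min'_le y hyu) (Ne.symm hyne)
        rw [← hn, ← hm] at h2
        have h3 : m < n := by
          by_contra h4
          push_neg at h4
          rcases eq_or_lt_of_le h4 with h5 | h5
          · exact absurd h2 (by rw [h5]; exact lt_irrefl _)
          · exact absurd (amono h5) (not_lt.2 (le_of_lt h2))
        rw [← hn]
        exact hchain (m + 1) n h3 (amem n)
      have h2 : (u.erase (u.min' hne)).card = r := by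
        rw [Finset.card_erase_of_mem (u.min'_mem hne), hcard]
        omega
      have h3 := hv m (u.erase (u.min' hne)) h1 h2
      have hm' : sInf (g m) = u.min' hne := hm
      rw [← hmJ, ← h3]
      congr 1
      rw [hm']
      exact (Finset.insert_erase (u.min'_mem hne)).symm

lemma ramseyFam {ι : Type*} [DecidableEq ι] (D : Finset ι) (cs : ι → Finset ℕ → Bool) (K : ℕ) :
    ∀ (S : Set ℕ), S.Infinite →
    ∃ T : Set ℕ, T ⊆ S ∧ T.Infinite ∧ ∀ i ∈ D, ∃ v : Bool,
      ∀ u : Finset ℕ, ↑u ⊆ T → u.card = K → cs i u = v := by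
  classical
  induction D using Finset.induction_on with
  | empty => exact fun S hS => ⟨S, subset_rfl, hS, by simp⟩
  | @insert a D haD ih =>
    intro S hS
    obtain ⟨T₁, h1, h2, v, hv⟩ := ramseyBool K (cs a) S hS
    obtain ⟨T₂, h3, h4, h5⟩ := ih T₁ h2
    refine ⟨T₂, h3.trans h1, h4, fun i hi => ?_⟩
    rcases Finset.mem_insert.1 hi with rfl | hi
    · exact ⟨v, fun u hu hc => hv u (fun y hy => h3 (hu hy)) hc⟩
    · exact h5 i hi

def Col (B : Set (Finset ℕ)) (f : Finset ℕ → ℕ) (s t : Finset ℕ) : Prop :=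
  s ∈ B ∧ t ∈ B ∧ s ≠ t ∧ f s = f t

def RInv (B : Set (Finset ℕ)) (f : Finset ℕ → ℕ) (F : Finset ℕ) (R : Set ℕ) : Prop :=
  ∀ a b : Finset ℕ, a.Nonempty → b.Nonempty → a ⊆ F → b ⊆ F →
    ∀ r : ℕ, ∀ z : ℕ → ℕ, (∀ i j, i < j → j < r → z i < z j) → (∀ i, i < r → z i ∈ R) →
    ∀ E₁ E₂ : Finset ℕ, E₁ ∪ E₂ = Finset.range r → (a, E₁) ≠ (b, E₂) →
    ¬ Col B f (a ∪ E₁.image z) (b ∪ E₂.image z)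

lemma caseA (B : Set (Finset ℕ)) (f : Finset ℕ → ℕ) (k : ℕ)
    (hf : ∀ c : ℕ, ∃ T : Finset (Finset ℕ), T.card ≤ k ∧ ∀ s ∈ B, f s = c → s ∈ T)
    (T : Set ℕ) (hT : T.Infinite)
    (a b E₁ E₂ : Finset ℕ) (r i : ℕ) (hi₁ : i ∈ E₁) (hi₂ : i ∉ E₂)
    (hE₁ : E₁ ⊆ Finset.range r)
    (ha : ∀ y ∈ a, ∀ u ∈ T, y < u)
    (HT : ∀ z : ℕ → ℕ, (∀ i' j, i' < j → j < r → z i' < z j) → (∀ j, j < r → z j ∈ T) →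
      Col B f (a ∪ E₁.image z) (b ∪ E₂.image z)) :
    False := by
  classical
  have hTs : {n | (fun y => y ∈ T) n}.Infinite := by simpa [Set.setOf_mem_eq] using hT
  set σ : ℕ → ℕ := Nat.nth (· ∈ T) with hσdef
  have hσT : ∀ n, σ n ∈ T := fun n => Nat.nth_mem_of_infinite hTs n
  have hσ : StrictMono σ := Nat.nth_strictMono hTs
  set z : ℕ → ℕ → ℕ := fun m j => if j < i then σ j else if j = i then σ (i + m) else σ (j + k)
    with hzdef
  have hir : i < r := mem_range.1 (hE₁ hi₁)
  have hzmono : ∀ m, m ≤ k → ∀ i1 i2, i1 < i2 → i2 < r → z m i1 < z m i2 := by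
    intro m hm i1 i2 h12 h2r
    simp only [hzdef]
    split_ifs <;> exact hσ (by omega)
  have hzT : ∀ m j, z m j ∈ T := by
    intro m j
    simp only [hzdef]
    split_ifs <;> exact hσT _
  have hcol : ∀ m, m ≤ k → Col B f (a ∪ E₁.image (z m)) (b ∪ E₂.image (z m)) :=
    fun m hm => HT (z m) (hzmono m hm) (fun j _ => hzT m j)
  have hE₂im : ∀ m, E₂.image (z m) = E₂.image (z 0) := by
    intro m
    apply Finset.image_congr
    intro j hj
    have hji : j ≠ i := fun h => hi₂ (h ▸ hj)
    simp only [hzdef]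
    split_ifs <;> rfl
  have hzi : ∀ m, z m i = σ (i + m) := by
    intro m
    simp [hzdef]
  -- key: m ↦ a ∪ E₁.image (z m) is injective on range (k+1)
  have hmemi : ∀ m, σ (i + m) ∈ a ∪ E₁.image (z m) := by
    intro m
    exact mem_union_right _ (mem_image.2 ⟨i, hi₁, hzi m⟩)
  have hnotmem : ∀ m m', m ≤ k → m' ≠ m → σ (i + m) ∉ a ∪ E₁.image (z m') := by
    intro m m' hm hne hmem
    rcases mem_union.1 hmem with h | h
    · exact absurd (ha _ h _ (hσT (i + m))) (lt_irrefl _)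
    · obtain ⟨j, hj, hje⟩ := mem_image.1 h
      revert hje
      simp only [hzdef]
      split_ifs with h1 h2
      · exact fun he => by have := hσ.injective he; omega
      · exact fun he => by have := hσ.injective he; omega
      · exact fun he => by have := hσ.injective he; omega
  obtain ⟨Tc, hTck, hTcm⟩ := hf (f (b ∪ E₂.image (z 0)))
  have hsub : (Finset.range (k + 1)).image (fun m => a ∪ E₁.image (z m)) ⊆ Tc := by
    intro s hs
    obtain ⟨m, hm, rfl⟩ := mem_image.1 hs
    have hmk := mem_range.1 hm
    obtain ⟨hsB, htB, hst, hfe⟩ := hcol m (by omega)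
    refine hTcm _ hsB ?_
    rw [hfe, hE₂im m]
  have hcard : ((Finset.range (k + 1)).image (fun m => a ∪ E₁.image (z m))).card = k + 1 := by
    rw [card_image_of_injOn, card_range]
    intro m hm m' hm' he
    have hmk := mem_range.1 hm
    have he' : a ∪ E₁.image (z m) = a ∪ E₁.image (z m') := he
    by_contra hne
    apply hnotmem m m' (by omega) (Ne.symm hne)
    rw [← he']
    exact hmemi m
  have := card_le_card hsub
  omega

open Classical in
noncomputable def colB (B : Set (Finset ℕ)) (f : Finset ℕ → ℕ)
    (τ : Finset ℕ × Finset ℕ × Finset ℕ × Finset ℕ) (u : Finset ℕ) : Bool :=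
  if Col B f (τ.1 ∪ sel τ.2.2.1 u) (τ.2.1 ∪ sel τ.2.2.2 u) then true else false

lemma colB_true {B : Set (Finset ℕ)} {f : Finset ℕ → ℕ}
    {τ : Finset ℕ × Finset ℕ × Finset ℕ × Finset ℕ} {u : Finset ℕ} :
    colB B f τ u = true ↔ Col B f (τ.1 ∪ sel τ.2.2.1 u) (τ.2.1 ∪ sel τ.2.2.2 u) := by
  unfold colB
  split_ifs with h <;> simp [h]

lemma evalBridge (B : Set (Finset ℕ)) (f : Finset ℕ → ℕ) (T : Set ℕ) (hTinf : T.Infinite)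
    (K : ℕ) (τ : Finset ℕ × Finset ℕ × Finset ℕ × Finset ℕ) (v : Bool)
    (hv : ∀ u : Finset ℕ, ↑u ⊆ T → u.card = K → colB B f τ u = v)
    (r' : ℕ) (hrK : r' ≤ K) (hE₁ : τ.2.2.1 ⊆ Finset.range r') (hE₂ : τ.2.2.2 ⊆ Finset.range r')
    (z' : ℕ → ℕ) (hz' : ∀ i j, i < j → j < r' → z' i < z' j) (hzT : ∀ i, i < r' → z' i ∈ T) :
    Col B f (τ.1 ∪ τ.2.2.1.image z') (τ.2.1 ∪ τ.2.2.2.image z') ↔ v = true := by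
  have hwcard : ((range r').image z').card = r' := by
    rw [image_card_of_mono hz' subset_rfl, card_range]
  set N := (range r').sup z' with hN
  have hdiff : (T \ {y | y ≤ N}).Infinite := hTinf.diff (Set.finite_le_nat N)
  obtain ⟨v', hv'T, hv'card⟩ := hdiff.exists_subset_card_eq (K - r')
  have hgt : ∀ y ∈ v', ∀ j, j < r' → z' j < y := by
    intro y hy j hj
    have h1 : ¬ y ≤ N := (hv'T hy).2
    have h2 : z' j ≤ N := le_sup (mem_range.2 hj)
    omega
  have hdisj : Disjoint ((range r').image z') v' := by
    rw [Finset.disjoint_left]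
    rintro y hy hyv
    obtain ⟨j, hj, rfl⟩ := mem_image.1 hy
    exact absurd rfl (ne_of_lt (hgt _ hyv j (mem_range.1 hj)))
  have hucard : ((range r').image z' ∪ v').card = K := by
    rw [card_union_of_disjoint hdisj, hwcard, hv'card]
    omega
  have huT : ↑((range r').image z' ∪ v') ⊆ T := by
    intro y hy
    rcases mem_union.1 hy with h | h
    · obtain ⟨j, hj, rfl⟩ := mem_image.1 h
      exact hzT j (mem_range.1 hj)
    · exact (hv'T h).1
  have heq := hv _ huT hucard
  have hsel1 : sel τ.2.2.1 ((range r').image z' ∪ v') = τ.2.2.1.image z' :=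
    sel_eq r' z' hz' _ v' hE₁ hgt
  have hsel2 : sel τ.2.2.2 ((range r').image z' ∪ v') = τ.2.2.2.image z' :=
    sel_eq r' z' hz' _ v' hE₂ hgt
  rw [← hsel1, ← hsel2, ← colB_true, heq]

lemma CP (B : Set (Finset ℕ)) (f : Finset ℕ → ℕ) (h : ℕ → ℕ) (k : ℕ)
    (hAnti : ∀ s ∈ B, ∀ t ∈ B, ¬ s ⊂ t)
    (hωb : ∀ s ∈ B, s.card ≤ h (sInf (↑s : Set ℕ)))
    (hf : ∀ c : ℕ, ∃ T : Finset (Finset ℕ), T.card ≤ k ∧ ∀ s ∈ B, f s = c → s ∈ T)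
    (F : Finset ℕ) (R : Set ℕ) (hInv : RInv B f F R) (hFR : ∀ y ∈ F, ∀ u ∈ R, y < u)
    (x : ℕ) (hx : x ∈ R) (S : Set ℕ) (hS : S.Infinite) (hSR : S ⊆ R)
    (hxS : ∀ u ∈ S, x < u) :
    ∃ T : Set ℕ, T ⊆ S ∧ T.Infinite ∧
      (RInv B f (insert x F) T ∨
       ∃ a c : Finset ℕ, ∃ r : ℕ, a ⊆ F ∧ c ⊆ F ∧ r ≤ F.sup h ∧
         ∀ u : Finset ℕ, ↑u ⊆ T → u.card = r →
           (insert x c ∪ u ∈ B ∧ f (insert x c ∪ u) = f (a ∪ u))) := by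
  classical
  set M := (insert x F).sup h with hM
  set K := 2 * M with hK
  set D : Finset (Finset ℕ × Finset ℕ × Finset ℕ × Finset ℕ) :=
    (insert x F).powerset ×ˢ (insert x F).powerset ×ˢ (range K).powerset ×ˢ (range K).powerset
    with hD
  obtain ⟨T, hTS, hTinf, hhom⟩ := ramseyFam D (colB B f) K S hS
  refine ⟨T, hTS, hTinf, ?_⟩
  by_cases hI : RInv B f (insert x F) T
  · exact Or.inl hI
  right
  simp only [RInv, not_forall] at hI
  obtain ⟨a, b, hane, hbne, haF, hbF, r, z, hzm, hzT, E₁, E₂, hEun, hab, hIcol⟩ := hI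
  rw [not_not] at hIcol
  -- basic facts
  have hE₁r : E₁ ⊆ range r := hEun ▸ subset_union_left
  have hE₂r : E₂ ⊆ range r := hEun ▸ subset_union_right
  have hlow : ∀ y ∈ insert x F, ∀ u' ∈ T, y < u' := by
    intro y hy u' hu'
    rcases mem_insert.1 hy with rfl | hy
    · exact hxS u' (hTS hu')
    · exact hFR y hy u' (hSR (hTS hu'))
  obtain ⟨hsB, htB, hstne, hfe⟩ := hIcol
  have hlt₁ : ∀ y ∈ E₁.image z, ∀ p ∈ a, p < y := by
    intro y hy p hp
    obtain ⟨j, hj, rfl⟩ := mem_image.1 hy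
    exact hlow p (haF hp) _ (hzT j (mem_range.1 (hE₁r hj)))
  have hlt₂ : ∀ y ∈ E₂.image z, ∀ p ∈ b, p < y := by
    intro y hy p hp
    obtain ⟨j, hj, rfl⟩ := mem_image.1 hy
    exact hlow p (hbF hp) _ (hzT j (mem_range.1 (hE₂r hj)))
  have hscard : (a ∪ E₁.image z).card ≤ h (a.min' hane) := by
    have h1 := hωb _ hsB
    rwa [sInf_coe_finset _ (hane.mono subset_union_left), min'_union a _ hane hlt₁] at h1
  have htcard : (b ∪ E₂.image z).card ≤ h (b.min' hbne) := by
    have h1 := hωb _ htB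
    rwa [sInf_coe_finset _ (hbne.mono subset_union_left), min'_union b _ hbne hlt₂] at h1
  have hE₁card : E₁.card ≤ M := by
    calc E₁.card = (E₁.image z).card := (image_card_of_mono hzm hE₁r).symm
      _ ≤ (a ∪ E₁.image z).card := card_le_card subset_union_right
      _ ≤ h (a.min' hane) := hscard
      _ ≤ M := le_sup (haF (a.min'_mem hane))
  have hE₂card : E₂.card ≤ M := by
    calc E₂.card = (E₂.image z).card := (image_card_of_mono hzm hE₂r).symm
      _ ≤ (b ∪ E₂.image z).card := card_le_card subset_union_right
      _ ≤ h (b.min' hbne) := htcard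
      _ ≤ M := le_sup (hbF (b.min'_mem hbne))
  have hrK : r ≤ K := by
    have h1 : (E₁ ∪ E₂).card ≤ E₁.card + E₂.card := card_union_le _ _
    rw [hEun, card_range] at h1
    omega
  have hτD : (a, b, E₁, E₂) ∈ D := by
    simp only [hD, mem_product, mem_powerset]
    exact ⟨haF, hbF, hE₁r.trans (range_subset_range.2 hrK), hE₂r.trans (range_subset_range.2 hrK)⟩
  obtain ⟨v, hv⟩ := hhom _ hτD
  have hbridge := fun (z' : ℕ → ℕ) hz' hzT' =>
    evalBridge B f T hTinf K (a, b, E₁, E₂) v hv r hrK hE₁r hE₂r z' hz' hzT'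
  have hvtrue : v = true := (hbridge z hzm hzT).1 ⟨hsB, htB, hstne, hfe⟩
  have HTgen : ∀ z' : ℕ → ℕ, (∀ i j, i < j → j < r → z' i < z' j) → (∀ i, i < r → z' i ∈ T) →
      Col B f (a ∪ E₁.image z') (b ∪ E₂.image z') := by
    intro z' h1 h2
    exact (hbridge z' h1 h2).2 hvtrue
  -- main case analysis
  by_cases hEE : E₁ = E₂
  · -- same pattern on both sides: full tuples
    have hErange : E₁ = range r := by rw [← hEun, hEE, union_self]
    have hE2range : E₂ = range r := by rw [← hEun, hEE, union_self]
    have habne : a ≠ b := by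
      intro hcon
      exact hab (by rw [hcon, hEE])
    have HT' : ∀ u : Finset ℕ, ↑u ⊆ T → u.card = r → Col B f (a ∪ u) (b ∪ u) := by
      intro u hu hucard
      obtain ⟨z', hz'm, hz'mem, hz'im⟩ := imageEnum u r hucard
      have h1 := HTgen z' hz'm (fun j hj => hu (hz'mem j hj))
      rwa [hErange, hE2range, hz'im] at h1
    have hxnT : x ∉ T := fun hxT => lt_irrefl x (hxS x (hTS hxT))
    by_cases hxa : x ∈ a
    · by_cases hxb : x ∈ b
      · -- x in both sides
        exfalso
        obtain ⟨u, huT, hucard⟩ := hTinf.exists_subset_card_eq r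
        have hxu : x ∉ u := fun hxu => hxnT (huT hxu)
        by_cases hae : (a.erase x).Nonempty
        · by_cases hbe : (b.erase x).Nonempty
          · -- both erasures nonempty: contradict the invariant for F,R
            have hw : (insert x u).card = r + 1 := by
              rw [card_insert_of_notMem hxu, hucard]
            obtain ⟨z', hz'm, hz'mem, hz'im⟩ := imageEnum (insert x u) (r + 1) hw
            have haee : a.erase x ≠ b.erase x := by
              intro hcon
              apply habne
              rw [← insert_erase hxa, ← insert_erase hxb, hcon]
            have hone : ∀ c : Finset ℕ, x ∈ c → c.erase x ∪ insert x u = c ∪ u := by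
              intro c hc
              ext y
              by_cases hy : y = x
              · subst hy
                simp [hc]
              · simp [Finset.mem_union, Finset.mem_erase, Finset.mem_insert, hy]
            have hcol2 : Col B f (a.erase x ∪ (range (r + 1)).image z')
                (b.erase x ∪ (range (r + 1)).image z') := by
              rw [hz'im, hone a hxa, hone b hxb]
              exact HT' u huT hucard
            refine hInv (a.erase x) (b.erase x) hae hbe ?_ ?_ (r + 1) z' hz'm ?_
              (range (r + 1)) (range (r + 1)) (union_self _)
              (fun hcon => haee (congrArg Prod.fst hcon)) hcol2
            · intro y hy
              rcases mem_insert.1 (haF (mem_of_mem_erase hy)) with rfl | hy'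
              · exact absurd rfl (ne_of_mem_erase hy)
              · exact hy'
            · intro y hy
              rcases mem_insert.1 (hbF (mem_of_mem_erase hy)) with rfl | hy'
              · exact absurd rfl (ne_of_mem_erase hy)
              · exact hy'
            · intro i hi
              rcases mem_insert.1 (hz'mem i hi) with rfl | hy'
              · exact hx
              · exact hSR (hTS (huT hy'))
          · -- b = {x} : then t ⊆ s, contradicting the antichain property
            have hbx : b = {x} := by
              rcases (Finset.erase_eq_empty_iff _ _).1 (Finset.not_nonempty_iff_eq_empty.1 hbe)
                with hcon | hcon
              · exact absurd hcon (Finset.nonempty_iff_ne_empty.1 hbne)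
              · exact hcon
            obtain ⟨c1, c2, c3, c4⟩ := HT' u huT hucard
            refine hAnti _ c2 _ c1 (Finset.ssubset_iff_subset_ne.2 ⟨?_, fun hcon => c3 hcon.symm⟩)
            rw [hbx]
            exact union_subset_union_left (singleton_subset_iff.2 hxa)
        · -- a = {x} : then s ⊆ t, contradicting the antichain property
          have hax : a = {x} := by
            rcases (Finset.erase_eq_empty_iff _ _).1 (Finset.not_nonempty_iff_eq_empty.1 hae)
              with hcon | hcon
            · exact absurd hcon (Finset.nonempty_iff_ne_empty.1 hane)
            · exact hcon
          obtain ⟨c1, c2, c3, c4⟩ := HT' u huT hucard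
          refine hAnti _ c1 _ c2 (Finset.ssubset_iff_subset_ne.2 ⟨?_, c3⟩)
          rw [hax]
          exact union_subset_union_left (singleton_subset_iff.2 hxb)
      · -- x ∈ a \ b : datum with a-side carrying x
        refine ⟨b, a.erase x, r, ?_, ?_, ?_, ?_⟩
        · intro y hy
          rcases mem_insert.1 (hbF hy) with rfl | hy'
          · exact absurd hy hxb
          · exact hy'
        · intro y hy
          rcases mem_insert.1 (haF (mem_of_mem_erase hy)) with rfl | hy'
          · exact absurd rfl (ne_of_mem_erase hy)
          · exact hy'
        · -- r ≤ F.sup h via the b-side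
          have hbF' : b ⊆ F := by
            intro y hy
            rcases mem_insert.1 (hbF hy) with rfl | hy'
            · exact absurd hy hxb
            · exact hy'
          have h1 : r ≤ (b ∪ E₂.image z).card := by
            calc r = E₂.card := by rw [hE2range, card_range]
              _ = (E₂.image z).card := (image_card_of_mono hzm hE₂r).symm
              _ ≤ _ := card_le_card subset_union_right
          calc r ≤ h (b.min' hbne) := le_trans h1 htcard
            _ ≤ F.sup h := le_sup (hbF' (b.min'_mem hbne))
        · intro u huT hucard
          obtain ⟨h1, h2, h3, h4⟩ := HT' u huT hucard
          rw [insert_erase hxa]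
          exact ⟨h1, h4⟩
    · by_cases hxb : x ∈ b
      · -- x ∈ b \ a : datum with b-side carrying x
        refine ⟨a, b.erase x, r, ?_, ?_, ?_, ?_⟩
        · intro y hy
          rcases mem_insert.1 (haF hy) with rfl | hy'
          · exact absurd hy hxa
          · exact hy'
        · intro y hy
          rcases mem_insert.1 (hbF (mem_of_mem_erase hy)) with rfl | hy'
          · exact absurd rfl (ne_of_mem_erase hy)
          · exact hy'
        · have haF' : a ⊆ F := by
            intro y hy
            rcases mem_insert.1 (haF hy) with rfl | hy'
            · exact absurd hy hxa
            · exact hy'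
          have h1 : r ≤ (a ∪ E₁.image z).card := by
            calc r = E₁.card := by rw [hErange, card_range]
              _ = (E₁.image z).card := (image_card_of_mono hzm hE₁r).symm
              _ ≤ _ := card_le_card subset_union_right
          calc r ≤ h (a.min' hane) := le_trans h1 hscard
            _ ≤ F.sup h := le_sup (haF' (a.min'_mem hane))
        · intro u huT hucard
          obtain ⟨h1, h2, h3, h4⟩ := HT' u huT hucard
          rw [insert_erase hxb]
          exact ⟨h2, h4.symm⟩
      · -- x in neither: contradicts RInv F R
        exfalso
        have haF' : a ⊆ F := by
          intro y hy
          rcases mem_insert.1 (haF hy) with rfl | hy'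
          · exact absurd hy hxa
          · exact hy'
        have hbF' : b ⊆ F := by
          intro y hy
          rcases mem_insert.1 (hbF hy) with rfl | hy'
          · exact absurd hy hxb
          · exact hy'
        exact hInv a b hane hbne haF' hbF' r z hzm
          (fun i hi => hSR (hTS (hzT i hi))) E₁ E₂ hEun hab ⟨hsB, htB, hstne, hfe⟩
  · -- different patterns: impossible by k-boundedness
    exfalso
    have hex : ∃ i, (i ∈ E₁ ∧ i ∉ E₂) ∨ (i ∈ E₂ ∧ i ∉ E₁) := by
      by_contra hno
      push_neg at hno
      apply hEE
      ext i
      exact ⟨(hno i).1, (hno i).2⟩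
    obtain ⟨i, hcase⟩ := hex
    rcases hcase with ⟨hi1, hi2⟩ | ⟨hi1, hi2⟩
    · exact caseA B f k hf T hTinf a b E₁ E₂ r i hi1 hi2 hE₁r
        (fun y hy => hlow y (haF hy)) HTgen
    · exact caseA B f k hf T hTinf b a E₂ E₁ r i hi1 hi2 hE₂r
        (fun y hy => hlow y (hbF hy))
        (fun z' h1 h2 => (let ⟨c1, c2, c3, c4⟩ := HTgen z' h1 h2; ⟨c2, c1, c3.symm, c4.symm⟩))

lemma stepLemma (B : Set (Finset ℕ)) (f : Finset ℕ → ℕ) (h : ℕ → ℕ) (k : ℕ)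
    (hAnti : ∀ s ∈ B, ∀ t ∈ B, ¬ s ⊂ t)
    (hωb : ∀ s ∈ B, s.card ≤ h (sInf (↑s : Set ℕ)))
    (hf : ∀ c : ℕ, ∃ T : Finset (Finset ℕ), T.card ≤ k ∧ ∀ s ∈ B, f s = c → s ∈ T)
    (F : Finset ℕ) (R : Set ℕ) (hR : R.Infinite) (hFR : ∀ y ∈ F, ∀ u ∈ R, y < u)
    (hInv : RInv B f F R) :
    ∃ x ∈ R, ∃ R' : Set ℕ, R' ⊆ R ∧ R'.Infinite ∧ (∀ u ∈ R', x < u) ∧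
      RInv B f (insert x F) R' := by
  classical
  by_contra hrej
  push_neg at hrej
  -- every candidate admits a rejection datum
  have hmk : ∀ W : Set ℕ, W ⊆ R → W.Infinite → ∃ x ∈ W, ∃ T : Set ℕ, T ⊆ W ∧ T.Infinite ∧
      (∀ u ∈ T, x < u) ∧
      ∃ a c : Finset ℕ, ∃ r : ℕ, a ⊆ F ∧ c ⊆ F ∧ r ≤ F.sup h ∧
        ∀ u : Finset ℕ, ↑u ⊆ T → u.card = r →
          (insert x c ∪ u ∈ B ∧ f (insert x c ∪ u) = f (a ∪ u)) := by
    intro W hWR hW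
    have hxW : sInf W ∈ W := Nat.sInf_mem hW.nonempty
    set x := sInf W with hxdef
    set S := W \ {y | y ≤ x} with hSdef
    have hS : S.Infinite := hW.diff (Set.finite_le_nat x)
    have hSW : S ⊆ W := Set.diff_subset
    have hxS : ∀ u ∈ S, x < u := by
      intro u hu
      have := hu.2
      simpa using this
    obtain ⟨T, hTS, hTinf, hor⟩ := CP B f h k hAnti hωb hf F R hInv hFR x (hWR hxW) S hS
      (hSW.trans hWR) hxS
    rcases hor with hIv | hdat
    · exact absurd hIv (hrej x (hWR hxW) T (fun y hy => hWR (hSW (hTS hy))) hTinf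
        (fun u hu => hxS u (hTS hu)))
    · exact ⟨x, hxW, T, hTS.trans hSW, hTinf, fun u hu => hxS u (hTS hu), hdat⟩
  -- build the rejection sequence
  obtain ⟨x₀, hx₀, T₀, hT₀R, hT₀inf, hbey₀, hdat₀⟩ := hmk R subset_rfl hR
  obtain ⟨g, hg0, hg⟩ := seqRec
    (fun p : ℕ × Set ℕ => p.1 ∈ R ∧ p.2 ⊆ R ∧ p.2.Infinite ∧ (∀ u ∈ p.2, p.1 < u) ∧
      ∃ a c : Finset ℕ, ∃ r : ℕ, a ⊆ F ∧ c ⊆ F ∧ r ≤ F.sup h ∧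
        ∀ u : Finset ℕ, ↑u ⊆ p.2 → u.card = r →
          (insert p.1 c ∪ u ∈ B ∧ f (insert p.1 c ∪ u) = f (a ∪ u)))
    (fun p q => q.1 ∈ p.2 ∧ q.2 ⊆ p.2)
    (x₀, T₀) ⟨hx₀, hT₀R, hT₀inf, hbey₀, hdat₀⟩
    (by
      rintro ⟨x', T'⟩ ⟨hx', hT'R, hT'inf, hbey', hdat'⟩
      obtain ⟨x'', hx'', T'', hT''sub, hT''inf, hbey'', hdat''⟩ := hmk T' hT'R hT'inf
      exact ⟨(x'', T''), ⟨hT'R hx'', hT''sub.trans hT'R, hT''inf, hbey'', hdat''⟩,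
        hx'', hT''sub⟩)
  set xs : ℕ → ℕ := fun n => (g n).1 with hxs
  set Ts : ℕ → Set ℕ := fun n => (g n).2 with hTs
  have hP : ∀ n, xs n ∈ R ∧ Ts n ⊆ R ∧ (Ts n).Infinite ∧ (∀ u ∈ Ts n, xs n < u) ∧
      ∃ a c : Finset ℕ, ∃ r : ℕ, a ⊆ F ∧ c ⊆ F ∧ r ≤ F.sup h ∧
        ∀ u : Finset ℕ, ↑u ⊆ Ts n → u.card = r →
          (insert (xs n) c ∪ u ∈ B ∧ f (insert (xs n) c ∪ u) = f (a ∪ u)) :=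
    fun n => (hg n).1
  have hQ : ∀ n, xs (n + 1) ∈ Ts n ∧ Ts (n + 1) ⊆ Ts n := fun n => (hg n).2
  have hchain : ∀ n m, n ≤ m → Ts m ⊆ Ts n := by
    intro n m hnm
    induction m, hnm using Nat.le_induction with
    | base => exact subset_rfl
    | succ m hm ihm => exact fun y hy => ihm ((hQ m).2 hy)
  have hxmono : StrictMono xs := by
    apply strictMono_nat_of_lt_succ
    intro n
    exact (hP n).2.2.2.1 _ (hQ n).1
  choose A C Rr hA hC hRr hfact using fun n => (hP n).2.2.2.2
  obtain ⟨⟨a, c, r⟩, hJ⟩ := pigeonFiber (fun n => (A n, C n, Rr n))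
    (↑(F.powerset ×ˢ F.powerset ×ˢ range (F.sup h + 1)) :
      Set (Finset ℕ × Finset ℕ × ℕ))
    (Finset.finite_toSet _)
    (by
      intro n
      simp only [Finset.mem_coe, mem_product, mem_powerset, mem_range]
      have := hRr n
      exact ⟨hA n, hC n, by omega⟩)
  have hJs : {n | (fun n => (A n, C n, Rr n) = (a, c, r)) n}.Infinite := by
    simpa [Set.setOf_mem_eq] using hJ
  set N : ℕ → ℕ := Nat.nth (fun n => (A n, C n, Rr n) = (a, c, r)) with hNdef
  have hNmem : ∀ m, (A (N m), C (N m), Rr (N m)) = (a, c, r) :=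
    fun m => Nat.nth_mem_of_infinite hJs m
  have hNmono : StrictMono N := Nat.nth_strictMono hJs
  obtain ⟨u, huT, hucard⟩ := (hP (N k)).2.2.1.exists_subset_card_eq r
  have hfacts : ∀ m, m ≤ k → (insert (xs (N m)) c ∪ u ∈ B ∧
      f (insert (xs (N m)) c ∪ u) = f (a ∪ u)) := by
    intro m hm
    have h1 : ↑u ⊆ Ts (N m) := fun y hy => hchain (N m) (N k) (hNmono.monotone hm) (huT hy)
    have h2 := hfact (N m) u h1 (by rw [hucard]; exact (congrArg (fun p => p.2.2) (hNmem m)).symm)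
    have h3 := hNmem m
    simp only [Prod.mk.injEq] at h3
    rw [h3.1, h3.2.1] at h2
    exact h2
  -- k+1 distinct sets with the same colour
  obtain ⟨Tc, hTck, hTcm⟩ := hf (f (a ∪ u))
  have hsub : (range (k + 1)).image (fun m => insert (xs (N m)) c ∪ u) ⊆ Tc := by
    intro s hs
    obtain ⟨m, hm, rfl⟩ := mem_image.1 hs
    obtain ⟨h1, h2⟩ := hfacts m (by have := mem_range.1 hm; omega)
    exact hTcm _ h1 h2
  have hxsmem : ∀ m, xs (N m) ∈ insert (xs (N m)) c ∪ u :=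
    fun m => mem_union_left _ (mem_insert_self _ _)
  have hcF : c ⊆ F := by
    have h3 := hNmem 0
    simp only [Prod.mk.injEq] at h3
    rw [← h3.2.1]
    exact hC (N 0)
  have hxsnot : ∀ m m', m ≤ k → m ≠ m' → xs (N m) ∉ insert (xs (N m')) c ∪ u := by
    intro m m' hm hne hmem
    rcases mem_union.1 hmem with h1 | h1
    · rcases mem_insert.1 h1 with h2 | h2
      · exact hne ((hxmono.comp hNmono).injective h2)
      · exact lt_irrefl _ (hFR _ (hcF h2) _ (hP (N m)).1)
    · have h2 : xs (N m) ∈ Ts (N m) :=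
        hchain (N m) (N k) (hNmono.monotone hm) (huT h1)
      exact lt_irrefl _ ((hP (N m)).2.2.2.1 _ h2)
  have hcard : ((range (k + 1)).image (fun m => insert (xs (N m)) c ∪ u)).card = k + 1 := by
    rw [card_image_of_injOn, card_range]
    intro m hm m' hm' he
    have he' : insert (xs (N m)) c ∪ u = insert (xs (N m')) c ∪ u := he
    by_contra hne
    apply hxsnot m m' (by have := mem_range.1 hm; omega) hne
    rw [← he']
    exact hxsmem m
  have := card_le_card hsub
  omega

/-- for an ω-bounded barrier `B` with base ℕ, every `k`-bounded
coloring `f : B → ℕ` (`k ≥ 1`) admits an infinite rainbow. -/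
theorem stmt18 (B : Set (Finset ℕ)) (hB : IsBarrier B)
    (hbase : BarrierBase B = Set.univ)
    (h : ℕ → ℕ) (hωb : ∀ s ∈ B, s.card ≤ h (sInf (↑s : Set ℕ)))
    (k : ℕ) (hk : 1 ≤ k) (f : Finset ℕ → ℕ)
    (hf : ∀ c : ℕ, ∃ T : Finset (Finset ℕ), T.card ≤ k ∧
      ∀ s ∈ B, f s = c → s ∈ T) :
    ∃ H : Set ℕ, H.Infinite ∧
      ∀ s ∈ B, ∀ t ∈ B, ↑s ⊆ H → ↑t ⊆ H → f s = f t → s = t := by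
  classical
  have hAnti := hB.2.2
  have hEmptyB : ∅ ∉ B := by
    intro h₀
    obtain ⟨y, hy⟩ := hB.1.nonempty
    simp only [BarrierBase, Set.mem_iUnion] at hy
    obtain ⟨s, hsB, hys⟩ := hy
    refine hAnti ∅ h₀ s hsB (Finset.ssubset_iff_subset_ne.2 ⟨Finset.empty_subset s, ?_⟩)
    intro hcon
    rw [← hcon] at hys
    exact absurd hys (by simp)
  -- build the sequence of stages
  obtain ⟨g, hg0, hg⟩ := seqRec
    (fun p : Finset ℕ × Set ℕ => p.2.Infinite ∧ (∀ y ∈ p.1, ∀ u ∈ p.2, y < u) ∧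
      RInv B f p.1 p.2)
    (fun p q => ∃ x ∈ p.2, q.1 = insert x p.1 ∧ q.2 ⊆ p.2 ∧ (∀ u ∈ q.2, x < u))
    ((∅ : Finset ℕ), (Set.univ : Set ℕ))
    ⟨Set.infinite_univ, by simp, by
      intro a b hane _ haF _
      obtain ⟨y, hy⟩ := hane
      exact absurd (haF hy) (Finset.notMem_empty y)⟩
    (by
      rintro ⟨F, R⟩ ⟨hR, hFR, hInv⟩
      obtain ⟨x, hx, R', hR'sub, hR'inf, hbey, hInv'⟩ :=
        stepLemma B f h k hAnti hωb hf F R hR hFR hInv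
      refine ⟨(insert x F, R'), ⟨hR'inf, ?_, hInv'⟩, x, hx, rfl, hR'sub, hbey⟩
      intro y hy u hu
      rcases mem_insert.1 hy with rfl | hy'
      · exact hbey u hu
      · exact hFR y hy' u (hR'sub hu))
  set Fs : ℕ → Finset ℕ := fun n => (g n).1 with hFs
  set Rs : ℕ → Set ℕ := fun n => (g n).2 with hRs
  have hP : ∀ n, (Rs n).Infinite ∧ (∀ y ∈ Fs n, ∀ u ∈ Rs n, y < u) ∧ RInv B f (Fs n) (Rs n) :=
    fun n => (hg n).1
  choose xs hxmem hFsucc hRsub hbey using fun n => (hg n).2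
  have hF0 : Fs 0 = ∅ := congrArg Prod.fst hg0
  have hchain : ∀ n m, n ≤ m → Rs m ⊆ Rs n := by
    intro n m hnm
    induction m, hnm using Nat.le_induction with
    | base => exact subset_rfl
    | succ m hm ihm => exact fun y hy => ihm (hRsub m hy)
  have hxR : ∀ n, xs n ∈ Rs n := hxmem
  have hxmono : StrictMono xs := by
    apply strictMono_nat_of_lt_succ
    intro n
    exact hbey n _ (hxmem (n + 1))
  have hFim : ∀ n, Fs n = (range n).image xs := by
    intro n
    induction n with
    | zero => simpa using hF0
    | succ n ihn =>
      have hstep' : Fs (n + 1) = insert (xs n) (Fs n) := hFsucc n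
      rw [hstep', ihn, range_add_one, image_insert]
  have hxH : ∀ n, xs n ∈ Set.range xs := fun n => ⟨n, rfl⟩
  refine ⟨Set.range xs, Set.infinite_range_of_injective hxmono.injective, ?_⟩
  intro s hsB t htB hsH htH hfe
  by_contra hne
  have hsne : s.Nonempty := by
    rw [Finset.nonempty_iff_ne_empty]
    rintro rfl
    exact hEmptyB hsB
  have htne : t.Nonempty := by
    rw [Finset.nonempty_iff_ne_empty]
    rintro rfl
    exact hEmptyB htB
  set p := max (s.min' hsne) (t.min' htne) with hp
  have hpH : p ∈ Set.range xs := by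
    rcases max_cases (s.min' hsne) (t.min' htne) with ⟨heq, _⟩ | ⟨heq, _⟩
    · rw [hp, heq]
      exact hsH (Finset.mem_coe.2 (s.min'_mem hsne))
    · rw [hp, heq]
      exact htH (Finset.mem_coe.2 (t.min'_mem htne))
  obtain ⟨j, hj⟩ := hpH
  set a := s.filter (· ≤ p) with ha
  set b := t.filter (· ≤ p) with hb
  set e₁ := s.filter (fun y => ¬ y ≤ p) with he₁
  set e₂ := t.filter (fun y => ¬ y ≤ p) with he₂
  have hsae : s = a ∪ e₁ := (filter_union_filter_not_eq _ s).symm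
  have htbe : t = b ∪ e₂ := (filter_union_filter_not_eq _ t).symm
  have hidx : ∀ y, y ∈ Set.range xs → y ≤ p → ∃ i, i ≤ j ∧ xs i = y := by
    rintro y ⟨i, rfl⟩ hyp
    refine ⟨i, ?_, rfl⟩
    rw [← hj] at hyp
    exact hxmono.le_iff_le.1 hyp
  have haF : a ⊆ Fs (j + 1) := by
    intro y hy
    obtain ⟨hys, hyp⟩ := mem_filter.1 hy
    obtain ⟨i, hij, rfl⟩ := hidx y (hsH (Finset.mem_coe.2 hys)) hyp
    rw [hFim]
    exact mem_image.2 ⟨i, mem_range.2 (by omega), rfl⟩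
  have hbF : b ⊆ Fs (j + 1) := by
    intro y hy
    obtain ⟨hys, hyp⟩ := mem_filter.1 hy
    obtain ⟨i, hij, rfl⟩ := hidx y (htH (Finset.mem_coe.2 hys)) hyp
    rw [hFim]
    exact mem_image.2 ⟨i, mem_range.2 (by omega), rfl⟩
  have hane : a.Nonempty := ⟨s.min' hsne, mem_filter.2 ⟨s.min'_mem hsne, le_max_left _ _⟩⟩
  have hbne : b.Nonempty := ⟨t.min' htne, mem_filter.2 ⟨t.min'_mem htne, le_max_right _ _⟩⟩
  have heR : ∀ y, y ∈ Set.range xs → ¬ y ≤ p → y ∈ Rs (j + 1) := by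
    rintro y ⟨i, rfl⟩ hyp
    have hij : j < i := by
      by_contra hcon
      push_neg at hcon
      exact hyp (hj ▸ hxmono.monotone hcon)
    exact hchain (j + 1) i hij (hxR i)
  have he₁R : ∀ y ∈ e₁, y ∈ Rs (j + 1) := by
    intro y hy
    obtain ⟨hys, hyp⟩ := mem_filter.1 hy
    exact heR y (hsH (Finset.mem_coe.2 hys)) hyp
  have he₂R : ∀ y ∈ e₂, y ∈ Rs (j + 1) := by
    intro y hy
    obtain ⟨hys, hyp⟩ := mem_filter.1 hy
    exact heR y (htH (Finset.mem_coe.2 hys)) hyp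
  obtain ⟨z, hzm, hzmem, hzim⟩ := imageEnum (e₁ ∪ e₂) (e₁ ∪ e₂).card rfl
  set r := (e₁ ∪ e₂).card with hr
  set E₁ := (range r).filter (fun i => z i ∈ e₁) with hE₁
  set E₂ := (range r).filter (fun i => z i ∈ e₂) with hE₂
  have hE₁im : E₁.image z = e₁ := by
    apply Finset.Subset.antisymm
    · intro y hy
      obtain ⟨i, hi, rfl⟩ := mem_image.1 hy
      exact (mem_filter.1 hi).2
    · intro y hy
      have hyu : y ∈ e₁ ∪ e₂ := mem_union_left _ hy
      rw [← hzim] at hyu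
      obtain ⟨i, hi, rfl⟩ := mem_image.1 hyu
      exact mem_image.2 ⟨i, mem_filter.2 ⟨hi, hy⟩, rfl⟩
  have hE₂im : E₂.image z = e₂ := by
    apply Finset.Subset.antisymm
    · intro y hy
      obtain ⟨i, hi, rfl⟩ := mem_image.1 hy
      exact (mem_filter.1 hi).2
    · intro y hy
      have hyu : y ∈ e₁ ∪ e₂ := mem_union_right _ hy
      rw [← hzim] at hyu
      obtain ⟨i, hi, rfl⟩ := mem_image.1 hyu
      exact mem_image.2 ⟨i, mem_filter.2 ⟨hi, hy⟩, rfl⟩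
  have hEun : E₁ ∪ E₂ = range r := by
    apply Finset.Subset.antisymm
    · exact union_subset (filter_subset _ _) (filter_subset _ _)
    · intro i hi
      have hzi : z i ∈ e₁ ∪ e₂ := by
        rw [← hzim]
        exact mem_image.2 ⟨i, hi, rfl⟩
      rcases mem_union.1 hzi with hz1 | hz2
      · exact mem_union_left _ (mem_filter.2 ⟨hi, hz1⟩)
      · exact mem_union_right _ (mem_filter.2 ⟨hi, hz2⟩)
  have hpairne : (a, E₁) ≠ (b, E₂) := by
    intro hcon
    simp only [Prod.mk.injEq] at hcon
    apply hne
    rw [hsae, htbe, ← hE₁im, ← hE₂im, hcon.1, hcon.2]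
  refine (hP (j + 1)).2.2 a b hane hbne haF hbF r z hzm ?_ E₁ E₂ hEun hpairne ?_
  · intro i hi
    have hzi : z i ∈ e₁ ∪ e₂ := hzmem i hi
    rcases mem_union.1 hzi with hz1 | hz2
    · exact he₁R _ hz1
    · exact he₂R _ hz2
  · rw [hE₁im, hE₂im, ← hsae, ← htbe]
    exact ⟨hsB, htB, hne, hfe⟩
end

section
/- (Large Ramsey Theorem) For every k ≥ 1 and every coloring f : [ℕ]^{!ω} → {0, 1, …, k−1}, there exists an infinite set H ⊆ ℕ such that f is constant on [H]^{!ω}. -/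
theorem Set.Infinite.sep_lt {Z : Set ℕ} (hZ : Z.Infinite) (a : ℕ) : {x ∈ Z | a < x}.Infinite :=
  (hZ.sdiff (Set.finite_Iic a)).mono fun _ hx => ⟨hx.1, not_le.mp hx.2⟩

section Diagonal

variable {β : Type*} {Good : ℕ → Set ℕ → β → Prop}
  (hR : ∀ a (Z : Set ℕ), Z.Infinite → ∃ Y ⊆ Z, Y.Infinite ∧ ∃ c, Good a Y c)
include hR

theorem exists_seq_infinite_nested {X : Set ℕ} (hX : X.Infinite) :
    ∃ (Z : ℕ → Set ℕ) (col : ℕ → β), Z 0 = X ∧ ∀ i, (Z i).Infinite ∧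
      Z (i + 1) ⊆ {x ∈ Z i | sInf (Z i) < x} ∧ Good (sInf (Z i)) (Z (i + 1)) (col i) := by
  have step : ∀ Z : {Z : Set ℕ // Z.Infinite}, ∃ p : {Y : Set ℕ // Y.Infinite} × β,
      p.1.1 ⊆ {x ∈ Z.1 | sInf Z.1 < x} ∧ Good (sInf Z.1) p.1 p.2 := by
    rintro ⟨Z, hZ⟩
    obtain ⟨Y, hYZ, hY, c, hc⟩ := hR (sInf Z) _ (hZ.sep_lt (sInf Z))
    exact ⟨(⟨Y, hY⟩, c), hYZ, hc⟩
  choose next hnext using step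
  let chain : ℕ → {Z : Set ℕ // Z.Infinite} := fun i => Nat.rec ⟨X, hX⟩ (fun _ Z => (next Z).1) i
  exact ⟨fun i => (chain i).1, fun i => (next (chain i)).2, rfl,
    fun i => ⟨(chain i).2, hnext (chain i)⟩⟩

theorem exists_infinite_diagonal [Finite β] (hanti : ∀ a c, Antitone (Good a · c))
    {X : Set ℕ} (hX : X.Infinite) :
    ∃ H ⊆ X, H.Infinite ∧ ∃ c, ∀ a ∈ H, Good a {x ∈ H | a < x} c := by
  obtain ⟨Z, col, hZ0, hZ⟩ := exists_seq_infinite_nested hR hX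
  set a := fun i => sInf (Z i)
  have ha_mem : ∀ i, a i ∈ Z i := fun i => Nat.sInf_mem (hZ i).1.nonempty
  have hZ_anti : Antitone Z := antitone_nat_of_succ_le fun i _ hx => ((hZ i).2.1 hx).1
  have ha_mono : StrictMono a := strictMono_nat_of_lt_succ fun i => ((hZ i).2.1 (ha_mem (i + 1))).2
  obtain ⟨c, hc⟩ := Finite.exists_infinite_fiber col
  refine ⟨a '' (col ⁻¹' {c}), ?_, (Set.infinite_coe_iff.mp hc).image ha_mono.injective.injOn,
    c, ?_⟩
  · rintro _ ⟨i, -, rfl⟩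
    exact hZ0 ▸ hZ_anti (Nat.zero_le i) (ha_mem i)
  · rintro _ ⟨i, hi, rfl⟩
    refine hanti _ _ ?_ (Set.mem_singleton_iff.mp hi ▸ (hZ i).2.2)
    rintro _ ⟨⟨j, -, rfl⟩, hij⟩
    exact hZ_anti (ha_mono.lt_iff_lt.mp hij) (ha_mem j)

end Diagonal

theorem exists_infinite_homogeneous_of_insert_min {β : Type*} [Finite β] (f : Finset ℕ → β)
    (m : ℕ → ℕ) (hR : ∀ a (Z : Set ℕ), Z.Infinite → ∃ Y ⊆ Z, Y.Infinite ∧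
      ∃ c, ∀ t : Finset ℕ, ↑t ⊆ Y → t.card = m a → f (insert a t) = c)
    {X : Set ℕ} (hX : X.Infinite) :
    ∃ H ⊆ X, H.Infinite ∧ ∃ c, ∀ s : Finset ℕ, ∀ hs : s.Nonempty, ↑s ⊆ H →
      s.card = m (s.min' hs) + 1 → f s = c := by
  obtain ⟨H, hHX, hH, c, hc⟩ := exists_infinite_diagonal
    (Good := fun a Y c => ∀ t : Finset ℕ, ↑t ⊆ Y → t.card = m a → f (insert a t) = c) hR
    (fun _ _ _ _ hYY' h t ht => h t (ht.trans hYY')) hX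
  refine ⟨H, hHX, hH, c, fun s hs hsH hcard => ?_⟩
  have ha : s.min' hs ∈ s := s.min'_mem hs
  rw [← Finset.insert_erase ha]
  refine hc _ (hsH ha) _ (fun x hx => ?_) ?_
  · exact ⟨hsH (Finset.mem_of_mem_erase hx), s.min'_lt_of_mem_erase_min' hs hx⟩
  · rw [Finset.card_erase_of_mem ha, hcard, Nat.add_sub_cancel]

theorem exists_infinite_homogeneous_subset {β : Type*} [Finite β] (n : ℕ) (f : Finset ℕ → β)
    {X : Set ℕ} (hX : X.Infinite) :
    ∃ Y ⊆ X, Y.Infinite ∧ ∃ c, ∀ s : Finset ℕ, ↑s ⊆ Y → s.card = n → f s = c := by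
  induction n generalizing f X with
  | zero => exact ⟨X, subset_rfl, hX, f ∅, fun s _ hs => by rw [Finset.card_eq_zero.mp hs]⟩
  | succ n ih =>
    obtain ⟨H, hHX, hH, c, hc⟩ := exists_infinite_homogeneous_of_insert_min f (fun _ => n)
      (fun a _ hZ => ih (fun t => f (insert a t)) hZ) hX
    exact ⟨H, hHX, hH, c, fun s hsH hcard =>
      hc s (Finset.card_pos.mp (by omega)) hsH hcard⟩

theorem stmt19_general (k : ℕ) (f : Finset ℕ → Fin k) :
    ∃ H : Set ℕ, H.Infinite ∧
      ∃ c : Fin k, ∀ s : Finset ℕ, ExLarge s → ↑s ⊆ H → f s = c := by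
  obtain ⟨H, -, hH, c, hc⟩ := exists_infinite_homogeneous_of_insert_min f id
    (fun a _ hZ => exists_infinite_homogeneous_subset a (fun t => f (insert a t)) hZ)
    Set.infinite_univ
  refine ⟨H, hH, c, fun s ⟨hs, hcard⟩ hsH => hc s hs hsH ?_⟩
  rw [hcard, hs.csInf_eq_min', add_comm, id]

/-- Large Ramsey Theorem: for every `k ≥ 1` and every coloring
`f : [ℕ]^{!ω} → {0, …, k-1}` there is an infinite `H ⊆ ℕ` with `f` constant
on `[H]^{!ω}`. -/
theorem stmt19 (k : ℕ) (hk : 1 ≤ k) (f : Finset ℕ → Fin k) :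
    ∃ H : Set ℕ, H.Infinite ∧
      ∃ c : Fin k, ∀ s : Finset ℕ, ExLarge s → ↑s ⊆ H → f s = c :=
  stmt19_general k f
end
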